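/- arXiv:2201.00474 — 6 statements merged into one kernel-verified Lean document; each statement's English description precedes it below -/
import Mathlib

section
/- Let ω be a finite set of N distinct points in ℝ^d and let y ∈ ℝ^d. Then the number of points x ∈ ω such that y is among the k nearest neighbors of x (with respect to the Euclidean norm, among points of ω \ {x}) is bounded by a constant n(k,d) depending only on k and d. -/
open Metric

section Geom

variable {E : Type*} [NormedAddCommGroup E] [InnerProductSpace ℝ E]

/-- Law of cosines step: if `a, b` are nonzero, `‖a‖ ≤ ‖b‖`, and the unit vectors in
directions `a` and `b` are at distance `< 1` (angle `< 60°`), then `‖b - a‖ < ‖b‖`. -/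
lemma key_geom (a b : E) (ha : a ≠ 0) (hb : b ≠ 0) (hab : ‖a‖ ≤ ‖b‖)
    (hu : ‖(‖a‖⁻¹ • a) - (‖b‖⁻¹ • b)‖ < 1) : ‖b - a‖ < ‖b‖ := by
  have hna : (0:ℝ) < ‖a‖ := norm_pos_iff.mpr ha
  have hnb : (0:ℝ) < ‖b‖ := norm_pos_iff.mpr hb
  have hua : ‖(‖a‖⁻¹ • a)‖ = 1 := by
    rw [norm_smul, Real.norm_eq_abs, abs_inv, abs_of_pos hna, inv_mul_cancel₀ hna.ne']
  have hub : ‖(‖b‖⁻¹ • b)‖ = 1 := by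
    rw [norm_smul, Real.norm_eq_abs, abs_inv, abs_of_pos hnb, inv_mul_cancel₀ hnb.ne']
  have hsq := norm_sub_sq_real (‖a‖⁻¹ • a) (‖b‖⁻¹ • b)
  rw [hua, hub, real_inner_smul_left, real_inner_smul_right] at hsq
  have hlt : ‖(‖a‖⁻¹ • a) - (‖b‖⁻¹ • b)‖ ^ 2 < 1 := by
    nlinarith [norm_nonneg ((‖a‖⁻¹ • a) - (‖b‖⁻¹ • b))]
  have hinner : ‖a‖ * ‖b‖ < 2 * (inner ℝ a b : ℝ) := by
    rw [hsq] at hlt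
    have h1 : (1:ℝ)/2 < ‖a‖⁻¹ * (‖b‖⁻¹ * (inner ℝ a b : ℝ)) := by linarith
    have h2 := mul_lt_mul_of_pos_left h1 (mul_pos hna hnb)
    rw [show ‖a‖ * ‖b‖ * (‖a‖⁻¹ * (‖b‖⁻¹ * (inner ℝ a b : ℝ)))
        = (‖a‖ * ‖a‖⁻¹) * (‖b‖ * ‖b‖⁻¹) * (inner ℝ a b : ℝ) by ring,
      mul_inv_cancel₀ hna.ne', mul_inv_cancel₀ hnb.ne'] at h2
    linarith
  have h2 : ‖b - a‖ ^ 2 < ‖b‖ ^ 2 := by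
    have := norm_sub_sq_real b a
    rw [real_inner_comm] at this
    nlinarith
  exact lt_of_pow_lt_pow_left₀ 2 (norm_nonneg b) h2

end Geom

/-- In any finite configuration `ω` of distinct points in `ℝ^d`, the number of points `x ∈ ω`
such that `y` is among the `k` nearest neighbors of `x` (i.e. fewer than `k` points of
`ω \ {x}` are strictly closer to `x` than `y`) is bounded by a constant `n(k,d)` depending
only on `k` and `d`. -/
theorem incoming_degree_bounded (d k : ℕ) :
    ∃ n : ℕ, ∀ (ω : Finset (EuclideanSpace ℝ (Fin d))) (y : EuclideanSpace ℝ (Fin d)),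
      {x : EuclideanSpace ℝ (Fin d) | x ∈ ω ∧ x ≠ y ∧
        {z : EuclideanSpace ℝ (Fin d) | z ∈ ω ∧ z ≠ x ∧ dist x z < dist x y}.ncard < k}.ncard
        ≤ n := by
  classical
  set E := EuclideanSpace ℝ (Fin d)
  -- a finite (1/4)-net of the unit sphere
  obtain ⟨T, hTfin, hT⟩ : ∃ T : Set E, T.Finite ∧
      Metric.sphere (0 : E) 1 ⊆ ⋃ t ∈ T, Metric.ball t (1/4) := by
    have hc : TotallyBounded (Metric.sphere (0 : E) 1) :=
      (isCompact_sphere 0 1).totallyBounded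
    exact Metric.totallyBounded_iff.mp hc (1/4) (by norm_num)
  refine ⟨k * hTfin.toFinset.card, ?_⟩
  intro ω y
  set S : Set E := {x : E | x ∈ ω ∧ x ≠ y ∧
      {z : E | z ∈ ω ∧ z ≠ x ∧ dist x z < dist x y}.ncard < k} with hS
  have hSsub : S ⊆ (ω : Set E) := fun x hx => hx.1
  have hSfin : S.Finite := ω.finite_toSet.subset hSsub
  -- unit direction map
  set u : E → E := fun x => ‖x - y‖⁻¹ • (x - y) with hud
  have husphere : ∀ x ∈ S, u x ∈ Metric.sphere (0 : E) 1 := by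
    intro x hx
    have hxy : x - y ≠ 0 := sub_ne_zero.mpr hx.2.1
    have : (0:ℝ) < ‖x - y‖ := norm_pos_iff.mpr hxy
    simp only [hud, mem_sphere_iff_norm, sub_zero, norm_smul, Real.norm_eq_abs, abs_inv,
      abs_of_pos this]
    have hn : ‖‖x - y‖⁻¹ • (x - y)‖ = 1 := by
      rw [norm_smul, Real.norm_eq_abs, abs_inv, abs_of_pos this]
      exact inv_mul_cancel₀ this.ne'
    exact mem_sphere_zero_iff_norm.mpr hn
  -- the net-point assignment
  set f : E → E := fun x =>
    if h : ∃ t ∈ hTfin.toFinset, u x ∈ Metric.ball t (1/4) then h.choose else y with hf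
  have hfspec : ∀ x ∈ S, f x ∈ hTfin.toFinset ∧ dist (u x) (f x) < 1/4 := by
    intro x hx
    have hmem := hT (husphere x hx)
    simp only [Set.mem_iUnion] at hmem
    obtain ⟨t, ht, htx⟩ := hmem
    have hex : ∃ t ∈ hTfin.toFinset, u x ∈ Metric.ball t (1/4) :=
      ⟨t, hTfin.mem_toFinset.mpr ht, htx⟩
    simp only [hf, dif_pos hex]
    exact ⟨hex.choose_spec.1, Metric.mem_ball.mp hex.choose_spec.2⟩
  -- fibers have at most k elements
  have hfiber : ∀ t ∈ hTfin.toFinset,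
      (hSfin.toFinset.filter fun x => f x = t).card ≤ k := by
    intro t _
    set G := hSfin.toFinset.filter fun x => f x = t with hG
    rcases G.eq_empty_or_nonempty with hGe | hGne
    · simp [hGe]
    obtain ⟨x₂, hx₂G, hx₂max⟩ := G.exists_max_image (fun x => dist x y) hGne
    have hx₂S : x₂ ∈ S := hSfin.mem_toFinset.mp (Finset.mem_filter.mp hx₂G).1
    set H : Set E := {z : E | z ∈ ω ∧ z ≠ x₂ ∧ dist x₂ z < dist x₂ y} with hH
    have hHfin : H.Finite := ω.finite_toSet.subset fun z hz => hz.1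
    have hsub : ((G.erase x₂ : Finset E) : Set E) ⊆ H := by
      intro x₁ hx₁
      simp only [Finset.coe_erase, Set.mem_diff, Finset.mem_coe, Set.mem_singleton_iff] at hx₁
      obtain ⟨hx₁G, hx₁ne⟩ := hx₁
      have hx₁S : x₁ ∈ S := hSfin.mem_toFinset.mp (Finset.mem_filter.mp hx₁G).1
      refine ⟨hx₁S.1, hx₁ne, ?_⟩
      -- geometric step
      have ha : x₁ - y ≠ 0 := sub_ne_zero.mpr hx₁S.2.1
      have hb : x₂ - y ≠ 0 := sub_ne_zero.mpr hx₂S.2.1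
      have hab : ‖x₁ - y‖ ≤ ‖x₂ - y‖ := by
        have := hx₂max x₁ hx₁G
        rw [dist_eq_norm, dist_eq_norm] at this; exact this
      have hclose : ‖u x₁ - u x₂‖ < 1 := by
        have h1 := (hfspec x₁ hx₁S).2
        have h2 := (hfspec x₂ hx₂S).2
        rw [(Finset.mem_filter.mp hx₁G).2] at h1
        rw [(Finset.mem_filter.mp hx₂G).2] at h2
        calc ‖u x₁ - u x₂‖ = dist (u x₁) (u x₂) := by rw [dist_eq_norm]
          _ ≤ dist (u x₁) t + dist t (u x₂) := dist_triangle _ _ _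
          _ < 1/4 + 1/4 := by rw [dist_comm t]; exact add_lt_add h1 h2
          _ < 1 := by norm_num
      have := key_geom (x₁ - y) (x₂ - y) ha hb hab (by simpa [hud] using hclose)
      rw [show x₂ - y - (x₁ - y) = x₂ - x₁ by abel] at this
      rw [dist_eq_norm, dist_eq_norm]
      exact this
    have hcard : (G.erase x₂).card ≤ H.ncard := by
      rw [← Set.ncard_coe_finset]
      exact Set.ncard_le_ncard hsub hHfin
    have hHk : H.ncard < k := hx₂S.2.2
    have : G.card ≤ (G.erase x₂).card + 1 := by
      rw [Finset.card_erase_of_mem hx₂G]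
      omega
    omega
  have hmaps : ∀ x ∈ hSfin.toFinset, f x ∈ hTfin.toFinset := fun x hx =>
    (hfspec x (hSfin.mem_toFinset.mp hx)).1
  have := Finset.card_le_mul_card_image_of_maps_to hmaps k hfiber
  calc S.ncard = hSfin.toFinset.card := Set.ncard_eq_toFinset_card S hSfin
    _ ≤ k * hTfin.toFinset.card := this
end

section
/- Let ω_N = (x_1, …, x_N) be N distinct points in the unit cube [0,1]^d ⊂ ℝ^d, s > 0, and let r_i denote the distance from x_i to its nearest neighbor in ω_N \ {x_i}. Then ∑_{i=1}^N r_i^{-s} ≥ N^{1+s/d} · (2^d (1+√d)^d / v_d)^{-s/d}, where v_d is the volume of the Euclidean unit ball in ℝ^d. -/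
open Metric MeasureTheory

/-- For `N` distinct points in the unit cube `[0,1]^d`, writing `r_x` for the distance
from `x` to its nearest neighbor in `ω \ {x}`, one has
`∑ r_x^{-s} ≥ N^{1+s/d} (2^d (1+√d)^d / v_d)^{-s/d}`. -/
theorem nearest_neighbor_energy_lower_bound (d : ℕ) (hd : 0 < d) (s : ℝ) (hs : 0 < s)
    (N : ℕ) (hN : 2 ≤ N) (ω : Finset (EuclideanSpace ℝ (Fin d))) (hcard : ω.card = N)
    (hcube : ∀ x ∈ ω, ∀ i, x i ∈ Set.Icc (0 : ℝ) 1) :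
    (N : ℝ) ^ (1 + s / d) *
        ((2 : ℝ) ^ (d : ℝ) * (1 + Real.sqrt d) ^ (d : ℝ) /
          (volume (ball (0 : EuclideanSpace ℝ (Fin d)) 1)).toReal) ^ (-(s / d)) ≤
      ∑ x ∈ ω, (infDist x ((↑ω : Set (EuclideanSpace ℝ (Fin d))) \ {x})) ^ (-s) := by
  classical
  haveI : Nonempty (Fin d) := ⟨⟨0, hd⟩⟩
  set r : EuclideanSpace ℝ (Fin d) → ℝ :=
    fun x => infDist x ((↑ω : Set (EuclideanSpace ℝ (Fin d))) \ {x}) with hrdef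
  have hd' : (0 : ℝ) < d := by exact_mod_cast hd
  have hsq : (0 : ℝ) ≤ Real.sqrt d := Real.sqrt_nonneg _
  have hωne : ω.Nonempty := Finset.card_pos.1 (by omega)
  -- the deleted sets are nonempty
  have hne : ∀ x ∈ ω, ((↑ω : Set (EuclideanSpace ℝ (Fin d))) \ {x}).Nonempty := by
    intro x hx
    obtain ⟨y, hy, hyx⟩ := Finset.exists_mem_ne (by omega : 1 < ω.card) x
    exact ⟨y, by simp [hy, hyx]⟩
  -- positivity of nearest-neighbor distances
  have hrpos : ∀ x ∈ ω, 0 < r x := by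
    intro x hx
    have hclosed : IsClosed ((↑ω : Set (EuclideanSpace ℝ (Fin d))) \ {x}) :=
      (ω.finite_toSet.subset Set.diff_subset).isClosed
    exact (hclosed.notMem_iff_infDist_pos (hne x hx)).1 (fun h => h.2 rfl)
  -- r x is at most the distance to any other point of ω
  have hrle : ∀ x, ∀ y ∈ ω, y ≠ x → r x ≤ dist x y := by
    intro x y hy hyx
    exact infDist_le_dist_of_mem (by simp [hy, hyx])
  -- distances within the cube are at most √d
  have hdist_le : ∀ x ∈ ω, ∀ y ∈ ω, dist x y ≤ Real.sqrt d := by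
    intro x hx y hy
    rw [EuclideanSpace.dist_eq]
    apply Real.sqrt_le_sqrt
    calc ∑ i, dist (x i) (y i) ^ 2 ≤ ∑ _i : Fin d, (1 : ℝ) := by
          apply Finset.sum_le_sum
          intro i _
          have h1 := hcube x hx i
          have h2 := hcube y hy i
          have : dist (x i) (y i) ≤ 1 := by
            rw [Real.dist_eq, abs_sub_le_iff]
            constructor <;> linarith [h1.1, h1.2, h2.1, h2.2]
          nlinarith [dist_nonneg (x := x i) (y := y i)]
      _ = d := by simp
  have hrsqrt : ∀ x ∈ ω, r x ≤ Real.sqrt d := by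
    intro x hx
    obtain ⟨y, hy⟩ := hne x hx
    have hyω : y ∈ ω := hy.1
    refine le_trans (infDist_le_dist_of_mem hy) (hdist_le x hx y hyω)
  -- coordinates move at most dist
  have hcoord : ∀ z x : EuclideanSpace ℝ (Fin d), ∀ i, |z i - x i| ≤ dist z x := by
    intro z x i
    rw [EuclideanSpace.dist_eq]
    have h1 : dist (z i) (x i) ^ 2 ≤ ∑ j, dist (z j) (x j) ^ 2 :=
      Finset.single_le_sum (f := fun j => dist (z j) (x j) ^ 2) (fun j _ => sq_nonneg _) (Finset.mem_univ i)
    calc |z i - x i| = Real.sqrt (dist (z i) (x i) ^ 2) := by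
          rw [Real.sqrt_sq dist_nonneg, Real.dist_eq]
      _ ≤ _ := Real.sqrt_le_sqrt h1
  -- the big box
  set S : Set (EuclideanSpace ℝ (Fin d)) :=
    {z | ∀ i, z i ∈ Set.Icc (-(Real.sqrt d / 2)) (1 + Real.sqrt d / 2)} with hSdef
  have hsub : ∀ x ∈ ω, ball x (r x / 2) ⊆ S := by
    intro x hx z hz
    intro i
    have hlt : dist z x < r x / 2 := mem_ball.1 hz
    have hb : |z i - x i| ≤ Real.sqrt d / 2 := by
      have := hcoord z x i
      have := hrsqrt x hx
      linarith
    have hxi := hcube x hx i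
    rw [abs_sub_le_iff] at hb
    constructor <;> [linarith [hxi.1, hb.2]; linarith [hxi.2, hb.1]]
  -- volume of the big box
  have hSvol : volume S = ENNReal.ofReal (1 + Real.sqrt d) ^ d := by
    have hSeq : S = (MeasurableEquiv.toLp 2 (Fin d → ℝ)).symm ⁻¹'
        (Set.univ.pi fun _ : Fin d => Set.Icc (-(Real.sqrt d / 2)) (1 + Real.sqrt d / 2)) := by
      ext z
      simp only [hSdef, Set.mem_setOf_eq, Set.mem_preimage, Set.mem_pi, Set.mem_univ,
        forall_true_left]
      rfl
    rw [hSeq, (EuclideanSpace.volume_preserving_symm_measurableEquiv_toLp (Fin d)).measure_preimage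
      ((MeasurableSet.univ_pi fun _ => measurableSet_Icc).nullMeasurableSet)]
    rw [volume_pi_pi]
    have : (1 + Real.sqrt d / 2) - (-(Real.sqrt d / 2)) = 1 + Real.sqrt d := by ring
    simp [Real.volume_Icc, this, Finset.prod_const]
  -- disjointness
  have hdisj : (↑ω : Set (EuclideanSpace ℝ (Fin d))).PairwiseDisjoint
      (fun x => ball x (r x / 2)) := by
    intro x hx y hy hxy
    apply ball_disjoint_ball
    have h1 : r x ≤ dist x y := hrle x y hy (Ne.symm hxy)
    have h2 : r y ≤ dist x y := by
      rw [dist_comm]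
      exact hrle y x hx hxy
    linarith
  -- volume counting
  have key : ∑ x ∈ ω, volume (ball x (r x / 2)) ≤ ENNReal.ofReal (1 + Real.sqrt d) ^ d := by
    rw [← measure_biUnion_finset hdisj (fun x _ => measurableSet_ball)]
    rw [← hSvol]
    exact measure_mono (Set.iUnion₂_subset hsub)
  set v : ENNReal := volume (ball (0 : EuclideanSpace ℝ (Fin d)) 1) with hvdef
  have hv0 : v ≠ 0 := (measure_ball_pos volume 0 one_pos).ne'
  have hvtop : v ≠ ⊤ := measure_ball_lt_top.ne
  set V : ℝ := v.toReal with hVdef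
  have hV0 : 0 < V := ENNReal.toReal_pos hv0 hvtop
  have hball : ∀ x ∈ ω, volume (ball x (r x / 2)) = ENNReal.ofReal ((r x / 2) ^ d) * v := by
    intro x hx
    rw [Measure.addHaar_ball volume x (div_nonneg infDist_nonneg (by norm_num) : (0:ℝ) ≤ r x / 2)]
    congr 2
    simp
  have key2 : ENNReal.ofReal (∑ x ∈ ω, (r x / 2) ^ d) * v ≤
      ENNReal.ofReal ((1 + Real.sqrt d) ^ d) := by
    rw [ENNReal.ofReal_sum_of_nonneg (fun x _ => pow_nonneg (div_nonneg infDist_nonneg (by norm_num)) d), Finset.sum_mul,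
      ENNReal.ofReal_pow (by linarith)] at *
    calc ∑ x ∈ ω, ENNReal.ofReal ((r x / 2) ^ d) * v
        = ∑ x ∈ ω, volume (ball x (r x / 2)) := by
          exact Finset.sum_congr rfl (fun x hx => (hball x hx).symm)
      _ ≤ _ := key
  have hsum_real : (∑ x ∈ ω, (r x / 2) ^ d) * V ≤ (1 + Real.sqrt d) ^ d := by
    have := ENNReal.toReal_mono (ENNReal.ofReal_ne_top) key2
    rwa [ENNReal.toReal_mul,
      ENNReal.toReal_ofReal (Finset.sum_nonneg fun x _ =>
        pow_nonneg (div_nonneg infDist_nonneg (by norm_num)) d),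
      ENNReal.toReal_ofReal (by positivity)] at this
  -- the d-energy bound
  set B : ℝ := ∑ x ∈ ω, r x ^ (d : ℝ) with hBdef
  have hBeq : B = ∑ x ∈ ω, r x ^ d := by
    apply Finset.sum_congr rfl
    intro x hx
    exact Real.rpow_natCast _ _
  have hBpos : 0 < B := by
    rw [hBeq]
    apply Finset.sum_pos (fun x hx => pow_pos (hrpos x hx) d) hωne
  have hBle : B ≤ 2 ^ d * (1 + Real.sqrt d) ^ d / V := by
    rw [hBeq, le_div_iff₀ hV0]
    have h2 : (∑ x ∈ ω, (r x / 2) ^ d) = (∑ x ∈ ω, r x ^ d) / 2 ^ d := by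
      rw [Finset.sum_div]
      exact Finset.sum_congr rfl (fun x _ => div_pow _ _ _)
    rw [h2] at hsum_real
    have h2d : (0:ℝ) < 2 ^ d := by positivity
    calc (∑ x ∈ ω, r x ^ d) * V = ((∑ x ∈ ω, r x ^ d) / 2 ^ d * V) * 2 ^ d := by
          field_simp
      _ ≤ (1 + Real.sqrt d) ^ d * 2 ^ d := by
          apply mul_le_mul_of_nonneg_right hsum_real h2d.le
      _ = 2 ^ d * (1 + Real.sqrt d) ^ d := by ring
  -- Hölder
  set p : ℝ := ((d : ℝ) + s) / d with hpdef
  set q : ℝ := ((d : ℝ) + s) / s with hqdef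
  have hds : (0:ℝ) < (d:ℝ) + s := by linarith
  have hp1 : 1 < p := (one_lt_div hd').2 (by linarith)
  have hp0 : 0 < p := by linarith
  have hq0 : 0 < q := by positivity
  have hpq : p.HolderConjugate q := by
    constructor
    · rw [hpdef, hqdef]
      field_simp
    · exact hp0
    · exact hq0
  set A : ℝ := ∑ x ∈ ω, r x ^ (-s) with hAdef
  have hApos : 0 < A :=
    Finset.sum_pos (fun x hx => Real.rpow_pos_of_pos (hrpos x hx) _) hωne
  have holder : (N : ℝ) ≤ A ^ (1 / p) * B ^ (1 / q) := by
    have H := Real.inner_le_Lp_mul_Lq_of_nonneg ω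
      (f := fun x => r x ^ (-s / p)) (g := fun x => r x ^ ((d : ℝ) / q)) hpq
      (fun x hx => (Real.rpow_pos_of_pos (hrpos x hx) _).le)
      (fun x hx => (Real.rpow_pos_of_pos (hrpos x hx) _).le)
    have hfg : ∀ x ∈ ω, r x ^ (-s / p) * r x ^ ((d : ℝ) / q) = 1 := by
      intro x hx
      rw [← Real.rpow_add (hrpos x hx)]
      have : -s / p + (d : ℝ) / q = 0 := by
        rw [hpdef, hqdef]
        field_simp
        ring
      rw [this, Real.rpow_zero]
    have hfp : (∑ x ∈ ω, (r x ^ (-s / p)) ^ p) = A := by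
      rw [hAdef]
      apply Finset.sum_congr rfl
      intro x hx
      rw [← Real.rpow_mul (hrpos x hx).le]
      congr 1
      field_simp
    have hgq : (∑ x ∈ ω, (r x ^ ((d : ℝ) / q)) ^ q) = B := by
      rw [hBdef]
      apply Finset.sum_congr rfl
      intro x hx
      rw [← Real.rpow_mul (hrpos x hx).le]
      congr 1
      field_simp
    rw [Finset.sum_congr rfl hfg, hfp, hgq] at H
    simpa [hcard] using H
  -- raise Hölder to the p-th power
  have hNp : (N : ℝ) ^ p ≤ A * B ^ (s / d) := by
    have h2 := Real.rpow_le_rpow (Nat.cast_nonneg N) holder hp0.le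
    rw [Real.mul_rpow (Real.rpow_nonneg hApos.le _) (Real.rpow_nonneg hBpos.le _),
      ← Real.rpow_mul hApos.le, ← Real.rpow_mul hBpos.le] at h2
    have e1 : 1 / p * p = 1 := by field_simp
    have e2 : 1 / q * p = s / d := by
      rw [hpdef, hqdef]
      field_simp
      try ring
    rwa [e1, e2, Real.rpow_one] at h2
  have hfinal : (N : ℝ) ^ p * B ^ (-(s / d)) ≤ A := by
    have hBneg : (0 : ℝ) < B ^ (-(s / d)) := Real.rpow_pos_of_pos hBpos _
    have h3 := mul_le_mul_of_nonneg_right hNp hBneg.le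
    rwa [mul_assoc, ← Real.rpow_add hBpos, add_neg_cancel, Real.rpow_zero, mul_one] at h3
  have hpeq : p = 1 + s / d := by
    rw [hpdef]
    field_simp
  calc (N : ℝ) ^ (1 + s / d) *
        ((2 : ℝ) ^ (d : ℝ) * (1 + Real.sqrt d) ^ (d : ℝ) / V) ^ (-(s / d))
      ≤ (N : ℝ) ^ p * B ^ (-(s / d)) := by
        rw [← hpeq]
        apply mul_le_mul_of_nonneg_left _ (Real.rpow_nonneg (Nat.cast_nonneg N) _)
        apply Real.rpow_le_rpow_of_nonpos hBpos ?_ (neg_nonpos.2 (by positivity))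
        rw [Real.rpow_natCast, Real.rpow_natCast]
        exact hBle
    _ ≤ A := hfinal
end

section
/- Fix s > 0, k ≥ 1, and disjoint compact sets A₁, A₂ ⊂ ℝ^p. For any N-point configuration ω_N in A₁ ∪ A₂, the k-nearest-neighbor Riesz s-energy of ω_N is at least the sum of the k-nearest-neighbor Riesz s-energies of ω_N ∩ A₁ and ω_N ∩ A₂: E_s^k(ω_N ∩ A₁) + E_s^k(ω_N ∩ A₂) ≤ E_s^k(ω_N). -/
open Metric

section Aux

variable {g : ℝ → ℝ}

/-- sum of `g` over `take n` grows when a lower bound is prepended. -/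
lemma take_cons_aux (hg0 : ∀ x, 0 < x → 0 ≤ g x)
    (hganti : ∀ x y, 0 < x → x ≤ y → g y ≤ g x)
    {b : ℝ} (hb : 0 < b) {l : List ℝ} (hl : ∀ x ∈ l, 0 < x) (hbl : ∀ x ∈ l, b ≤ x) (n : ℕ) :
    ((l.take n).map g).sum ≤ (((b :: l).take n).map g).sum := by
  cases n with
  | zero => simp
  | succ m =>
    rw [List.take_succ, List.take_succ_cons, List.map_cons, List.sum_cons, List.map_append,
      List.sum_append]
    have h : (l[m]?.toList.map g).sum ≤ g b := by
      cases hm : l[m]? with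
      | none => simpa using hg0 b hb
      | some c =>
        have hc : c ∈ l := by
          have h' := List.getElem?_eq_some_iff.mp hm
          exact h'.2 ▸ List.getElem_mem h'.1
        simpa using hganti b c hb (hbl c hc)
    linarith
      
/-- sum of `g` over the first `k` elements grows under `orderedInsert`. -/
lemma take_orderedInsert_aux (hg0 : ∀ x, 0 < x → 0 ≤ g x)
    (hganti : ∀ x y, 0 < x → x ≤ y → g y ≤ g x)
    {a : ℝ} (ha : 0 < a) :
    ∀ (l : List ℝ), l.Pairwise (· ≤ ·) → (∀ x ∈ l, 0 < x) → ∀ k : ℕ,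
      ((l.take k).map g).sum ≤ (((l.orderedInsert (· ≤ ·) a).take k).map g).sum := by
  intro l
  induction l with
  | nil =>
    intro _ _ k
    cases k with
    | zero => simp
    | succ m => simpa using hg0 a ha
  | cons b l ih =>
    intro hsort hpos k
    have hb : 0 < b := hpos b (List.mem_cons_self)
    have hlpos : ∀ x ∈ l, 0 < x := fun x hx => hpos x (List.mem_cons_of_mem b hx)
    have hbl : ∀ x ∈ l, b ≤ x := fun x hx => (List.pairwise_cons.mp hsort).1 x hx
    rw [List.orderedInsert]
    split_ifs with hab
    · -- a ≤ b, inserted list is a :: b :: l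
      cases k with
      | zero => simp
      | succ m =>
        rw [List.take_succ_cons, List.take_succ_cons, List.map_cons, List.map_cons,
          List.sum_cons, List.sum_cons]
        have h1 : g b ≤ g a := hganti a b ha hab
        have h2 : ((l.take m).map g).sum ≤ (((b :: l).take m).map g).sum :=
          take_cons_aux hg0 hganti hb hlpos hbl m
        linarith
    · -- b < a, inserted list is b :: orderedInsert a l
      cases k with
      | zero => simp
      | succ m =>
        rw [List.take_succ_cons, List.take_succ_cons, List.map_cons, List.map_cons,
          List.sum_cons, List.sum_cons]
        have := ih (List.pairwise_cons.mp hsort).2 hlpos m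
        linarith

lemma sort_cons_eq (a : ℝ) (m : Multiset ℝ) :
    Multiset.sort (a ::ₘ m) (· ≤ ·) =
      (Multiset.sort m (· ≤ ·)).orderedInsert (· ≤ ·) a := by
  refine (fun h1 h2 h3 => List.Perm.eq_of_pairwise' (r := (· ≤ ·)) h2 h3 h1) ?_ ?_ ?_
  · rw [← Multiset.coe_eq_coe, Multiset.sort_eq,
      Multiset.coe_eq_coe.mpr (List.perm_orderedInsert _ a _), ← Multiset.cons_coe,
      Multiset.sort_eq]
  · exact Multiset.pairwise_sort _ _
  · exact List.Pairwise.orderedInsert a _ (Multiset.pairwise_sort m _)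

/-- the take-k sorted energy is monotone under adding one element. -/
lemma S_cons (hg0 : ∀ x, 0 < x → 0 ≤ g x)
    (hganti : ∀ x y, 0 < x → x ≤ y → g y ≤ g x)
    {a : ℝ} (ha : 0 < a) {m : Multiset ℝ} (hm : ∀ x ∈ m, 0 < x) (k : ℕ) :
    (((Multiset.sort m (· ≤ ·)).take k).map g).sum ≤
      (((Multiset.sort (a ::ₘ m) (· ≤ ·)).take k).map g).sum := by
  rw [sort_cons_eq]
  refine take_orderedInsert_aux hg0 hganti ha _ (Multiset.pairwise_sort m _) ?_ k
  intro x hx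
  exact hm x ((Multiset.mem_sort _).mp hx)

/-- monotonicity of the take-k sorted energy under multiset extension. -/
lemma S_mono (hg0 : ∀ x, 0 < x → 0 ≤ g x)
    (hganti : ∀ x y, 0 < x → x ≤ y → g y ≤ g x)
    {m m' : Multiset ℝ} (h : m ≤ m') (hm' : ∀ x ∈ m', 0 < x) (k : ℕ) :
    (((Multiset.sort m (· ≤ ·)).take k).map g).sum ≤
      (((Multiset.sort m' (· ≤ ·)).take k).map g).sum := by
  obtain ⟨u, rfl⟩ := Multiset.le_iff_exists_add.mp h
  induction u using Multiset.induction_on with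
  | empty => simp
  | cons a u ih =>
    have hmu : ∀ x ∈ m + u, 0 < x := by
      intro x hx
      refine hm' x ?_
      rw [Multiset.mem_add] at hx ⊢
      rcases hx with hx | hx
      · exact Or.inl hx
      · exact Or.inr (Multiset.mem_cons_of_mem hx)
    have ha : 0 < a := hm' a (by rw [Multiset.mem_add]; exact Or.inr (Multiset.mem_cons_self a u))
    calc (((Multiset.sort m (· ≤ ·)).take k).map g).sum
        ≤ (((Multiset.sort (m + u) (· ≤ ·)).take k).map g).sum := ih (Multiset.le_add_right m u) hmu
      _ ≤ (((Multiset.sort (a ::ₘ (m + u)) (· ≤ ·)).take k).map g).sum :=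
          S_cons hg0 hganti ha hmu k
      _ = (((Multiset.sort (m + a ::ₘ u) (· ≤ ·)).take k).map g).sum := by
          rw [show m + a ::ₘ u = a ::ₘ (m + u) from Multiset.add_cons a m u ▸ rfl]

end Aux

/-- The `k`-nearest-neighbor Riesz `s`-energy of a finite configuration: each point
interacts with the `k` smallest distances to the other points of the configuration
(all of them if there are fewer than `k`). -/
noncomputable def kNNEnergy {E : Type*} [NormedAddCommGroup E] (s : ℝ) (k : ℕ)
    (ω : Finset E) : ℝ :=
  haveI := Classical.decEq E
  ∑ x ∈ ω,
    (((Multiset.sort ((ω.erase x).val.map (fun y => dist x y)) (· ≤ ·)).take k).map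
      (fun r => r ^ (-s))).sum

/-- Short-range property, lower bound: for disjoint compact sets `A₁, A₂` and any finite
configuration `ω = ω₁ ∪ ω₂` with `ω₁ ⊆ A₁`, `ω₂ ⊆ A₂`,
`E_s^k(ω₁) + E_s^k(ω₂) ≤ E_s^k(ω)`. -/
theorem kNNEnergy_superadditive_on_disjoint_compacts (p : ℕ) (s : ℝ) (hs : 0 < s)
    (k : ℕ) (hk : 1 ≤ k) (A₁ A₂ : Set (EuclideanSpace ℝ (Fin p)))
    (h₁ : IsCompact A₁) (h₂ : IsCompact A₂) (hdisj : Disjoint A₁ A₂)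
    (ω ω₁ ω₂ : Finset (EuclideanSpace ℝ (Fin p)))
    (hsub₁ : ↑ω₁ ⊆ A₁) (hsub₂ : ↑ω₂ ⊆ A₂)
    (hunion : (↑ω : Set (EuclideanSpace ℝ (Fin p))) = ↑ω₁ ∪ ↑ω₂) :
    kNNEnergy s k ω₁ + kNNEnergy s k ω₂ ≤ kNNEnergy s k ω := by
  classical
  letI := Classical.decEq (EuclideanSpace ℝ (Fin p))
  set g : ℝ → ℝ := fun r => r ^ (-s) with hg
  have hg0 : ∀ x : ℝ, 0 < x → 0 ≤ g x := fun x hx => Real.rpow_nonneg hx.le _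
  have hganti : ∀ x y : ℝ, 0 < x → x ≤ y → g y ≤ g x := by
    intro x y hx hxy
    simp only [hg]
    rw [Real.rpow_neg hx.le, Real.rpow_neg (hx.trans_le hxy).le]
    have h1 : x ^ s ≤ y ^ s := Real.rpow_le_rpow hx.le hxy hs.le
    have h2 : 0 < x ^ s := Real.rpow_pos_of_pos hx s
    exact inv_anti₀ h2 h1
  -- finset facts
  have hdisjF : Disjoint ω₁ ω₂ := by
    rw [Finset.disjoint_coe.symm]
    exact Set.disjoint_of_subset hsub₁ hsub₂ hdisj
  have hωeq : ω = ω₁ ∪ ω₂ := Finset.coe_injective (by rw [hunion, Finset.coe_union])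
  have key : ∀ (σ : Finset (EuclideanSpace ℝ (Fin p))), σ ⊆ ω → ∀ x ∈ σ,
      (((Multiset.sort ((σ.erase x).val.map (fun y => dist x y)) (· ≤ ·)).take k).map g).sum ≤
      (((Multiset.sort ((ω.erase x).val.map (fun y => dist x y)) (· ≤ ·)).take k).map g).sum := by
    intro σ hσ x hx
    apply S_mono hg0 hganti
    · exact Multiset.map_le_map (Finset.val_le_iff.mpr (Finset.erase_subset_erase x hσ))
    · intro d hd
      obtain ⟨y, hy, rfl⟩ := Multiset.mem_map.mp hd
      have : y ≠ x := Finset.ne_of_mem_erase hy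
      exact dist_pos.mpr (Ne.symm this)
  have hsum : kNNEnergy s k ω = (∑ x ∈ ω₁,
        (((Multiset.sort ((ω.erase x).val.map (fun y => dist x y)) (· ≤ ·)).take k).map g).sum)
      + (∑ x ∈ ω₂,
        (((Multiset.sort ((ω.erase x).val.map (fun y => dist x y)) (· ≤ ·)).take k).map g).sum) := by
    rw [kNNEnergy, hωeq]
    rw [Finset.sum_union hdisjF]
  rw [hsum]
  have h1 : kNNEnergy s k ω₁ ≤ ∑ x ∈ ω₁,
      (((Multiset.sort ((ω.erase x).val.map (fun y => dist x y)) (· ≤ ·)).take k).map g).sum := by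
    rw [kNNEnergy]
    exact Finset.sum_le_sum (key ω₁ (hωeq ▸ Finset.subset_union_left))
  have h2 : kNNEnergy s k ω₂ ≤ ∑ x ∈ ω₂,
      (((Multiset.sort ((ω.erase x).val.map (fun y => dist x y)) (· ≤ ·)).take k).map g).sum := by
    rw [kNNEnergy]
    exact Finset.sum_le_sum (key ω₂ (hωeq ▸ Finset.subset_union_right))
  linarith
end

section
/- For s > 0 and k ≥ 1, the asymptotic constant for the k-nearest-neighbor Riesz s-energy on the unit interval is C_{s,1}^k = ∑_{j=−⌊k/2⌋, j≠0}^{⌈k/2⌉} |j|^{−s}. In particular, for k = 2m even, C_{s,1}^k = 2 ∑_{j=1}^{m} j^{−s}. -/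
open Filter Metric
open scoped ENNReal

/-- The `k`-nearest-neighbor Riesz `s`-energy of an `N`-tuple of points, with values in
`[0,∞]` (a repeated point contributes `+∞`). -/
noncomputable def tupleEnergy {E : Type*} [NormedAddCommGroup E] (s : ℝ) (k : ℕ) {N : ℕ}
    (x : Fin N → E) : ℝ≥0∞ :=
  ∑ i : Fin N,
    (((Multiset.sort
        ((Finset.univ.erase i).val.map (fun j => edist (x i) (x j))) (· ≤ ·)).take k).map
      (fun r => r ^ (-s))).sum

/-- Minimal `k`-nearest-neighbor Riesz `s`-energy over `N`-point configurations in `A`. -/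
noncomputable def minTupleEnergy {E : Type*} [NormedAddCommGroup E] (s : ℝ) (k : ℕ)
    (A : Set E) (N : ℕ) : ℝ≥0∞ :=
  ⨅ (x : Fin N → E) (_ : ∀ i, x i ∈ A), tupleEnergy s k x

noncomputable def oStat (m : Multiset ℝ≥0∞) (j : ℕ) : ℝ≥0∞ :=
  (Multiset.sort m (· ≤ ·)).getD j 0

lemma take_map_sum (f : ℝ≥0∞ → ℝ≥0∞) :
    ∀ (K : ℕ) (L : List ℝ≥0∞), K ≤ L.length →
      ((L.take K).map f).sum = ∑ j ∈ Finset.range K, f (L.getD j 0)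
  | 0, _, _ => by simp
  | (K+1), L, h => by
    have hK : K < L.length := h
    rw [List.take_succ, Finset.sum_range_succ, List.map_append, List.sum_append,
      take_map_sum f K L hK.le]
    have h2 : L[K]? = some (L.getD K 0) := by
      rw [List.getD_eq_getElem _ _ hK, List.getElem?_eq_getElem hK]
    rw [h2]
    simp

lemma sorted_get_le {L : List ℝ≥0∞} (hL : L.Pairwise (· ≤ ·)) {a b : ℕ} (hab : a ≤ b)
    (hb : b < L.length) : L.getD a 0 ≤ L.getD b 0 := by
  rw [List.getD_eq_getElem _ _ (lt_of_le_of_lt hab hb), List.getD_eq_getElem _ _ hb]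
  rcases eq_or_lt_of_le hab with rfl | hlt
  · exact le_refl _
  · exact List.pairwise_iff_get.mp hL ⟨a, lt_of_le_of_lt hab hb⟩ ⟨b, hb⟩ hlt

lemma lt_card_filter_of_oStat (m : Multiset ℝ≥0∞) (j : ℕ) (hj : j < Multiset.card m)
    (p : ℝ≥0∞ → Prop) [DecidablePred p] (hp : ∀ x, x ≤ oStat m j → p x) :
    j < Multiset.card (m.filter p) := by
  set L := Multiset.sort m (· ≤ ·) with hLdef
  have hlen : L.length = Multiset.card m := Multiset.length_sort _
  have hsub : ((L.take (j+1) : List ℝ≥0∞) : Multiset ℝ≥0∞) ≤ m := by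
    have h1 : List.Subperm (L.take (j+1)) L := (List.take_sublist _ _).subperm
    calc ((L.take (j+1) : List ℝ≥0∞) : Multiset ℝ≥0∞) ≤ (L : Multiset ℝ≥0∞) := h1
    _ = m := Multiset.sort_eq m (· ≤ ·)
  have hmem : ∀ x ∈ ((L.take (j+1) : List ℝ≥0∞) : Multiset ℝ≥0∞), p x := by
    intro x hx
    rw [Multiset.mem_coe, List.mem_iff_getElem] at hx
    obtain ⟨i, hi, rfl⟩ := hx
    have hil : i < L.length := by
      have := List.length_take_le (j+1) L
      omega
    have hi' : i ≤ j := by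
      have : (L.take (j+1)).length = min (j+1) L.length := List.length_take
      omega
    have hgi : (L.take (j+1))[i] = L.getD i 0 := by
      rw [List.getElem_take, List.getD_eq_getElem _ _ hil]
    rw [hgi]
    exact hp _ (sorted_get_le (Multiset.pairwise_sort _ _) hi' (by rw [hlen]; exact hj))
  have hle : ((L.take (j+1) : List ℝ≥0∞) : Multiset ℝ≥0∞) ≤ m.filter p :=
    Multiset.le_filter.mpr ⟨hsub, hmem⟩
  have hcard := Multiset.card_le_card hle
  have hc2 : Multiset.card ((L.take (j+1) : List ℝ≥0∞) : Multiset ℝ≥0∞) = j + 1 := by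
    rw [Multiset.coe_card, List.length_take]
    omega
  omega

lemma oStat_le_of_count (m : Multiset ℝ≥0∞) (j : ℕ) (c : ℝ≥0∞)
    (h : j < Multiset.card (m.filter (· ≤ c))) : oStat m j ≤ c := by
  by_contra hc
  push_neg at hc
  set L := Multiset.sort m (· ≤ ·) with hLdef
  have hlen : L.length = Multiset.card m := Multiset.length_sort _
  have hj : j < Multiset.card m :=
    lt_of_lt_of_le h (Multiset.card_le_card (Multiset.filter_le _ _))
  have hm : m = ((L.take j ++ L.drop j : List ℝ≥0∞) : Multiset ℝ≥0∞) := by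
    rw [List.take_append_drop]; exact (Multiset.sort_eq m (· ≤ ·)).symm
  have hdrop : Multiset.filter (· ≤ c) ((L.drop j : List ℝ≥0∞) : Multiset ℝ≥0∞) = 0 := by
    rw [Multiset.filter_eq_nil]
    intro a ha
    rw [Multiset.mem_coe, List.mem_iff_getElem] at ha
    obtain ⟨i, hi, rfl⟩ := ha
    have hlen2 : (L.drop j).length = L.length - j := List.length_drop
    have hji : j + i < L.length := by omega
    have hgi : (L.drop j)[i] = L.getD (j + i) 0 := by
      rw [List.getElem_drop, List.getD_eq_getElem _ _ hji]
    rw [hgi]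
    intro hle
    exact absurd (le_trans (sorted_get_le (Multiset.pairwise_sort _ _)
      (Nat.le_add_right _ _) hji) hle) (not_le.mpr hc)
  have hfin : Multiset.card (m.filter (· ≤ c)) ≤ j := by
    rw [hm, ← Multiset.coe_add, Multiset.filter_add, Multiset.card_add, hdrop]
    have h5 : Multiset.card (Multiset.filter (· ≤ c) ((L.take j : List ℝ≥0∞) : Multiset ℝ≥0∞))
        ≤ j := by
      calc Multiset.card (Multiset.filter (· ≤ c) ((L.take j : List ℝ≥0∞) : Multiset ℝ≥0∞))
          ≤ Multiset.card ((L.take j : List ℝ≥0∞) : Multiset ℝ≥0∞) :=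
            Multiset.card_le_card (Multiset.filter_le _ _)
      _ ≤ j := by rw [Multiset.coe_card, List.length_take]; omega
    simp only [Multiset.card_zero, add_zero]
    omega
  omega

lemma oStat_mono_sub {t m : Multiset ℝ≥0∞} (h : t ≤ m) {j : ℕ} (hj : j < Multiset.card t) :
    oStat m j ≤ oStat t j := by
  apply oStat_le_of_count
  calc j < Multiset.card (t.filter (· ≤ oStat t j)) :=
        lt_card_filter_of_oStat t j hj _ (fun x hx => hx)
    _ ≤ Multiset.card (m.filter (· ≤ oStat t j)) :=
        Multiset.card_le_card (Multiset.filter_le_filter _ h)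

lemma oStat_ge_of_count (m : Multiset ℝ≥0∞) (j : ℕ) (c : ℝ≥0∞) (hj : j < Multiset.card m)
    (h : Multiset.card (m.filter (· < c)) ≤ j) : c ≤ oStat m j := by
  by_contra hc
  push_neg at hc
  have := lt_card_filter_of_oStat m j hj (· < c) (fun x hx => lt_of_le_of_lt hx hc)
  omega

lemma rpow_neg_antitone {s : ℝ} (hs : 0 < s) : Antitone (fun r : ℝ≥0∞ => r ^ (-s)) := by
  intro a b hab
  simp only [ENNReal.rpow_neg]
  exact ENNReal.inv_le_inv.mpr (ENNReal.rpow_le_rpow hab hs.le)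

lemma dominance (m t : Multiset ℝ≥0∞) (h : t ≤ m) (K : ℕ) (htc : Multiset.card t = K)
    (hK : K ≤ Multiset.card m) (f : ℝ≥0∞ → ℝ≥0∞) (hf : Antitone f) :
    (t.map f).sum ≤ (((Multiset.sort m (· ≤ ·)).take K).map f).sum := by
  rw [take_map_sum f K _ (by rw [Multiset.length_sort]; exact hK)]
  have hlt : (Multiset.sort t (· ≤ ·)).length = K := by rw [Multiset.length_sort, htc]
  have hLHS : (t.map f).sum = ∑ j ∈ Finset.range K, f (oStat t j) := by
    simp only [oStat]
    rw [← take_map_sum f K _ (le_of_eq hlt.symm), List.take_of_length_le (le_of_eq hlt)]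
    conv_lhs => rw [← Multiset.sort_eq t (· ≤ ·)]
    rw [Multiset.map_coe, Multiset.sum_coe]
  rw [hLHS]
  simp only [oStat]
  apply Finset.sum_le_sum
  intro j hj
  exact hf (oStat_mono_sub h (by rw [htc]; exact Finset.mem_range.mp hj))

lemma take_energy_le (m : Multiset ℝ≥0∞) (K : ℕ) (hK : K ≤ Multiset.card m)
    (f : ℝ≥0∞ → ℝ≥0∞) (hf : Antitone f) (c : ℕ → ℝ≥0∞)
    (hc : ∀ j < K, Multiset.card (m.filter (· < c j)) ≤ j) :
    (((Multiset.sort m (· ≤ ·)).take K).map f).sum ≤ ∑ j ∈ Finset.range K, f (c j) := by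
  rw [take_map_sum f K _ (by rw [Multiset.length_sort]; exact hK)]
  apply Finset.sum_le_sum
  intro j hj
  exact hf (oStat_ge_of_count m j (c j) (lt_of_lt_of_le (Finset.mem_range.mp hj) hK)
    (hc j (Finset.mem_range.mp hj)))

lemma realJensen {s : ℝ} (hs : 0 < s) {ι : Type*} (T : Finset ι) (a : ι → ℝ)
    (hpos : ∀ i ∈ T, 0 < a i) {L : ℝ} (hL : 0 < L) (hsum : ∑ i ∈ T, a i ≤ L) :
    (T.card : ℝ) ^ (1 + s) * L ^ (-s) ≤ ∑ i ∈ T, a i ^ (-s) := by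
  rcases Finset.eq_empty_or_nonempty T with rfl | hne
  · simp [Real.zero_rpow (by positivity : (1:ℝ) + s ≠ 0)]
  have hM : (0:ℝ) < T.card := by exact_mod_cast Finset.card_pos.mpr hne
  set M : ℝ := (T.card : ℝ) with hMdef
  set w : ι → ℝ := fun _ => 1 / M with hwdef
  have hw1 : ∑ i ∈ T, w i = 1 := by
    simp only [hwdef, Finset.sum_const, nsmul_eq_mul]
    field_simp
    exact hMdef.symm
  have hGM : ∏ i ∈ T, a i ^ w i ≤ ∑ i ∈ T, w i * a i :=
    Real.geom_mean_le_arith_mean_weighted T w a (fun i _ => by positivity) hw1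
      (fun i hi => (hpos i hi).le)
  have hGM2 : ∏ i ∈ T, (a i ^ (-s)) ^ w i ≤ ∑ i ∈ T, w i * a i ^ (-s) :=
    Real.geom_mean_le_arith_mean_weighted T w (fun i => a i ^ (-s))
      (fun i _ => by positivity) hw1 (fun i hi => Real.rpow_nonneg (hpos i hi).le _)
  have hkey : ∏ i ∈ T, (a i ^ (-s)) ^ w i = (∏ i ∈ T, a i ^ w i) ^ (-s) := by
    rw [← Real.finset_prod_rpow T _ (fun i hi => (Real.rpow_pos_of_pos (hpos i hi) _).le)]
    apply Finset.prod_congr rfl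
    intro i hi
    rw [← Real.rpow_mul (hpos i hi).le, mul_comm, Real.rpow_mul (hpos i hi).le]
  set G : ℝ := ∏ i ∈ T, a i ^ w i with hGdef
  have hGpos : 0 < G := Finset.prod_pos (fun i hi => Real.rpow_pos_of_pos (hpos i hi) _)
  have hGle : G ≤ L / M := by
    calc G ≤ ∑ i ∈ T, w i * a i := hGM
    _ = (∑ i ∈ T, a i) / M := by
          simp only [hwdef, one_div, inv_mul_eq_div, ← Finset.sum_div]
    _ ≤ L / M := by gcongr
  have h1 : (L / M) ^ (-s) ≤ G ^ (-s) :=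
    Real.rpow_le_rpow_of_nonpos hGpos hGle (neg_nonpos.mpr hs.le)
  have h2 : (∑ i ∈ T, w i * a i ^ (-s)) = (∑ i ∈ T, a i ^ (-s)) / M := by
    simp only [hwdef, one_div, inv_mul_eq_div, ← Finset.sum_div]
  have h3 : (L / M) ^ (-s) ≤ (∑ i ∈ T, a i ^ (-s)) / M := by
    calc (L / M) ^ (-s) ≤ G ^ (-s) := h1
    _ ≤ ∑ i ∈ T, w i * a i ^ (-s) := hkey ▸ hGM2
    _ = _ := h2
  have h4 : M * (L / M) ^ (-s) ≤ ∑ i ∈ T, a i ^ (-s) := by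
    have := mul_le_mul_of_nonneg_left h3 hM.le
    rwa [mul_div_cancel₀ _ (ne_of_gt hM)] at this
  calc M ^ (1 + s) * L ^ (-s) = M * (L / M) ^ (-s) := by
        rw [Real.div_rpow hL.le hM.le, Real.rpow_neg hM.le,
          Real.rpow_add hM 1 s, Real.rpow_one, div_eq_mul_inv, inv_inv]
        ring
  _ ≤ _ := h4

lemma telescope {Y : ℕ → ℝ} (hm : Monotone Y) (h01 : ∀ n, Y n ∈ Set.Icc (0:ℝ) 1)
    (a b l : ℕ) (hab : a ≤ b) :
    ∑ n ∈ Finset.Ico a b, (Y (n + l) - Y n) ≤ (l : ℝ) := by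
  have hsplit : ∀ n, Y (n + l) - Y n = ∑ t ∈ Finset.range l, (Y (n + (t + 1)) - Y (n + t)) := by
    intro n
    rw [Finset.sum_range_sub (fun t => Y (n + t)) l]
    simp
  calc ∑ n ∈ Finset.Ico a b, (Y (n + l) - Y n)
      = ∑ n ∈ Finset.Ico a b, ∑ t ∈ Finset.range l, (Y (n + (t + 1)) - Y (n + t)) := by
        exact Finset.sum_congr rfl (fun n _ => hsplit n)
  _ = ∑ t ∈ Finset.range l, ∑ n ∈ Finset.Ico a b, (Y (n + (t + 1)) - Y (n + t)) :=
        Finset.sum_comm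
  _ = ∑ t ∈ Finset.range l, (Y (b + t) - Y (a + t)) := by
        apply Finset.sum_congr rfl
        intro t _
        rw [Finset.sum_Ico_eq_sub _ hab]
        have e1 : ∀ c : ℕ, ∑ n ∈ Finset.range c, (Y (n + (t + 1)) - Y (n + t)) = Y (c + t) - Y t := by
          intro c
          have h := Finset.sum_range_sub (fun n => Y (n + t)) c
          simp only [zero_add] at h
          rw [← h]
          apply Finset.sum_congr rfl
          intro n _
          congr 2
          omega
        rw [e1, e1]
        ring
  _ ≤ ∑ _t ∈ Finset.range l, (1:ℝ) := by
        apply Finset.sum_le_sum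
        intro t _
        have h1 := (h01 (b + t)).2
        have h2 := (h01 (a + t)).1
        linarith
  _ = l := by simp

lemma per_offset {s : ℝ} (hs : 0 < s) {Y : ℕ → ℝ} (hm : Monotone Y)
    (h01 : ∀ n, Y n ∈ Set.Icc (0:ℝ) 1) (a b l : ℕ) (hl : 0 < l) (hab : a ≤ b) :
    ENNReal.ofReal ((((b - a : ℕ)) : ℝ) ^ (1 + s) * (l : ℝ) ^ (-s)) ≤
      ∑ n ∈ Finset.Ico a b, (ENNReal.ofReal (Y (n + l) - Y n)) ^ (-s) := by
  by_cases hzero : ∃ n ∈ Finset.Ico a b, Y (n + l) - Y n ≤ 0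
  · obtain ⟨n, hn, h0⟩ := hzero
    have htop : (ENNReal.ofReal (Y (n + l) - Y n)) ^ (-s) = ⊤ := by
      rw [ENNReal.ofReal_eq_zero.mpr h0, ENNReal.zero_rpow_of_neg (by linarith)]
    have : ∑ n ∈ Finset.Ico a b, (ENNReal.ofReal (Y (n + l) - Y n)) ^ (-s) = ⊤ :=
      ENNReal.sum_eq_top.mpr ⟨n, hn, htop⟩
    rw [this]; exact le_top
  · push_neg at hzero
    have hpos : ∀ n ∈ Finset.Ico a b, 0 < Y (n + l) - Y n := hzero
    have heq : ∀ n ∈ Finset.Ico a b, (ENNReal.ofReal (Y (n + l) - Y n)) ^ (-s)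
        = ENNReal.ofReal ((Y (n + l) - Y n) ^ (-s)) := fun n hn =>
      ENNReal.ofReal_rpow_of_pos (hpos n hn)
    rw [Finset.sum_congr rfl heq, ← ENNReal.ofReal_sum_of_nonneg
      (fun n hn => Real.rpow_nonneg (hpos n hn).le _)]
    apply ENNReal.ofReal_le_ofReal
    have hcard : ((Finset.Ico a b).card : ℝ) = ((b - a : ℕ) : ℝ) := by
      rw [Nat.card_Ico]
    rw [← hcard]
    exact realJensen hs _ _ hpos (by exact_mod_cast hl)
      (telescope hm h01 a b l hab)

lemma Cconst_eq (s : ℝ) (k : ℕ) : (∑ j ∈ Finset.range k, ((j / 2 + 1 : ℕ) : ℝ) ^ (-s))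
    = (∑ i ∈ Finset.Icc 1 (k / 2), ((i : ℕ) : ℝ) ^ (-s))
      + ∑ i ∈ Finset.Icc 1 ((k + 1) / 2), ((i : ℕ) : ℝ) ^ (-s) := by
  induction k with
  | zero => simp
  | succ k ih =>
    rw [Finset.sum_range_succ, ih]
    rcases Nat.even_or_odd k with ⟨m, rfl⟩ | ⟨m, rfl⟩
    · have e1 : (m + m) / 2 = m := by omega
      have e2 : (m + m + 1) / 2 = m := by omega
      have e3 : (m + m + 1 + 1) / 2 = m + 1 := by omega
      rw [e1, e2, e3, Finset.sum_Icc_succ_top (by omega)]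
      ring
    · have e1 : (2 * m + 1) / 2 = m := by omega
      have e2 : (2 * m + 1 + 1) / 2 = m + 1 := by omega
      have e3 : (2 * m + 1 + 1 + 1) / 2 = m + 1 := by omega
      rw [e1, e2, e3, Finset.sum_Icc_succ_top (by omega)]
      ring

lemma windowSum (s : ℝ) (a b : ℕ) :
    (∑ j ∈ (Finset.Icc (-(a : ℤ)) (b : ℤ)).erase 0, ((j.natAbs : ℝ) ^ (-s)))
    = (∑ i ∈ Finset.Icc 1 a, ((i : ℕ) : ℝ) ^ (-s))
      + ∑ i ∈ Finset.Icc 1 b, ((i : ℕ) : ℝ) ^ (-s) := by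
  have hsplit : (Finset.Icc (-(a : ℤ)) (b : ℤ)).erase 0
      = (Finset.Icc (-(a : ℤ)) (-1)) ∪ Finset.Icc (1 : ℤ) (b : ℤ) := by
    ext j
    simp only [Finset.mem_erase, Finset.mem_Icc, Finset.mem_union]
    omega
  have hdisj : Disjoint (Finset.Icc (-(a : ℤ)) (-1)) (Finset.Icc (1 : ℤ) (b : ℤ)) := by
    rw [Finset.disjoint_left]
    intro j hj hj'
    simp only [Finset.mem_Icc] at hj hj'
    omega
  rw [hsplit, Finset.sum_union hdisj]
  congr 1
  · apply Finset.sum_bij (fun (j : ℤ) _ => j.natAbs)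
    · intro j hj
      simp only [Finset.mem_Icc] at hj
      simp only [Finset.mem_Icc]
      omega
    · intro j1 h1 j2 h2 he
      simp only [Finset.mem_Icc] at h1 h2
      omega
    · intro i hi
      simp only [Finset.mem_Icc] at hi
      exact ⟨-(i : ℤ), by simp only [Finset.mem_Icc]; omega, by omega⟩
    · intro j hj; rfl
  · apply Finset.sum_bij (fun (j : ℤ) _ => j.natAbs)
    · intro j hj
      simp only [Finset.mem_Icc] at hj
      simp only [Finset.mem_Icc]
      omega
    · intro j1 h1 j2 h2 he
      simp only [Finset.mem_Icc] at h1 h2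
      omega
    · intro i hi
      simp only [Finset.mem_Icc] at hi
      exact ⟨(i : ℤ), by simp only [Finset.mem_Icc]; omega, by omega⟩
    · intro j hj; rfl

lemma sum_fin_coe {M : Type*} [AddCommMonoid M] {N : ℕ} (T : Finset ℕ) (hT : ∀ n ∈ T, n < N)
    (g : ℕ → M) :
    ∑ i ∈ Finset.univ.filter (fun i : Fin N => (i : ℕ) ∈ T), g (i : ℕ) = ∑ n ∈ T, g n := by
  apply Finset.sum_bij (fun (i : Fin N) _ => (i : ℕ))
  · intro i hi
    simpa using (Finset.mem_filter.mp hi).2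
  · intro i1 h1 i2 h2 he
    exact Fin.ext he
  · intro n hn
    exact ⟨⟨n, hT n hn⟩, by simp [hn], rfl⟩
  · intro i hi; rfl

lemma tupleEnergy_perm {E : Type*} [NormedAddCommGroup E] (s : ℝ) (k : ℕ) {N : ℕ}
    (x : Fin N → E) (σ : Equiv.Perm (Fin N)) :
    tupleEnergy s k (x ∘ σ) = tupleEnergy s k x := by
  unfold tupleEnergy
  conv_rhs => rw [← Equiv.sum_comp σ (fun i => (((Multiset.sort
        ((Finset.univ.erase i).val.map (fun j => edist (x i) (x j))) (· ≤ ·)).take k).map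
      (fun r => r ^ (-s))).sum)]
  apply Finset.sum_congr rfl
  intro i _
  have hms : (Finset.univ.erase i).val.map (fun j => edist ((x ∘ σ) i) ((x ∘ σ) j))
      = (Finset.univ.erase (σ i)).val.map (fun j => edist (x (σ i)) (x j)) := by
    have h1 : (Finset.univ.erase i).val.map (fun j => edist (x (σ i)) (x (σ j)))
        = ((Finset.univ.erase i).val.map σ).map (fun j => edist (x (σ i)) (x j)) := by
      rw [Multiset.map_map]
      rfl
    have h2 : (Finset.univ.erase i).val.map σ = (Finset.univ.erase (σ i)).val := by
      rw [Finset.erase_val, Finset.erase_val,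
        Multiset.map_erase σ σ.injective i Finset.univ.val]
      congr 1
      have := Finset.map_univ_equiv σ
      calc Multiset.map (⇑σ) Finset.univ.val = (Finset.univ.map σ.toEmbedding).val := by
            rw [Finset.map_val]; rfl
      _ = Finset.univ.val := by rw [this]
    calc (Finset.univ.erase i).val.map (fun j => edist ((x ∘ σ) i) ((x ∘ σ) j))
        = (Finset.univ.erase i).val.map (fun j => edist (x (σ i)) (x (σ j))) := rfl
    _ = ((Finset.univ.erase i).val.map σ).map (fun j => edist (x (σ i)) (x j)) := h1
    _ = (Finset.univ.erase (σ i)).val.map (fun j => edist (x (σ i)) (x j)) := by rw [h2]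
  rw [hms]

lemma lower_bound {s : ℝ} (hs : 0 < s) {k : ℕ} (hk : 1 ≤ k) {N : ℕ} (hN : k + 1 ≤ N)
    (y : Fin N → ℝ) (hmono : Monotone y) (hy : ∀ i, y i ∈ Set.Icc (0:ℝ) 1) :
    ENNReal.ofReal ((((N - k : ℕ)) : ℝ) ^ (1 + s)
        * ∑ j ∈ Finset.range k, ((j / 2 + 1 : ℕ) : ℝ) ^ (-s))
      ≤ tupleEnergy s k y := by
  set lo := k / 2 with hlo
  set hi := (k + 1) / 2 with hhi
  have hlohi : lo + hi = k := by omega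
  have hhiN : hi ≤ N := by omega
  -- monotone [0,1]-valued extension of y to ℕ
  set Y : ℕ → ℝ := fun n => if h : n < N then y ⟨n, h⟩ else 1 with hYdef
  have hY01 : ∀ n, Y n ∈ Set.Icc (0:ℝ) 1 := by
    intro n
    simp only [hYdef]
    split
    · exact hy _
    · exact ⟨zero_le_one, le_refl 1⟩
  have hYmono : Monotone Y := by
    intro a b hab
    simp only [hYdef]
    by_cases ha : a < N
    · by_cases hb : b < N
      · simp only [dif_pos ha, dif_pos hb]
        exact hmono (by exact hab)
      · simp only [dif_pos ha, dif_neg hb]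
        exact (hy _).2
    · have hb : ¬ b < N := by omega
      simp only [dif_neg ha, dif_neg hb, le_refl]
  -- per-point, per-neighbor gap value
  set g : ℕ → ℕ → ℝ≥0∞ := fun j n =>
    (ENNReal.ofReal (if j % 2 = 0 then Y (n + (j / 2 + 1)) - Y n
                     else Y n - Y (n - (j / 2 + 1)))) ^ (-s) with hgdef
  -- step 1 : pointwise energy bound
  have step1 : ∀ i : Fin N, (i : ℕ) ∈ Finset.Ico lo (N - hi) →
      ∑ j ∈ Finset.range k, g j (i : ℕ) ≤
      (((Multiset.sort ((Finset.univ.erase i).val.map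
          (fun j => edist (y i) (y j))) (· ≤ ·)).take k).map (fun r => r ^ (-s))).sum := by
    intro i hi'
    rw [Finset.mem_Ico] at hi'
    obtain ⟨hilo, hihi⟩ := hi'
    set n : ℕ := (i : ℕ) with hn
    set nb : ℕ → ℕ := fun j => if j % 2 = 0 then n + (j / 2 + 1) else n - (j / 2 + 1) with hnb
    have hnbN : ∀ j < k, nb j < N := by
      intro j hj
      simp only [hnb]
      split <;> rename_i hpar
      · have : j / 2 + 1 ≤ hi := by omega
        omega
      · have : j / 2 + 1 ≤ lo := by omega
        omega
    have hnbne : ∀ j < k, nb j ≠ n := by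
      intro j hj
      simp only [hnb]
      split <;> rename_i hpar
      · omega
      · have h1 : j / 2 + 1 ≤ lo := by omega
        omega
    set nbF : ℕ → Fin N := fun j => if h : nb j < N then (⟨nb j, h⟩ : Fin N) else i with hnbF
    have hnbF_inj : ∀ j1 ∈ Finset.range k, ∀ j2 ∈ Finset.range k,
        nbF j1 = nbF j2 → j1 = j2 := by
      intro j1 h1 j2 h2 he
      rw [Finset.mem_range] at h1 h2
      have e1 := hnbN j1 h1
      have e2 := hnbN j2 h2
      simp only [hnbF, dif_pos e1, dif_pos e2] at he
      have hv : nb j1 = nb j2 := congrArg Fin.val he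
      simp only [hnb] at hv
      by_cases p1 : j1 % 2 = 0 <;> by_cases p2 : j2 % 2 = 0 <;>
        simp only [if_pos, if_neg, p1, p2, ite_true, ite_false] at hv <;> omega
    set u : Multiset (Fin N) := (Finset.range k).val.map nbF with hu
    have hu_nodup : u.Nodup := by
      apply Multiset.Nodup.map_on
      · intro j1 h1 j2 h2
        exact hnbF_inj j1 h1 j2 h2
      · exact (Finset.range k).nodup
    have hu_sub : u ≤ (Finset.univ.erase i).val := by
      rw [Multiset.le_iff_subset hu_nodup]
      intro a ha
      simp only [hu, Multiset.mem_map] at ha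
      obtain ⟨j, hj, rfl⟩ := ha
      rw [Finset.range_val, Multiset.mem_range] at hj
      have e1 := hnbN j hj
      have e2 := hnbne j hj
      simp only [hnbF, dif_pos e1]
      rw [Finset.mem_val, Finset.mem_erase]
      refine ⟨?_, Finset.mem_univ _⟩
      intro hcon
      exact e2 (congrArg Fin.val hcon)
    set t : Multiset ℝ≥0∞ := u.map (fun i' => edist (y i) (y i')) with ht
    have ht_sub : t ≤ (Finset.univ.erase i).val.map (fun j => edist (y i) (y j)) :=
      Multiset.map_le_map hu_sub
    have ht_card : Multiset.card t = k := by simp [ht, hu]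
    have hm_card : k ≤ Multiset.card
        ((Finset.univ.erase i).val.map (fun j => edist (y i) (y j))) := by
      rw [Multiset.card_map]
      have : (Finset.univ.erase i).card = N - 1 := by
        rw [Finset.card_erase_of_mem (Finset.mem_univ _), Finset.card_univ, Fintype.card_fin]
      show k ≤ (Finset.univ.erase i).card
      omega
    have hdom := dominance _ t ht_sub k ht_card hm_card _ (rpow_neg_antitone hs)
    refine le_trans (le_of_eq ?_) hdom
    -- identify the left-hand sums
    rw [ht, hu, Multiset.map_map, Multiset.map_map, Finset.sum_eq_multiset_sum]
    apply congrArg Multiset.sum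
    apply Multiset.map_congr rfl
    intro j hj
    rw [Finset.range_val, Multiset.mem_range] at hj
    have e1 := hnbN j hj
    simp only [Function.comp_apply, hnbF, dif_pos e1]
    have hYn : Y n = y i := by
      simp only [hYdef, hn, dif_pos i.isLt]
    by_cases hpar : j % 2 = 0
    · have hnbj : nb j = n + (j / 2 + 1) := by simp only [hnb, if_pos hpar]
      have hle : y i ≤ y ⟨nb j, e1⟩ := by
        have hfle : i ≤ (⟨nb j, e1⟩ : Fin N) := by
          rw [Fin.le_def]
          show (i : ℕ) ≤ nb j
          rw [hnbj]
          omega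
        exact hmono hfle
      have hYnb : Y (n + (j / 2 + 1)) = y ⟨nb j, e1⟩ := by
        simp only [hYdef, ← hnbj, dif_pos e1]
      simp only [hgdef, if_pos hpar, hYnb, hYn]
      rw [edist_dist, Real.dist_eq, abs_sub_comm, abs_of_nonneg (by linarith)]
    · have hnbj : nb j = n - (j / 2 + 1) := by simp only [hnb, if_neg hpar]
      have hjlo : j / 2 + 1 ≤ lo := by omega
      have hle : y ⟨nb j, e1⟩ ≤ y i := by
        have hfle : (⟨nb j, e1⟩ : Fin N) ≤ i := by
          rw [Fin.le_def]
          show nb j ≤ (i : ℕ)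
          rw [hnbj]
          omega
        exact hmono hfle
      have hYnb : Y (n - (j / 2 + 1)) = y ⟨nb j, e1⟩ := by
        simp only [hYdef, ← hnbj, dif_pos e1]
      simp only [hgdef, if_neg hpar, hYnb, hYn]
      rw [edist_dist, Real.dist_eq, abs_of_nonneg (by linarith)]
  -- step 2 : sum the pointwise bounds
  have step2 : ∑ n ∈ Finset.Ico lo (N - hi), ∑ j ∈ Finset.range k, g j n ≤ tupleEnergy s k y := by
    have hTlt : ∀ n ∈ Finset.Ico lo (N - hi), n < N := by
      intro n hn
      rw [Finset.mem_Ico] at hn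
      omega
    rw [← sum_fin_coe (Finset.Ico lo (N - hi)) hTlt (fun n => ∑ j ∈ Finset.range k, g j n)]
    unfold tupleEnergy
    exact le_trans (Finset.sum_le_sum (fun i hi' => step1 i (Finset.mem_filter.mp hi').2))
      (Finset.sum_le_sum_of_subset (Finset.filter_subset _ _))
  -- step 3 : per-offset lower bound
  have step3 : ∀ j ∈ Finset.range k,
      ENNReal.ofReal ((((N - k : ℕ)) : ℝ) ^ (1 + s) * ((j / 2 + 1 : ℕ) : ℝ) ^ (-s))
        ≤ ∑ n ∈ Finset.Ico lo (N - hi), g j n := by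
    intro j hj
    rw [Finset.mem_range] at hj
    by_cases hpar : j % 2 = 0
    · have hgj : ∀ n ∈ Finset.Ico lo (N - hi), g j n
          = (ENNReal.ofReal (Y (n + (j / 2 + 1)) - Y n)) ^ (-s) := by
        intro n _; simp only [hgdef, if_pos hpar]
      rw [Finset.sum_congr rfl hgj]
      have hres := per_offset hs hYmono hY01 lo (N - hi) (j / 2 + 1) (by omega) (by omega)
      have hcast : (N - hi - lo : ℕ) = (N - k : ℕ) := by omega
      rwa [hcast] at hres
    · have hllo : j / 2 + 1 ≤ lo := by omega
      have hloNhi : lo ≤ N - hi := by omega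
      have hIco : Finset.map (addRightEmbedding (j / 2 + 1))
            (Finset.Ico (lo - (j / 2 + 1)) (N - hi - (j / 2 + 1)))
          = Finset.Ico lo (N - hi) := by
        rw [Finset.map_add_right_Ico]
        congr 1 <;> omega
      rw [← hIco, Finset.sum_map]
      have hgj : ∀ n ∈ Finset.Ico (lo - (j / 2 + 1)) (N - hi - (j / 2 + 1)),
          g j (addRightEmbedding (j / 2 + 1) n)
          = (ENNReal.ofReal (Y (n + (j / 2 + 1)) - Y n)) ^ (-s) := by
        intro n _
        show g j (n + (j / 2 + 1)) = _
        simp only [hgdef, if_neg hpar]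
        rw [Nat.add_sub_cancel]
      rw [Finset.sum_congr rfl hgj]
      have hres := per_offset hs hYmono hY01 (lo - (j / 2 + 1)) (N - hi - (j / 2 + 1))
        (j / 2 + 1) (by omega) (by omega)
      have hcast : (N - hi - (j / 2 + 1) - (lo - (j / 2 + 1)) : ℕ) = (N - k : ℕ) := by omega
      rwa [hcast] at hres
  -- assemble
  refine le_trans ?_ step2
  calc ENNReal.ofReal ((((N - k : ℕ)) : ℝ) ^ (1 + s)
        * ∑ j ∈ Finset.range k, ((j / 2 + 1 : ℕ) : ℝ) ^ (-s))
      = ∑ j ∈ Finset.range k, ENNReal.ofReal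
          ((((N - k : ℕ)) : ℝ) ^ (1 + s) * ((j / 2 + 1 : ℕ) : ℝ) ^ (-s)) := by
        rw [Finset.mul_sum, ENNReal.ofReal_sum_of_nonneg]
        intro j _
        have h1 : (0:ℝ) ≤ (((N - k : ℕ)) : ℝ) ^ (1 + s) := Real.rpow_nonneg (by positivity) _
        have h2 : (0:ℝ) ≤ ((j / 2 + 1 : ℕ) : ℝ) ^ (-s) := Real.rpow_nonneg (by positivity) _
        exact mul_nonneg h1 h2
  _ ≤ ∑ j ∈ Finset.range k, ∑ n ∈ Finset.Ico lo (N - hi), g j n := Finset.sum_le_sum step3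
  _ = ∑ n ∈ Finset.Ico lo (N - hi), ∑ j ∈ Finset.range k, g j n := Finset.sum_comm

lemma upper_bound {s : ℝ} (hs : 0 < s) {k : ℕ} (hk : 1 ≤ k) {N : ℕ} (hN : k + 2 ≤ N) :
    minTupleEnergy s k (Set.Icc (0:ℝ) 1) N ≤
      ENNReal.ofReal ((N : ℝ) * ((N : ℝ) - 1) ^ s
        * ∑ j ∈ Finset.range k, ((j / 2 + 1 : ℕ) : ℝ) ^ (-s)) := by
  have hN1 : (1:ℝ) ≤ (N : ℝ) - 1 := by
    have : (3:ℝ) ≤ (N:ℝ) := by exact_mod_cast (by omega : 3 ≤ N)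
    linarith
  have hNpos : (0:ℝ) < (N : ℝ) - 1 := by linarith
  set z : Fin N → ℝ := fun i => (i : ℝ) / ((N : ℝ) - 1) with hz
  have hmem : ∀ i, z i ∈ Set.Icc (0:ℝ) 1 := by
    intro i
    constructor
    · positivity
    · rw [div_le_one hNpos]
      have h1 : (i : ℕ) ≤ N - 1 := by omega
      have h2 := (Nat.cast_le (α := ℝ)).mpr h1
      rw [Nat.cast_sub (by omega)] at h2
      push_cast at h2 ⊢
      linarith
  have hstep : tupleEnergy s k z ≤
      ENNReal.ofReal ((N : ℝ) * ((N : ℝ) - 1) ^ s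
        * ∑ j ∈ Finset.range k, ((j / 2 + 1 : ℕ) : ℝ) ^ (-s)) := by
    unfold tupleEnergy
    set c : ℕ → ℝ≥0∞ := fun j => ENNReal.ofReal (((j / 2 + 1 : ℕ) : ℝ) / ((N : ℝ) - 1)) with hc
    have hcpos : ∀ j, (0:ℝ) < ((j / 2 + 1 : ℕ) : ℝ) / ((N : ℝ) - 1) := by
      intro j; positivity
    have hpoint : ∀ i : Fin N,
        (((Multiset.sort
          ((Finset.univ.erase i).val.map (fun j => edist (z i) (z j))) (· ≤ ·)).take k).map
          (fun r => r ^ (-s))).sum ≤ ∑ j ∈ Finset.range k, (c j) ^ (-s) := by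
      intro i
      apply take_energy_le _ k ?_ _ (rpow_neg_antitone hs) c ?_
      · rw [Multiset.card_map]
        show k ≤ (Finset.univ.erase i).card
        rw [Finset.card_erase_of_mem (Finset.mem_univ _), Finset.card_univ, Fintype.card_fin]
        omega
      · intro j hj
        rw [Multiset.filter_map]
        rw [Multiset.card_map]
        have hval : Multiset.filter ((fun r => r < c j) ∘ (fun i' => edist (z i) (z i')))
            (Finset.univ.erase i).val
            = Multiset.filter (fun i' => edist (z i) (z i') < c j)
                (Finset.univ.erase i).val :=
          Multiset.filter_congr (fun x _ => Iff.rfl)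
        rw [hval, ← Finset.filter_val]
        show (Finset.filter (fun i' => edist (z i) (z i') < c j) (Finset.univ.erase i)).card ≤ j
        have hmaps : ∀ i' ∈ Finset.filter (fun i' => edist (z i) (z i') < c j)
            (Finset.univ.erase i),
            ((i' : ℤ) - (i : ℤ)) ∈ (Finset.Icc (-((j / 2 : ℕ) : ℤ)) ((j / 2 : ℕ) : ℤ)).erase 0 := by
          intro i' hi'
          rw [Finset.mem_filter, Finset.mem_erase] at hi'
          obtain ⟨⟨hne, -⟩, hlt⟩ := hi'
          rw [edist_dist, hc, ENNReal.ofReal_lt_ofReal_iff (hcpos j)] at hlt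
          rw [Real.dist_eq] at hlt
          have hzz : z i - z i' = ((i : ℝ) - (i' : ℝ)) / ((N : ℝ) - 1) := by
            rw [hz]; ring
          rw [hzz, abs_div, abs_of_pos hNpos, div_lt_div_iff_of_pos_right hNpos] at hlt
          have habs : |(i : ℝ) - (i' : ℝ)| = ((((i' : ℤ) - (i : ℤ)).natAbs : ℕ) : ℝ) := by
            rw [Nat.cast_natAbs]
            push_cast
            rw [abs_sub_comm]
          rw [habs] at hlt
          have hlt2 : (((i' : ℤ) - (i : ℤ)).natAbs : ℕ) < j / 2 + 1 := by exact_mod_cast hlt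
          rw [Finset.mem_erase, Finset.mem_Icc]
          constructor
          · intro hzero
            apply hne
            have : (i' : ℤ) = (i : ℤ) := by omega
            exact Fin.ext (by exact_mod_cast this)
          · omega
        have hinj : Set.InjOn (fun i' : Fin N => (i' : ℤ) - (i : ℤ))
            (Finset.filter (fun i' => edist (z i) (z i') < c j) (Finset.univ.erase i)) := by
          intro a _ b _ hab
          simp only at hab
          have : (a : ℤ) = (b : ℤ) := by omega
          exact Fin.ext (by exact_mod_cast this)
        have hcard := Finset.card_le_card_of_injOn _ hmaps hinj
        have htarget : ((Finset.Icc (-((j / 2 : ℕ) : ℤ)) ((j / 2 : ℕ) : ℤ)).erase 0).card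
            = 2 * (j / 2) := by
          rw [Finset.card_erase_of_mem (by rw [Finset.mem_Icc]; omega), Int.card_Icc]
          omega
        omega
    calc ∑ i : Fin N, (((Multiset.sort
          ((Finset.univ.erase i).val.map (fun j => edist (z i) (z j))) (· ≤ ·)).take k).map
          (fun r => r ^ (-s))).sum
        ≤ ∑ _i : Fin N, ∑ j ∈ Finset.range k, (c j) ^ (-s) :=
          Finset.sum_le_sum (fun i _ => hpoint i)
    _ = (N : ℝ≥0∞) * ∑ j ∈ Finset.range k, (c j) ^ (-s) := by
          rw [Finset.sum_const, Finset.card_univ, Fintype.card_fin, nsmul_eq_mul]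
    _ = ENNReal.ofReal ((N : ℝ) * ((N : ℝ) - 1) ^ s
          * ∑ j ∈ Finset.range k, ((j / 2 + 1 : ℕ) : ℝ) ^ (-s)) := by
          have hcj : ∀ j ∈ Finset.range k, (c j) ^ (-s)
              = ENNReal.ofReal (((N : ℝ) - 1) ^ s * ((j / 2 + 1 : ℕ) : ℝ) ^ (-s)) := by
            intro j _
            rw [hc, ENNReal.ofReal_rpow_of_pos (hcpos j)]
            congr 1
            rw [Real.div_rpow (by positivity) hNpos.le, Real.rpow_neg hNpos.le,
              div_eq_mul_inv, inv_inv, mul_comm]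
          rw [Finset.sum_congr rfl hcj, ← ENNReal.ofReal_sum_of_nonneg
            (fun j _ => mul_nonneg (Real.rpow_nonneg hNpos.le _) (Real.rpow_nonneg (by positivity) _)),
            ← Finset.mul_sum]
          rw [← ENNReal.ofReal_natCast N, ← ENNReal.ofReal_mul (by positivity)]
          congr 1
          ring
  calc minTupleEnergy s k (Set.Icc (0:ℝ) 1) N ≤ tupleEnergy s k z := by
        unfold minTupleEnergy
        exact iInf_le_of_le z (iInf_le_of_le hmem le_rfl)
  _ ≤ _ := hstep

/-- The asymptotic constant for the `k`-nearest-neighbor Riesz `s`-energy on `[0,1]`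
equals `∑_{j=-⌊k/2⌋, j≠0}^{⌈k/2⌉} |j|^{-s}`; and for `k = 2m` this is `2 ∑_{j=1}^m j^{-s}`. -/
theorem kNN_constant_dim_one (s : ℝ) (hs : 0 < s) (k : ℕ) (hk : 1 ≤ k) :
    Tendsto (fun N : ℕ =>
        minTupleEnergy s k (Set.Icc (0 : ℝ) 1) N / ENNReal.ofReal ((N : ℝ) ^ (1 + s)))
      atTop
      (nhds (ENNReal.ofReal
        (∑ j ∈ (Finset.Icc (-((k / 2 : ℕ) : ℤ)) (((k + 1) / 2 : ℕ) : ℤ)).erase 0,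
          ((j.natAbs : ℝ) ^ (-s))))) ∧
    ∀ m : ℕ, k = 2 * m →
      (∑ j ∈ (Finset.Icc (-((k / 2 : ℕ) : ℤ)) (((k + 1) / 2 : ℕ) : ℤ)).erase 0,
          ((j.natAbs : ℝ) ^ (-s))) =
        2 * ∑ j ∈ Finset.Icc 1 m, (j : ℝ) ^ (-s) := by
  set C : ℝ := ∑ j ∈ Finset.range k, ((j / 2 + 1 : ℕ) : ℝ) ^ (-s) with hC
  have hCnonneg : 0 ≤ C := Finset.sum_nonneg (fun j _ => Real.rpow_nonneg (by positivity) _)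
  have htarget : (∑ j ∈ (Finset.Icc (-((k / 2 : ℕ) : ℤ)) (((k + 1) / 2 : ℕ) : ℤ)).erase 0,
      ((j.natAbs : ℝ) ^ (-s))) = C := by
    rw [windowSum s (k / 2) ((k + 1) / 2), hC, Cconst_eq]
  constructor
  · rw [htarget]
    -- lower bound for the min energy
    have hminE_ge : ∀ N : ℕ, k + 1 ≤ N →
        ENNReal.ofReal ((((N - k : ℕ)) : ℝ) ^ (1 + s) * C)
          ≤ minTupleEnergy s k (Set.Icc (0:ℝ) 1) N := by
      intro N hN
      apply le_iInf
      intro x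
      apply le_iInf
      intro hx
      rw [← tupleEnergy_perm s k x (Tuple.sort x)]
      exact lower_bound hs hk hN (x ∘ Tuple.sort x) (Tuple.monotone_sort x) (fun i => hx _)
    -- real sequences
    set rlo : ℕ → ℝ := fun N => (((N - k : ℕ)) : ℝ) ^ (1 + s) * C / (N : ℝ) ^ (1 + s) with hrlo
    set rhip : ℕ → ℝ := fun N => (N : ℝ) * ((N : ℝ) - 1) ^ s * C / (N : ℝ) ^ (1 + s) with hrhi
    have hlo_t : Tendsto rlo atTop (nhds C) := by
      have h1 : Tendsto (fun N : ℕ => 1 - (k:ℝ)/(N:ℝ)) atTop (nhds 1) := by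
        have h0 := tendsto_const_div_atTop_nhds_zero_nat (k:ℝ)
        have h2 := (tendsto_const_nhds (x := (1:ℝ)) (f := atTop)).sub h0
        simpa using h2
      have h2 : Tendsto (fun N : ℕ => ((1 - (k:ℝ)/(N:ℝ)) ^ (1 + s)) * C) atTop (nhds C) := by
        have hc : ContinuousAt (fun x : ℝ => x ^ (1+s)) 1 :=
          Real.continuousAt_rpow_const 1 (1+s) (Or.inl one_ne_zero)
        have h3 := (hc.tendsto.comp h1).mul_const C
        simpa [Real.one_rpow] using h3
      apply h2.congr'
      filter_upwards [eventually_ge_atTop (k + 1)] with N hN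
      have hNpos : (0:ℝ) < N := by
        have h4 : (0:ℕ) < N := by omega
        exact_mod_cast h4
      have hcast : ((N - k : ℕ) : ℝ) = (N:ℝ) - k := by
        rw [Nat.cast_sub (by omega)]
      have hsub : (0:ℝ) ≤ (N:ℝ) - k := by rw [← hcast]; positivity
      have hfrac : 1 - (k:ℝ)/(N:ℝ) = ((N:ℝ) - k) / N := by field_simp
      show (1 - (k:ℝ)/(N:ℝ)) ^ (1+s) * C = ((N - k : ℕ):ℝ) ^ (1+s) * C / (N:ℝ)^(1+s)
      rw [hfrac, hcast, Real.div_rpow hsub hNpos.le, div_mul_eq_mul_div]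
    have hhi_t : Tendsto rhip atTop (nhds C) := by
      have h1 : Tendsto (fun N : ℕ => 1 - 1/(N:ℝ)) atTop (nhds 1) := by
        have h0 := tendsto_one_div_atTop_nhds_zero_nat (𝕜 := ℝ)
        have h2 := (tendsto_const_nhds (x := (1:ℝ)) (f := atTop)).sub h0
        simpa using h2
      have h2 : Tendsto (fun N : ℕ => ((1 - 1/(N:ℝ)) ^ s) * C) atTop (nhds C) := by
        have hc : ContinuousAt (fun x : ℝ => x ^ s) 1 :=
          Real.continuousAt_rpow_const 1 s (Or.inl one_ne_zero)
        have h3 := (hc.tendsto.comp h1).mul_const C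
        simpa [Real.one_rpow] using h3
      apply h2.congr'
      filter_upwards [eventually_ge_atTop (k + 2)] with N hN
      have hNpos : (0:ℝ) < N := by
        have h4 : (0:ℕ) < N := by omega
        exact_mod_cast h4
      have hN1 : (0:ℝ) ≤ (N:ℝ) - 1 := by
        have h4 : (1:ℕ) ≤ N := by omega
        have h5 : (1:ℝ) ≤ (N:ℝ) := by exact_mod_cast h4
        linarith
      have hfrac : 1 - 1/(N:ℝ) = ((N:ℝ) - 1) / N := by field_simp
      show (1 - 1/(N:ℝ)) ^ s * C = (N:ℝ) * ((N:ℝ)-1)^s * C / (N:ℝ)^(1+s)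
      rw [hfrac, Real.div_rpow hN1 hNpos.le, Real.rpow_add hNpos 1 s, Real.rpow_one]
      have hNs : (N:ℝ)^s ≠ 0 := by positivity
      field_simp
    have hloE : Tendsto (fun N => ENNReal.ofReal (rlo N)) atTop (nhds (ENNReal.ofReal C)) :=
      (ENNReal.continuous_ofReal.tendsto C).comp hlo_t
    have hhiE : Tendsto (fun N => ENNReal.ofReal (rhip N)) atTop (nhds (ENNReal.ofReal C)) :=
      (ENNReal.continuous_ofReal.tendsto C).comp hhi_t
    apply tendsto_of_tendsto_of_tendsto_of_le_of_le' hloE hhiE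
    · filter_upwards [eventually_ge_atTop (k + 2)] with N hN
      have hNpos : (0:ℝ) < (N:ℝ)^(1+s) := by
        apply Real.rpow_pos_of_pos
        have h4 : (0:ℕ) < N := by omega
        exact_mod_cast h4
      show ENNReal.ofReal (rlo N) ≤ _
      rw [hrlo]
      rw [ENNReal.ofReal_div_of_pos hNpos]
      exact ENNReal.div_le_div_right (hminE_ge N (by omega)) _
    · filter_upwards [eventually_ge_atTop (k + 2)] with N hN
      have hNpos : (0:ℝ) < (N:ℝ)^(1+s) := by
        apply Real.rpow_pos_of_pos
        have h4 : (0:ℕ) < N := by omega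
        exact_mod_cast h4
      show _ ≤ ENNReal.ofReal (rhip N)
      rw [hrhi]
      rw [ENNReal.ofReal_div_of_pos hNpos]
      exact ENNReal.div_le_div_right (upper_bound hs hk (by omega)) _
  · intro m hm
    subst hm
    rw [windowSum s _ _]
    have e1 : (2 * m) / 2 = m := by omega
    have e2 : (2 * m + 1) / 2 = m := by omega
    rw [e1, e2, two_mul]
end

section
/- Let s > 0, k ≥ 1, d ≥ 1. Then the limit C_{s,d}^k := lim_{N→∞} E_s^{k,*}([0,1]^d, N) / N^{1+s/d} exists and satisfies 0 < C_{s,d}^k < ∞. -/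
open Filter Metric
open scoped ENNReal

noncomputable def topk (k : ℕ) (P : Multiset ℝ≥0∞) : ℝ≥0∞ :=
  ⨆ (T : Multiset ℝ≥0∞) (_ : T ≤ P) (_ : Multiset.card T ≤ k), T.sum

lemma sum_le_topk (k : ℕ) {P T : Multiset ℝ≥0∞} (hT : T ≤ P) (hc : Multiset.card T ≤ k) :
    T.sum ≤ topk k P := by
  refine le_iSup_of_le T ?_
  exact le_iSup_of_le hT (le_iSup_of_le hc le_rfl)

lemma topk_le (k : ℕ) {P : Multiset ℝ≥0∞} {b : ℝ≥0∞}
    (h : ∀ T : Multiset ℝ≥0∞, T ≤ P → Multiset.card T ≤ k → T.sum ≤ b) : topk k P ≤ b := by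
  refine iSup_le fun T => iSup_le fun hT => iSup_le fun hc => h T hT hc

lemma topk_mono {k : ℕ} {P Q : Multiset ℝ≥0∞} (h : P ≤ Q) : topk k P ≤ topk k Q :=
  topk_le k fun T hT hc => sum_le_topk k (hT.trans h) hc

lemma topk_add_le (k : ℕ) (P Q : Multiset ℝ≥0∞) :
    topk k (P + Q) ≤ topk k P + topk k Q := by
  refine topk_le k fun T hT hc => ?_
  classical
  have h1 : T ∩ P + (T - P) = T := by
    ext a
    simp only [Multiset.count_add, Multiset.count_inter, Multiset.count_sub]
    omega
  have h2 : T - P ≤ Q := by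
    rw [Multiset.sub_le_iff_le_add]
    simpa [add_comm] using hT
  have h3 : T ∩ P ≤ P := Multiset.inter_le_right
  calc T.sum = (T ∩ P).sum + (T - P).sum := by rw [← Multiset.sum_add, h1]
    _ ≤ topk k P + topk k Q := by
        refine add_le_add (sum_le_topk k h3 ?_) (sum_le_topk k h2 ?_)
        · exact le_trans (Multiset.card_le_card (Multiset.inter_le_left)) hc
        · exact le_trans (Multiset.card_le_card (Multiset.sub_le_self _ _)) hc

lemma topk_le_card_mul (k : ℕ) {P : Multiset ℝ≥0∞} {c : ℝ≥0∞} (h : ∀ a ∈ P, a ≤ c) :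
    topk k P ≤ (k : ℝ≥0∞) * c := by
  refine topk_le k fun T hT hc => ?_
  calc T.sum ≤ Multiset.card T • c :=
        Multiset.sum_le_card_nsmul T c fun x hx => h x (Multiset.mem_of_le hT hx)
    _ = (Multiset.card T : ℝ≥0∞) * c := by simp [nsmul_eq_mul]
    _ ≤ (k : ℝ≥0∞) * c := by
        exact mul_le_mul_left (by exact_mod_cast Nat.cast_le.mpr hc) c

lemma le_topk {k : ℕ} (hk : 1 ≤ k) {P : Multiset ℝ≥0∞} {a : ℝ≥0∞} (ha : a ∈ P) :
    a ≤ topk k P := by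
  have : ({a} : Multiset ℝ≥0∞).sum ≤ topk k P := by
    refine sum_le_topk k ?_ (by simpa using hk)
    simpa using Multiset.singleton_le.mpr ha
  simpa using this

lemma topk_map_mul_le (k : ℕ) {c : ℝ≥0∞} (hc0 : c ≠ 0) (hct : c ≠ ⊤) (P : Multiset ℝ≥0∞) :
    topk k (P.map (fun a => c * a)) ≤ c * topk k P := by
  refine topk_le k fun T hT hcard => ?_
  set T' := T.map (fun a => c⁻¹ * a) with hT'
  have hinv : c⁻¹ * c = 1 := ENNReal.inv_mul_cancel hc0 hct
  have hTP : T' ≤ P := by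
    have := Multiset.map_le_map (f := fun a => c⁻¹ * a) hT
    rw [Multiset.map_map] at this
    refine le_trans this ?_
    have : Multiset.map ((fun a => c⁻¹ * a) ∘ fun a => c * a) P = P := by
      refine Multiset.map_congr rfl (fun a _ => ?_) |>.trans (Multiset.map_id P)
      show c⁻¹ * (c * a) = a
      rw [← mul_assoc, hinv, one_mul]
    rw [this]
  have hsum : T.sum = c * T'.sum := by
    have h1 : Multiset.map (fun a => c * (c⁻¹ * a)) T = T := by
      refine Multiset.map_congr rfl (fun a _ => ?_) |>.trans (Multiset.map_id T)
      show c * (c⁻¹ * a) = a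
      rw [← mul_assoc, ENNReal.mul_inv_cancel hc0 hct, one_mul]
    calc T.sum = (Multiset.map (fun a => c * (c⁻¹ * a)) T).sum := by rw [h1]
      _ = c * T'.sum := by rw [hT', Multiset.sum_map_mul_left]
  rw [hsum]
  exact mul_le_mul_right (sum_le_topk k hTP (by simpa [hT'] using hcard)) c

/-- For a list sorted in decreasing order, the sum of the first `k` entries is `topk k`. -/
lemma sorted_take_sum {L : List ℝ≥0∞} (hL : L.Pairwise (· ≥ ·)) (k : ℕ) :
    (L.take k).sum = topk k (↑L : Multiset ℝ≥0∞) := by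
  apply le_antisymm
  · have h1 : (↑(L.take k) : Multiset ℝ≥0∞) ≤ ↑L := (List.take_sublist k L).subperm
    have h2 : Multiset.card (↑(L.take k) : Multiset ℝ≥0∞) ≤ k := by
      simpa using List.length_take_le k L
    simpa using sum_le_topk k h1 h2
  · refine topk_le k fun T hT hc => ?_
    induction L generalizing T k with
    | nil => 
      have : T = 0 := le_bot_iff.mp hT
      simp [this]
    | cons a L' ih =>
      rcases List.pairwise_cons.mp hL with ⟨ha, hL'⟩
      by_cases haT : a ∈ T
      · have hk1 : 1 ≤ k := le_trans (Multiset.card_pos_iff_exists_mem.mpr ⟨a, haT⟩) hc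
        obtain ⟨k', rfl⟩ : ∃ k', k = k' + 1 := ⟨k - 1, by omega⟩
        have hTe : T.erase a ≤ ↑L' := by
          have := Multiset.erase_le_erase a hT
          simpa using this
        have hce : Multiset.card (T.erase a) ≤ k' := by
          rw [Multiset.card_erase_of_mem haT]
          exact Nat.pred_le_pred hc
        have hsum : T.sum = a + (T.erase a).sum := by
          conv_lhs => rw [← Multiset.cons_erase haT]
          simp
        rw [hsum]
        calc a + (T.erase a).sum ≤ a + (L'.take k').sum :=
              add_le_add_right (ih hL' k' _ hTe hce) a
          _ = ((a :: L').take (k' + 1)).sum := by simp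
      · have hTL' : T ≤ ↑L' := by
          rw [Multiset.le_iff_count]
          intro b
          have := Multiset.le_iff_count.mp hT b
          by_cases hb : b = a
          · subst hb
            simp [Multiset.count_eq_zero_of_notMem haT]
          · simpa [Multiset.count_cons, List.count_cons, hb, Ne.symm hb] using this
        refine le_trans (ih hL' k _ hTL' hc) ?_
        -- (L'.take k).sum ≤ ((a :: L').take k).sum
        rcases k with _ | k'
        · simp
        · simp only [List.take_succ_cons, List.sum_cons]
          by_cases hlen : k' < L'.length
          · calc (L'.take (k' + 1)).sum = (L'.take k').sum + L'[k'] :=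
                  List.sum_take_succ L' k' hlen
              _ ≤ (L'.take k').sum + a := add_le_add_right (ha _ (L'.getElem_mem hlen)) _
              _ = a + (L'.take k').sum := add_comm _ _
          · have h1 : L'.take (k' + 1) = L' := List.take_of_length_le (by omega)
            have h2 : L'.take k' = L' := List.take_of_length_le (by omega)
            rw [h1, h2]
            exact le_add_self

noncomputable def contrib (s : ℝ) (k : ℕ) (M : Multiset ℝ≥0∞) : ℝ≥0∞ :=
  (((Multiset.sort M (· ≤ ·)).take k).map (fun r => r ^ (-s))).sum

lemma rpow_neg_anti {s : ℝ} (hs : 0 ≤ s) {a b : ℝ≥0∞} (h : a ≤ b) : b ^ (-s) ≤ a ^ (-s) := by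
  rw [ENNReal.rpow_neg, ENNReal.rpow_neg]
  exact ENNReal.inv_le_inv.mpr (ENNReal.rpow_le_rpow h hs)

lemma contrib_eq_topk {s : ℝ} (hs : 0 < s) (k : ℕ) (M : Multiset ℝ≥0∞) :
    contrib s k M = topk k (M.map (fun r => r ^ (-s))) := by
  set L := Multiset.sort M (· ≤ ·) with hLdef
  have hsort : L.Pairwise (· ≤ ·) := Multiset.pairwise_sort M _
  have hperm : (↑L : Multiset ℝ≥0∞) = M := Multiset.sort_eq M _
  have hmap_sorted : (L.map (fun r => r ^ (-s))).Pairwise (· ≥ ·) :=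
    List.Pairwise.map _ (fun a b hab => rpow_neg_anti hs.le hab) hsort
  have h1 : contrib s k M = ((L.map (fun r => r ^ (-s))).take k).sum := by
    rw [contrib, ← List.map_take]
  rw [h1, sorted_take_sum hmap_sorted k, ← hperm, Multiset.map_coe]

/-- The multiset of distances from `x i` to the other points. -/
def nbhd {E : Type*} [NormedAddCommGroup E] {N : ℕ} (x : Fin N → E) (i : Fin N) :
    Multiset ℝ≥0∞ :=
  (Finset.univ.erase i).val.map (fun j => edist (x i) (x j))

lemma tupleEnergy_eq {E : Type*} [NormedAddCommGroup E] (s : ℝ) (hs : 0 < s) (k : ℕ) {N : ℕ}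
    (x : Fin N → E) :
    tupleEnergy s k x = ∑ i : Fin N, topk k ((nbhd x i).map (fun r => r ^ (-s))) := by
  unfold tupleEnergy
  exact Finset.sum_congr rfl fun i _ => contrib_eq_topk hs k (nbhd x i)


/-- The unit cube in `EuclideanSpace ℝ (Fin d)`. -/
def Cube (d : ℕ) : Set (EuclideanSpace ℝ (Fin d)) :=
  {x : EuclideanSpace ℝ (Fin d) | ∀ i, x i ∈ Set.Icc (0 : ℝ) 1}

section Mono

variable {E : Type*} [NormedAddCommGroup E]

lemma nbhd_comp_le {N M : ℕ} (h : N ≤ M) (y : Fin M → E) (i : Fin N) :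
    nbhd (y ∘ Fin.castLE h) i ≤ nbhd y (Fin.castLE h i) := by
  classical
  unfold nbhd
  have h1 : (Finset.univ.erase i).val.map (fun j => edist ((y ∘ Fin.castLE h) i) ((y ∘ Fin.castLE h) j))
      = (((Finset.univ.erase i).map (Fin.castLEEmb h)).val).map
          (fun j => edist (y (Fin.castLE h i)) (y j)) := by
    rw [Finset.map_val, Multiset.map_map]
    rfl
  rw [h1]
  refine Multiset.map_le_map (Finset.val_le_iff.mpr ?_)
  intro a ha
  rw [Finset.mem_map] at ha
  obtain ⟨j, hj, rfl⟩ := ha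
  rw [Finset.mem_erase] at hj ⊢
  exact ⟨fun hc => hj.1 (Fin.castLE_injective h hc), Finset.mem_univ _⟩

lemma tupleEnergy_comp_castLE {s : ℝ} (hs : 0 < s) (k : ℕ) {N M : ℕ} (h : N ≤ M)
    (y : Fin M → E) :
    tupleEnergy s k (y ∘ Fin.castLE h) ≤ tupleEnergy s k y := by
  rw [tupleEnergy_eq s hs k, tupleEnergy_eq s hs k]
  calc ∑ i : Fin N, topk k ((nbhd (y ∘ Fin.castLE h) i).map (fun r => r ^ (-s)))
      ≤ ∑ i : Fin N, topk k ((nbhd y (Fin.castLE h i)).map (fun r => r ^ (-s))) := by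
        refine Finset.sum_le_sum fun i _ => topk_mono (Multiset.map_le_map (nbhd_comp_le h y i))
    _ = ∑ i' ∈ Finset.univ.map (Fin.castLEEmb h),
          topk k ((nbhd y i').map (fun r => r ^ (-s))) := by
        rw [Finset.sum_map]
        rfl
    _ ≤ ∑ i' : Fin M, topk k ((nbhd y i').map (fun r => r ^ (-s))) :=
        Finset.sum_le_sum_of_subset (Finset.subset_univ _)

lemma minTupleEnergy_mono {s : ℝ} (hs : 0 < s) (k : ℕ) (A : Set E) {N M : ℕ} (h : N ≤ M) :
    minTupleEnergy s k A N ≤ minTupleEnergy s k A M := by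
  refine le_iInf fun y => le_iInf fun hy => ?_
  calc minTupleEnergy s k A N ≤ tupleEnergy s k (y ∘ Fin.castLE h) := by
        refine iInf_le_of_le (y ∘ Fin.castLE h) (iInf_le_of_le (fun i => hy _) le_rfl)
    _ ≤ tupleEnergy s k y := tupleEnergy_comp_castLE hs k h y

end Mono

lemma coord_dist_le {d : ℕ} (x y : EuclideanSpace ℝ (Fin d)) (j : Fin d) :
    |x j - y j| ≤ dist x y := by
  rw [EuclideanSpace.dist_eq]
  have h1 : |x j - y j| = Real.sqrt (dist (x j) (y j) ^ 2) := by
    rw [Real.sqrt_sq_eq_abs, Real.dist_eq, abs_abs]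
  rw [h1]
  exact Real.sqrt_le_sqrt (Finset.single_le_sum (f := fun i => dist (x i) (y i) ^ 2)
    (fun i _ => sq_nonneg _) (Finset.mem_univ j))

section Upper

lemma energy_upper {d : ℕ} {s : ℝ} (hs : 0 < s) (k : ℕ) {N m : ℕ} (hm : 1 ≤ m)
    (hNm : N ≤ m ^ d) :
    minTupleEnergy s k (Cube d) N ≤
      (N : ℝ≥0∞) * (k : ℝ≥0∞) * (ENNReal.ofReal ((m : ℝ)⁻¹)) ^ (-s) := by
  classical
  have hm0 : (0 : ℝ) < m := by exact_mod_cast hm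
  set v : Fin N → Fin d → Fin m := fun i => finFunctionFinEquiv.symm (Fin.castLE hNm i) with hv
  set x : Fin N → EuclideanSpace ℝ (Fin d) := fun i => WithLp.toLp 2 (fun j => (v i j : ℝ) / m) with hxdef
  have hinj : Function.Injective v := fun i i' e => by
    have := finFunctionFinEquiv.symm.injective e
    exact Fin.castLE_injective hNm this
  have hx : ∀ i, x i ∈ Cube d := by
    intro i j
    constructor
    · exact div_nonneg (Nat.cast_nonneg _) hm0.le
    · rw [div_le_one hm0]
      exact_mod_cast (v i j).isLt.le
  have hdist : ∀ i i' : Fin N, i ≠ i' →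
      ENNReal.ofReal ((m : ℝ)⁻¹) ≤ edist (x i) (x i') := by
    intro i i' hne
    have hvne : v i ≠ v i' := fun e => hne (hinj e)
    obtain ⟨j, hj⟩ := Function.ne_iff.mp hvne
    have h1 : (1 : ℝ) ≤ |(v i j : ℝ) - (v i' j : ℝ)| := by
      have hne2 : (v i j : ℕ) ≠ (v i' j : ℕ) := fun e => hj (Fin.ext e)
      have hz : (1 : ℤ) ≤ |((v i j : ℕ) : ℤ) - ((v i' j : ℕ) : ℤ)| := by
        have hne3 : ((v i j : ℕ) : ℤ) - ((v i' j : ℕ) : ℤ) ≠ 0 := by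
          intro h0
          exact hne2 (by exact_mod_cast sub_eq_zero.mp h0)
        exact Int.one_le_abs hne3
      calc (1 : ℝ) = ((1 : ℤ) : ℝ) := by norm_num
        _ ≤ |((((v i j : ℕ) : ℤ) - ((v i' j : ℕ) : ℤ) : ℤ) : ℝ)| := by
            rw [← Int.cast_abs]; exact_mod_cast hz
        _ = |(v i j : ℝ) - (v i' j : ℝ)| := by push_cast; ring_nf
    have h2 : (m : ℝ)⁻¹ ≤ |x i j - x i' j| := by
      have he : x i j - x i' j = ((v i j : ℝ) - (v i' j : ℝ)) / m := by
        show (v i j : ℝ) / m - (v i' j : ℝ) / m = _; ring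
      rw [he, abs_div, abs_of_nonneg hm0.le, le_div_iff₀ hm0, inv_mul_cancel₀ hm0.ne']
      exact h1
    calc ENNReal.ofReal ((m:ℝ)⁻¹) ≤ ENNReal.ofReal (dist (x i) (x i')) :=
          ENNReal.ofReal_le_ofReal (le_trans h2 (coord_dist_le _ _ j))
      _ = edist (x i) (x i') := (edist_dist _ _).symm
  calc minTupleEnergy s k (Cube d) N ≤ tupleEnergy s k x :=
        iInf_le_of_le x (iInf_le_of_le hx le_rfl)
    _ ≤ ∑ _i : Fin N, (k : ℝ≥0∞) * (ENNReal.ofReal ((m:ℝ)⁻¹)) ^ (-s) := by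
        rw [tupleEnergy_eq s hs k]
        refine Finset.sum_le_sum fun i _ => topk_le_card_mul k ?_
        intro a ha
        rw [Multiset.mem_map] at ha
        obtain ⟨r, hr, rfl⟩ := ha
        rw [nbhd, Multiset.mem_map] at hr
        obtain ⟨j, hj, rfl⟩ := hr
        have hji : j ≠ i := (Finset.mem_erase.mp (Finset.mem_val.mp hj)).1
        exact rpow_neg_anti hs.le (hdist i j (Ne.symm hji))
    _ = (N : ℝ≥0∞) * (k : ℝ≥0∞) * (ENNReal.ofReal ((m:ℝ)⁻¹)) ^ (-s) := by
        rw [Finset.sum_const, Finset.card_univ, Fintype.card_fin, nsmul_eq_mul, mul_assoc]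

end Upper

section Lower

lemma cell_interval {m : ℕ} (hm : 1 ≤ m) {y : ℝ} (hy : y ∈ Set.Icc (0:ℝ) 1) :
    ((min (m-1) ⌊y * m⌋₊ : ℕ) : ℝ) / m ≤ y ∧
      y ≤ (((min (m-1) ⌊y * m⌋₊ : ℕ) : ℝ) + 1) / m := by
  have hm0 : (0:ℝ) < m := by exact_mod_cast hm
  have hy0 : 0 ≤ y * m := mul_nonneg hy.1 hm0.le
  by_cases h : ⌊y * m⌋₊ ≤ m - 1
  · rw [min_eq_right h]
    constructor
    · rw [div_le_iff₀ hm0]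
      exact Nat.floor_le hy0
    · rw [le_div_iff₀ hm0]
      exact (Nat.lt_floor_add_one (y*m)).le
  · push_neg at h
    rw [min_eq_left h.le]
    have hcast : ((m - 1 : ℕ) : ℝ) = (m : ℝ) - 1 := by
      push_cast [Nat.cast_sub hm]
      ring
    constructor
    · rw [div_le_iff₀ hm0]
      calc ((m - 1 : ℕ) : ℝ) ≤ (⌊y * m⌋₊ : ℝ) := by exact_mod_cast h.le
        _ ≤ y * m := Nat.floor_le hy0
    · rw [le_div_iff₀ hm0, hcast]
      have : y * m ≤ 1 * m := mul_le_mul_of_nonneg_right hy.2 hm0.le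
      linarith

lemma energy_lower {d : ℕ} {s : ℝ} (hs : 0 < s) {k : ℕ} (hk : 1 ≤ k)
    {N m : ℕ} (hm : 1 ≤ m) (x : Fin N → EuclideanSpace ℝ (Fin d)) (hx : ∀ i, x i ∈ Cube d) :
    ((N - m ^ d : ℕ) : ℝ≥0∞) * (ENNReal.ofReal (Real.sqrt d / m)) ^ (-s) ≤
      tupleEnergy s k x := by
  classical
  have hm0 : (0:ℝ) < m := by exact_mod_cast hm
  set c : Fin N → (Fin d → Fin m) := fun i j => ⟨min (m-1) ⌊x i j * m⌋₊, by omega⟩ with hc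
  have hdist : ∀ i i' : Fin N, c i = c i' → dist (x i) (x i') ≤ Real.sqrt d / m := by
    intro i i' he
    have hcoord : ∀ j, |x i j - x i' j| ≤ (m:ℝ)⁻¹ := by
      intro j
      have e1 := cell_interval hm (hx i j)
      have e2 := cell_interval hm (hx i' j)
      have hcc : (min (m-1) ⌊x i j * m⌋₊ : ℕ) = (min (m-1) ⌊x i' j * m⌋₊ : ℕ) := by
        have h3 := congrFun he j
        have := congrArg Fin.val h3
        simpa [hc] using this
      rw [hcc] at e1
      have key : (((min (m-1) ⌊x i' j * m⌋₊ : ℕ) : ℝ) + 1) / m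
          - ((min (m-1) ⌊x i' j * m⌋₊ : ℕ) : ℝ) / m = (m:ℝ)⁻¹ := by
        field_simp
        ring
      rw [abs_sub_le_iff]
      constructor
      · linarith [e1.1, e1.2, e2.1, e2.2]
      · linarith [e1.1, e1.2, e2.1, e2.2]
    rw [EuclideanSpace.dist_eq]
    have h5 : ∀ j ∈ (Finset.univ : Finset (Fin d)), dist (x i j) (x i' j) ^ 2 ≤ ((m:ℝ)⁻¹) ^ 2 := by
      intro j _
      rw [Real.dist_eq]
      exact pow_le_pow_left₀ (abs_nonneg _) (hcoord j) 2
    have hsq : (Real.sqrt d / m) ^ 2 = (d : ℝ) * ((m:ℝ)⁻¹) ^ 2 := by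
      rw [div_pow, Real.sq_sqrt (Nat.cast_nonneg d)]
      field_simp
    calc Real.sqrt (∑ j, dist (x i j) (x i' j) ^ 2)
        ≤ Real.sqrt (∑ _j : Fin d, ((m:ℝ)⁻¹) ^ 2) :=
          Real.sqrt_le_sqrt (Finset.sum_le_sum h5)
      _ = Real.sqrt ((d:ℝ) * ((m:ℝ)⁻¹) ^ 2) := by
          rw [Finset.sum_const, Finset.card_univ, Fintype.card_fin, nsmul_eq_mul]
      _ = Real.sqrt ((Real.sqrt d / m) ^ 2) := by rw [hsq]
      _ = Real.sqrt d / m := Real.sqrt_sq (div_nonneg (Real.sqrt_nonneg _) hm0.le)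
  set S : Finset (Fin N) := Finset.univ.filter (fun i => ∀ i', c i' = c i → i' = i) with hS
  have hScard : S.card ≤ m ^ d := by
    have hinj : Set.InjOn c S := by
      intro i₁ h₁ i₂ h₂ he
      rw [hS] at h₁
      simp only [Finset.coe_filter, Set.mem_setOf_eq] at h₁
      exact (h₁.2 i₂ he.symm).symm
    calc S.card ≤ Fintype.card (Fin d → Fin m) := Finset.card_le_card_of_injOn c
          (fun _ _ => Finset.mem_univ _) hinj
      _ = m ^ d := by rw [Fintype.card_fun, Fintype.card_fin, Fintype.card_fin]
  have hbound : ∀ i ∈ Sᶜ, (ENNReal.ofReal (Real.sqrt d / m)) ^ (-s) ≤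
      topk k ((nbhd x i).map (fun r => r ^ (-s))) := by
    intro i hi
    rw [Finset.mem_compl, hS, Finset.mem_filter] at hi
    push_neg at hi
    obtain ⟨i', hi'c, hi'ne⟩ := hi (Finset.mem_univ i)
    have hmem : edist (x i) (x i') ∈ nbhd x i := by
      rw [nbhd]
      exact Multiset.mem_map_of_mem _ (Finset.mem_val.mpr (Finset.mem_erase.mpr
        ⟨hi'ne, Finset.mem_univ _⟩))
    have hle : edist (x i) (x i') ≤ ENNReal.ofReal (Real.sqrt d / m) := by
      rw [edist_dist]
      exact ENNReal.ofReal_le_ofReal (hdist i i' hi'c.symm)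
    exact le_trans (rpow_neg_anti hs.le hle)
      (le_topk hk (Multiset.mem_map_of_mem _ hmem))
  calc ((N - m ^ d : ℕ) : ℝ≥0∞) * (ENNReal.ofReal (Real.sqrt d / m)) ^ (-s)
      ≤ (Sᶜ.card : ℝ≥0∞) * (ENNReal.ofReal (Real.sqrt d / m)) ^ (-s) := by
        refine mul_le_mul_left ?_ _
        have hcc : N - m ^ d ≤ Sᶜ.card := by
          rw [Finset.card_compl, Fintype.card_fin]
          omega
        exact_mod_cast hcc
    _ = ∑ _i ∈ Sᶜ, (ENNReal.ofReal (Real.sqrt d / m)) ^ (-s) := by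
        rw [Finset.sum_const, nsmul_eq_mul]
    _ ≤ ∑ i ∈ Sᶜ, topk k ((nbhd x i).map (fun r => r ^ (-s))) := Finset.sum_le_sum hbound
    _ ≤ ∑ i : Fin N, topk k ((nbhd x i).map (fun r => r ^ (-s))) :=
        Finset.sum_le_sum_of_subset (Finset.subset_univ _)
    _ = tupleEnergy s k x := (tupleEnergy_eq s hs k x).symm

end Lower
section Tiling

variable {d : ℕ}

/-- The corner offset of the subcube indexed by `c`. -/
noncomputable def tileT (m : ℕ) (δ : ℝ) (c : Fin d → Fin m) : EuclideanSpace ℝ (Fin d) :=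
  WithLp.toLp 2 (fun l => ((c l : ℝ) + δ/2) / m)

/-- The tiled configuration: in each of the `m^d` subcubes, a shrunk copy of `x`. -/
noncomputable def tileY (m : ℕ) (δ : ℝ) {n : ℕ} (x : Fin n → EuclideanSpace ℝ (Fin d)) :
    (Fin d → Fin m) × Fin n → EuclideanSpace ℝ (Fin d) :=
  fun p => tileT m δ p.1 + ((1 - δ)/m) • x p.2

lemma tileY_coord {m : ℕ} (δ : ℝ) {n : ℕ} (x : Fin n → EuclideanSpace ℝ (Fin d))
    (p : (Fin d → Fin m) × Fin n) (l : Fin d) :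
    tileY m δ x p l = ((p.1 l : ℝ) + δ/2) / m + (1 - δ)/m * x p.2 l := by
  simp [tileY, tileT, PiLp.add_apply, PiLp.smul_apply, smul_eq_mul]

lemma tileY_mem_cube {m : ℕ} (hm : 1 ≤ m) {δ : ℝ} (hδ0 : 0 < δ) (hδ1 : δ < 1) {n : ℕ}
    (x : Fin n → EuclideanSpace ℝ (Fin d)) (hx : ∀ j, x j ∈ Cube d)
    (p : (Fin d → Fin m) × Fin n) : tileY m δ x p ∈ Cube d := by
  intro l
  have hm0 : (0:ℝ) < m := by exact_mod_cast hm
  have hx1 := (hx p.2 l).1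
  have hx2 := (hx p.2 l).2
  have hcl : (p.1 l : ℝ) ≤ (m : ℝ) - 1 := by
    have h1 : (p.1 l : ℕ) ≤ m - 1 := Nat.le_sub_one_of_lt (p.1 l).isLt
    calc ((p.1 l : ℕ) : ℝ) ≤ ((m - 1 : ℕ) : ℝ) := by exact_mod_cast h1
      _ = (m:ℝ) - 1 := by rw [Nat.cast_sub hm]; norm_num
  rw [tileY_coord]
  constructor
  · have h1 : (0:ℝ) ≤ ((p.1 l : ℝ) + δ/2)/m := div_nonneg (by positivity) hm0.le
    have h2 : (0:ℝ) ≤ (1-δ)/m * x p.2 l :=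
      mul_nonneg (div_nonneg (by linarith) hm0.le) hx1
    linarith
  · calc ((p.1 l : ℝ) + δ/2) / m + (1 - δ)/m * x p.2 l
        ≤ ((p.1 l : ℝ) + δ/2) / m + (1 - δ)/m :=
          add_le_add_right (mul_le_of_le_one_right (div_nonneg (by linarith) hm0.le) hx2) _
      _ = ((p.1 l : ℝ) + δ/2 + (1 - δ)) / m := (add_div _ _ _).symm
      _ ≤ 1 := by rw [div_le_one hm0]; linarith

lemma tileY_edist_same {m : ℕ} {δ : ℝ} (hδ1 : δ < 1) (hm : 1 ≤ m) {n : ℕ}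
    (x : Fin n → EuclideanSpace ℝ (Fin d)) (c : Fin d → Fin m) (j j' : Fin n) :
    edist (tileY m δ x (c, j)) (tileY m δ x (c, j')) =
      ENNReal.ofReal ((1 - δ)/m) * edist (x j) (x j') := by
  have hm0 : (0:ℝ) < m := by exact_mod_cast hm
  have ha : (0:ℝ) ≤ (1 - δ)/m := div_nonneg (by linarith) hm0.le
  calc edist (tileY m δ x (c, j)) (tileY m δ x (c, j'))
      = edist (((1 - δ)/m) • x j) (((1 - δ)/m) • x j') := by
        rw [tileY, tileY]
        exact edist_add_left _ _ _
    _ = ‖(1 - δ)/m‖₊ • edist (x j) (x j') := edist_smul₀ _ _ _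
    _ = ENNReal.ofReal ((1 - δ)/m) * edist (x j) (x j') := by
        rw [← Real.enorm_eq_ofReal ha]
        rfl

lemma tileY_edist_other {m : ℕ} (hm : 1 ≤ m) {δ : ℝ} (hδ0 : 0 < δ) (hδ1 : δ < 1) {n : ℕ}
    (x : Fin n → EuclideanSpace ℝ (Fin d)) (hx : ∀ j, x j ∈ Cube d)
    {c c' : Fin d → Fin m} (j j' : Fin n) (hcc : c ≠ c') :
    ENNReal.ofReal (δ/m) ≤ edist (tileY m δ x (c, j)) (tileY m δ x (c', j')) := by
  have hm0 : (0:ℝ) < m := by exact_mod_cast hm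
  obtain ⟨l, hl⟩ := Function.ne_iff.mp hcc
  have key : ∀ (cc : Fin d → Fin m) (jj : Fin n),
      ((cc l : ℝ) + δ/2)/m ≤ tileY m δ x (cc, jj) l ∧
        tileY m δ x (cc, jj) l ≤ ((cc l : ℝ) + 1 - δ/2)/m := by
    intro cc jj
    rw [tileY_coord]
    have hx1 := (hx jj l).1
    have hx2 := (hx jj l).2
    have ha : (0:ℝ) ≤ (1 - δ)/m := div_nonneg (by linarith) hm0.le
    constructor
    · have h2 : (0:ℝ) ≤ (1-δ)/m * x jj l := mul_nonneg ha hx1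
      linarith
    · calc ((cc l : ℝ) + δ/2) / m + (1 - δ)/m * x jj l
          ≤ ((cc l : ℝ) + δ/2) / m + (1 - δ)/m :=
            add_le_add_right (mul_le_of_le_one_right ha hx2) _
        _ = ((cc l : ℝ) + δ/2 + (1 - δ)) / m := (add_div _ _ _).symm
        _ = ((cc l : ℝ) + 1 - δ/2) / m := by ring_nf
  have main : ∀ (a a' : Fin d → Fin m) (b b' : Fin n), (a l : ℝ) + 1 ≤ (a' l : ℝ) →
      δ/m ≤ tileY m δ x (a', b') l - tileY m δ x (a, b) l := by
    intro a a' b b' hle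
    have k1 := (key a b).2
    have k2 := (key a' b').1
    have hd : δ ≤ ((a' l : ℝ) + δ/2) - ((a l : ℝ) + 1 - δ/2) := by linarith
    have hdd : δ/m ≤ (((a' l : ℝ) + δ/2) - ((a l : ℝ) + 1 - δ/2))/m := by gcongr
    have hsub : ((a' l : ℝ) + δ/2)/m - ((a l : ℝ) + 1 - δ/2)/m
        = (((a' l : ℝ) + δ/2) - ((a l : ℝ) + 1 - δ/2))/m := by ring
    linarith
  have hne : (c l : ℕ) ≠ (c' l : ℕ) := fun e => hl (Fin.ext e)
  have hgap : δ/m ≤ |tileY m δ x (c, j) l - tileY m δ x (c', j') l| := by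
    rcases lt_or_gt_of_ne hne with h | h
    · have hle : (c l : ℝ) + 1 ≤ (c' l : ℝ) := by exact_mod_cast h
      rw [abs_sub_comm]
      exact le_trans (main c c' j j' hle) (le_abs_self _)
    · have hle : (c' l : ℝ) + 1 ≤ (c l : ℝ) := by exact_mod_cast h
      exact le_trans (main c' c j' j hle) (le_abs_self _)
  calc ENNReal.ofReal (δ/m)
      ≤ ENNReal.ofReal (dist (tileY m δ x (c, j)) (tileY m δ x (c', j'))) :=
        ENNReal.ofReal_le_ofReal (le_trans hgap (coord_dist_le _ _ l))
    _ = _ := (edist_dist _ _).symm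

end Tiling
section TilingEnergy

variable {d : ℕ}

lemma tiling_energy {s : ℝ} (hs : 0 < s) (k : ℕ) {n m : ℕ} (hm : 1 ≤ m)
    {δ : ℝ} (hδ0 : 0 < δ) (hδ1 : δ < 1)
    (x : Fin n → EuclideanSpace ℝ (Fin d)) (hx : ∀ j, x j ∈ Cube d) :
    minTupleEnergy s k (Cube d) (m ^ d * n) ≤
      ((m ^ d : ℕ) : ℝ≥0∞) * ((ENNReal.ofReal ((1 - δ)/m)) ^ (-s) * tupleEnergy s k x
        + (n : ℝ≥0∞) * ((k : ℝ≥0∞) * (ENNReal.ofReal (δ/m)) ^ (-s))) := by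
  classical
  have hm0 : (0:ℝ) < m := by exact_mod_cast hm
  have hapos : (0:ℝ) < (1 - δ)/m := div_pos (by linarith) hm0
  have hgpos : (0:ℝ) < δ/m := div_pos hδ0 hm0
  set Y := tileY m δ x with hY
  set e : ((Fin d → Fin m) × Fin n) ≃ Fin (m ^ d * n) :=
    (finFunctionFinEquiv.prodCongr (Equiv.refl (Fin n))).trans finProdFinEquiv with he
  set y : Fin (m ^ d * n) → EuclideanSpace ℝ (Fin d) := fun i => Y (e.symm i) with hy
  have hymem : ∀ i, y i ∈ Cube d := fun i => tileY_mem_cube hm hδ0 hδ1 x hx _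
  have step1 : minTupleEnergy s k (Cube d) (m ^ d * n) ≤ tupleEnergy s k y :=
    iInf_le_of_le y (iInf_le_of_le hymem le_rfl)
  have step2 : tupleEnergy s k y = ∑ p : (Fin d → Fin m) × Fin n,
      topk k (((Finset.univ.erase p).val.map (fun q => edist (Y p) (Y q))).map
        (fun r => r ^ (-s))) := by
    rw [tupleEnergy_eq s hs k]
    refine Fintype.sum_equiv e.symm _ _ fun i => ?_
    congr 1
    have h1 : nbhd y i = ((Finset.univ.erase i).map e.symm.toEmbedding).val.map
        (fun q => edist (Y (e.symm i)) (Y q)) := by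
      rw [nbhd, Finset.map_val, Multiset.map_map]
      rfl
    rw [h1, Finset.map_erase, Finset.map_univ_equiv]
    rfl
  refine le_trans (step1.trans_eq step2) ?_
  have step3 : ∀ (c : Fin d → Fin m) (j : Fin n),
      topk k (((Finset.univ.erase (c, j)).val.map (fun q => edist (Y (c, j)) (Y q))).map
        (fun r => r ^ (-s))) ≤
      (ENNReal.ofReal ((1 - δ)/m)) ^ (-s) *
          topk k ((nbhd x j).map (fun r => r ^ (-s)))
        + (k : ℝ≥0∞) * (ENNReal.ofReal (δ/m)) ^ (-s) := by
    intro c j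
    set own : Finset ((Fin d → Fin m) × Fin n) := ({c} : Finset (Fin d → Fin m)) ×ˢ
      (Finset.univ.erase j) with hown
    set other : Finset ((Fin d → Fin m) × Fin n) := (Finset.univ.erase c) ×ˢ
      (Finset.univ : Finset (Fin n)) with hother
    have hdisj : Disjoint own other := by
      rw [Finset.disjoint_left]
      rintro ⟨c', j'⟩ h1 h2
      rw [hown, Finset.mem_product, Finset.mem_singleton] at h1
      rw [hother, Finset.mem_product, Finset.mem_erase] at h2
      exact h2.1.1 h1.1
    have hsplit : Finset.univ.erase (c, j) = own.disjUnion other hdisj := by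
      ext ⟨c', j'⟩
      rw [Finset.mem_disjUnion, hown, hother]
      simp only [Finset.mem_erase, Finset.mem_product, Finset.mem_singleton,
        Finset.mem_univ, and_true, true_and, ne_eq, Prod.mk.injEq, not_and]
      tauto
    have hval : (Finset.univ.erase (c, j)).val = own.val + other.val := by
      rw [hsplit]
      rfl
    set a : ℝ≥0∞ := ENNReal.ofReal ((1 - δ)/m) with ha
    set A' : ℝ≥0∞ := a ^ (-s) with hA'
    have hA'0 : A' ≠ 0 := (ENNReal.rpow_pos (ENNReal.ofReal_pos.mpr hapos)
      ENNReal.ofReal_ne_top).ne'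
    have hA't : A' ≠ ⊤ := by
      rw [hA', ENNReal.rpow_neg]
      exact ENNReal.inv_ne_top.mpr
        (ENNReal.rpow_pos (ENNReal.ofReal_pos.mpr hapos) ENNReal.ofReal_ne_top).ne'
    have hownm : own.val.map (fun q => edist (Y (c, j)) (Y q))
        = (nbhd x j).map (fun r => a * r) := by
      rw [hown, Finset.singleton_product, Finset.map_val, Multiset.map_map, nbhd,
        Multiset.map_map]
      refine Multiset.map_congr rfl fun j' _ => ?_
      show edist (Y (c, j)) (Y (c, j')) = a * edist (x j) (x j')
      exact tileY_edist_same hδ1 hm x c j j'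
    have hmm : ((nbhd x j).map (fun r => a * r)).map (fun r => r ^ (-s))
        = ((nbhd x j).map (fun r => r ^ (-s))).map (fun r => A' * r) := by
      rw [Multiset.map_map, Multiset.map_map]
      refine Multiset.map_congr rfl fun r hr => ?_
      show (a * r) ^ (-s) = A' * r ^ (-s)
      have hrt : r ≠ ⊤ := by
        rw [nbhd, Multiset.mem_map] at hr
        obtain ⟨j', _, rfl⟩ := hr
        exact edist_ne_top _ _
      rw [hA']
      exact ENNReal.mul_rpow_of_ne_top ENNReal.ofReal_ne_top hrt (-s)
    have h_own : topk k ((own.val.map (fun q => edist (Y (c, j)) (Y q))).map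
        (fun r => r ^ (-s))) ≤ A' * topk k ((nbhd x j).map (fun r => r ^ (-s))) := by
      rw [hownm, hmm]
      exact topk_map_mul_le k hA'0 hA't _
    have h_other : topk k ((other.val.map (fun q => edist (Y (c, j)) (Y q))).map
        (fun r => r ^ (-s))) ≤ (k : ℝ≥0∞) * (ENNReal.ofReal (δ/m)) ^ (-s) := by
      refine topk_le_card_mul k ?_
      intro b hb
      rw [Multiset.mem_map] at hb
      obtain ⟨r, hr, rfl⟩ := hb
      rw [Multiset.mem_map] at hr
      obtain ⟨q, hq, rfl⟩ := hr
      rw [Finset.mem_val, hother, Finset.mem_product, Finset.mem_erase] at hq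
      have hq1 : q.1 ≠ c := hq.1.1
      have hbound := tileY_edist_other hm hδ0 hδ1 x hx (c := c) (c' := q.1) j q.2
        (Ne.symm hq1)
      refine rpow_neg_anti hs.le ?_
      simpa using hbound
    calc topk k (((Finset.univ.erase (c, j)).val.map (fun q => edist (Y (c, j)) (Y q))).map
          (fun r => r ^ (-s)))
        = topk k ((own.val.map (fun q => edist (Y (c, j)) (Y q))).map (fun r => r ^ (-s))
            + (other.val.map (fun q => edist (Y (c, j)) (Y q))).map (fun r => r ^ (-s))) := by
          rw [hval, Multiset.map_add, Multiset.map_add]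
      _ ≤ _ + _ := topk_add_le k _ _
      _ ≤ _ := add_le_add h_own h_other
  calc ∑ p : (Fin d → Fin m) × Fin n,
        topk k (((Finset.univ.erase p).val.map (fun q => edist (Y p) (Y q))).map
          (fun r => r ^ (-s)))
      ≤ ∑ p : (Fin d → Fin m) × Fin n,
          ((ENNReal.ofReal ((1 - δ)/m)) ^ (-s) *
            topk k ((nbhd x p.2).map (fun r => r ^ (-s)))
          + (k : ℝ≥0∞) * (ENNReal.ofReal (δ/m)) ^ (-s)) := by
        refine Finset.sum_le_sum fun p _ => ?_
        have := step3 p.1 p.2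
        simpa using this
    _ = ∑ c : Fin d → Fin m, ∑ j : Fin n,
          ((ENNReal.ofReal ((1 - δ)/m)) ^ (-s) *
            topk k ((nbhd x j).map (fun r => r ^ (-s)))
          + (k : ℝ≥0∞) * (ENNReal.ofReal (δ/m)) ^ (-s)) := Fintype.sum_prod_type _
    _ = ((m ^ d : ℕ) : ℝ≥0∞) * ((ENNReal.ofReal ((1 - δ)/m)) ^ (-s) * tupleEnergy s k x
          + (n : ℝ≥0∞) * ((k : ℝ≥0∞) * (ENNReal.ofReal (δ/m)) ^ (-s))) := by
        have hinner : ∀ c : Fin d → Fin m, ∑ j : Fin n,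
            ((ENNReal.ofReal ((1 - δ)/m)) ^ (-s) *
              topk k ((nbhd x j).map (fun r => r ^ (-s)))
            + (k : ℝ≥0∞) * (ENNReal.ofReal (δ/m)) ^ (-s))
            = (ENNReal.ofReal ((1 - δ)/m)) ^ (-s) * tupleEnergy s k x
              + (n : ℝ≥0∞) * ((k : ℝ≥0∞) * (ENNReal.ofReal (δ/m)) ^ (-s)) := by
          intro c
          rw [Finset.sum_add_distrib, ← Finset.mul_sum, Finset.sum_const, Finset.card_univ,
            Fintype.card_fin, tupleEnergy_eq s hs k, nsmul_eq_mul]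
        rw [Finset.sum_congr rfl (fun c _ => hinner c), Finset.sum_const, Finset.card_univ,
          nsmul_eq_mul]
        congr 1
        rw [Fintype.card_fun, Fintype.card_fin, Fintype.card_fin]

end TilingEnergy
section TilingMin

lemma tiling_min {d : ℕ} {s : ℝ} (hs : 0 < s) (k : ℕ) {n m : ℕ} (hm : 1 ≤ m)
    {δ : ℝ} (hδ0 : 0 < δ) (hδ1 : δ < 1) :
    minTupleEnergy s k (Cube d) (m ^ d * n) ≤
      ((m ^ d : ℕ) : ℝ≥0∞) * ((ENNReal.ofReal ((1 - δ)/m)) ^ (-s) *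
          minTupleEnergy s k (Cube d) n
        + (n : ℝ≥0∞) * ((k : ℝ≥0∞) * (ENNReal.ofReal (δ/m)) ^ (-s))) := by
  have hm0 : (0:ℝ) < m := by exact_mod_cast hm
  have hapos : (0:ℝ) < (1 - δ)/m := div_pos (by linarith) hm0
  set a : ℝ≥0∞ := (ENNReal.ofReal ((1 - δ)/m)) ^ (-s) with ha
  set M : ℝ≥0∞ := ((m ^ d : ℕ) : ℝ≥0∞) with hM
  set K : ℝ≥0∞ := (n : ℝ≥0∞) * ((k : ℝ≥0∞) * (ENNReal.ofReal (δ/m)) ^ (-s)) with hK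
  set En := minTupleEnergy s k (Cube d) n with hEn
  have ha0 : a ≠ 0 := (ENNReal.rpow_pos (ENNReal.ofReal_pos.mpr hapos)
    ENNReal.ofReal_ne_top).ne'
  have hat : a ≠ ⊤ := by
    rw [ha, ENNReal.rpow_neg]
    exact ENNReal.inv_ne_top.mpr
      (ENNReal.rpow_pos (ENNReal.ofReal_pos.mpr hapos) ENNReal.ofReal_ne_top).ne'
  have hM0 : M ≠ 0 := by
    rw [hM]
    exact_mod_cast (Nat.pos_of_ne_zero (by positivity)).ne'
  have hMt : M ≠ ⊤ := ENNReal.natCast_ne_top _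
  by_cases htop : En = ⊤
  · rw [htop, ENNReal.mul_top ha0, top_add, ENNReal.mul_top hM0]
    exact le_top
  · refine ENNReal.le_of_forall_pos_le_add fun ε hε hfin => ?_
    set ε' : ℝ≥0∞ := (ε : ℝ≥0∞) / (M * a) with hε'
    have hMa0 : M * a ≠ 0 := mul_ne_zero hM0 ha0
    have hMat : M * a ≠ ⊤ := ENNReal.mul_ne_top hMt hat
    have hε'0 : ε' ≠ 0 := by
      rw [hε', ne_eq, ENNReal.div_eq_zero_iff]
      push_neg
      exact ⟨by exact_mod_cast hε.ne', hMat⟩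
    have hlt : En < En + ε' := ENNReal.lt_add_right htop hε'0
    rw [hEn, minTupleEnergy] at hlt
    obtain ⟨x, hx1⟩ := iInf_lt_iff.mp hlt
    obtain ⟨hx, hx2⟩ := iInf_lt_iff.mp hx1
    calc minTupleEnergy s k (Cube d) (m ^ d * n)
        ≤ M * (a * tupleEnergy s k x + K) := tiling_energy hs k hm hδ0 hδ1 x hx
      _ ≤ M * (a * (En + ε') + K) :=
          mul_le_mul_right (add_le_add_left (mul_le_mul_right hx2.le a) K) M
      _ = M * (a * En + K) + (M * a) * ε' := by ring
      _ ≤ M * (a * En + K) + ε := add_le_add_right ENNReal.mul_div_le _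
end TilingMin
section Phi

/-- Normalized minimal energy. -/
noncomputable def phi (d : ℕ) (s : ℝ) (k : ℕ) (N : ℕ) : ℝ≥0∞ :=
  minTupleEnergy s k (Cube d) N / ENNReal.ofReal ((N : ℝ) ^ (1 + s / d))

lemma Dpos {d : ℕ} {s : ℝ} {N : ℕ} (hN : 1 ≤ N) :
    0 < ENNReal.ofReal ((N : ℝ) ^ (1 + s / d)) := by
  have : (0:ℝ) < (N : ℝ) ^ (1 + s / d) :=
    Real.rpow_pos_of_pos (by exact_mod_cast hN) _
  exact ENNReal.ofReal_pos.mpr this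

lemma phi_upper {d : ℕ} (hd : 0 < d) {s : ℝ} (hs : 0 < s) (k : ℕ) {N : ℕ} (hN : 1 ≤ N) :
    phi d s k N ≤ ENNReal.ofReal ((k : ℝ) * 2 ^ s) := by
  have hN0 : (0:ℝ) < N := by exact_mod_cast hN
  set v : ℝ := (N : ℝ) ^ ((d : ℝ)⁻¹) with hv
  have hv0 : 0 < v := Real.rpow_pos_of_pos hN0 _
  have hv1 : 1 ≤ v := by
    rw [hv]
    calc (1:ℝ) = (1:ℝ) ^ ((d:ℝ)⁻¹) := (Real.one_rpow _).symm
      _ ≤ (N : ℝ) ^ ((d:ℝ)⁻¹) :=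
        Real.rpow_le_rpow zero_le_one (by exact_mod_cast hN) (by positivity)
  set m : ℕ := ⌈v⌉₊ with hmdef
  have hm : 1 ≤ m := Nat.ceil_pos.mpr hv0
  have hm0 : (0:ℝ) < m := by exact_mod_cast hm
  have hNm : N ≤ m ^ d := by
    have h1 : (N:ℝ) = v ^ d := by
      rw [hv, Real.rpow_inv_natCast_pow hN0.le hd.ne']
    have h2 : (N:ℝ) ≤ (m:ℝ) ^ d := by
      rw [h1]
      exact pow_le_pow_left₀ hv0.le (Nat.le_ceil v) d
    exact_mod_cast h2
  have hms : (m:ℝ) ^ s ≤ 2 ^ s * (N:ℝ) ^ (s / d) := by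
    have h1 : (m:ℝ) ≤ 2 * v := by
      have h2 := Nat.ceil_lt_add_one hv0.le
      linarith
    calc (m:ℝ) ^ s ≤ (2*v) ^ s := Real.rpow_le_rpow hm0.le h1 hs.le
      _ = 2 ^ s * v ^ s := Real.mul_rpow (by norm_num) hv0.le
      _ = 2 ^ s * (N:ℝ) ^ (s / d) := by
          rw [hv, ← Real.rpow_mul hN0.le, inv_mul_eq_div]
  have hE : minTupleEnergy s k (Cube d) N ≤
      ENNReal.ofReal ((k:ℝ) * 2 ^ s * (N:ℝ) ^ (1 + s / d)) := by
    calc minTupleEnergy s k (Cube d) N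
        ≤ (N : ℝ≥0∞) * (k : ℝ≥0∞) * (ENNReal.ofReal ((m : ℝ)⁻¹)) ^ (-s) :=
          energy_upper hs k hm hNm
      _ = ENNReal.ofReal ((N:ℝ) * k * (m:ℝ) ^ s) := by
          rw [ENNReal.ofReal_rpow_of_pos (by positivity)]
          rw [Real.inv_rpow hm0.le, Real.rpow_neg hm0.le, inv_inv]
          rw [ENNReal.ofReal_mul (by positivity), ENNReal.ofReal_mul (by positivity)]
          rw [ENNReal.ofReal_natCast, ENNReal.ofReal_natCast]
      _ ≤ ENNReal.ofReal ((k:ℝ) * 2 ^ s * (N:ℝ) ^ (1 + s / d)) := by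
          refine ENNReal.ofReal_le_ofReal ?_
          calc (N:ℝ) * k * (m:ℝ) ^ s ≤ (N:ℝ) * k * (2 ^ s * (N:ℝ) ^ (s/d)) := by
                refine mul_le_mul_of_nonneg_left hms (by positivity)
            _ = (k:ℝ) * 2 ^ s * ((N:ℝ) * (N:ℝ) ^ (s/d)) := by ring
            _ = (k:ℝ) * 2 ^ s * (N:ℝ) ^ (1 + s / d) := by
                have idN : (N:ℝ) * (N:ℝ) ^ (s/d) = (N:ℝ) ^ (1 + s / d) := by
                  rw [Real.rpow_add hN0, Real.rpow_one]
                rw [idN]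
  rw [phi]
  rw [ENNReal.div_le_iff_le_mul (Or.inl (Dpos hN).ne') (Or.inl ENNReal.ofReal_ne_top)]
  calc minTupleEnergy s k (Cube d) N
      ≤ ENNReal.ofReal ((k:ℝ) * 2 ^ s * (N:ℝ) ^ (1 + s / d)) := hE
    _ = ENNReal.ofReal ((k:ℝ) * 2 ^ s) * ENNReal.ofReal ((N : ℝ) ^ (1 + s / d)) := by
        rw [← ENNReal.ofReal_mul (by positivity)]

lemma E_ne_top {d : ℕ} (hd : 0 < d) {s : ℝ} (hs : 0 < s) (k : ℕ) {N : ℕ} (hN : 1 ≤ N) :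
    minTupleEnergy s k (Cube d) N ≠ ⊤ := by
  have h := phi_upper hd hs k (N := N) hN
  rw [phi, ENNReal.div_le_iff_le_mul (Or.inl (Dpos hN).ne') (Or.inl ENNReal.ofReal_ne_top)] at h
  exact ne_top_of_le_ne_top (ENNReal.mul_ne_top ENNReal.ofReal_ne_top ENNReal.ofReal_ne_top) h

lemma phi_lower {d : ℕ} (hd : 0 < d) {s : ℝ} (hs : 0 < s) {k : ℕ} (hk : 1 ≤ k) {N : ℕ}
    (hN : 4 ^ d ≤ N) :
    ENNReal.ofReal ((1/2) * (4 * Real.sqrt d)^(-s)) ≤ phi d s k N := by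
  have hd0 : (0:ℝ) < d := by exact_mod_cast hd
  have hN1 : 1 ≤ N := le_trans (Nat.one_le_pow _ _ (by norm_num)) hN
  have hN0 : (0:ℝ) < N := by exact_mod_cast hN1
  set v : ℝ := (N : ℝ) ^ ((d : ℝ)⁻¹) with hv
  have hv0 : 0 < v := Real.rpow_pos_of_pos hN0 _
  have hvd : v ^ d = (N:ℝ) := Real.rpow_inv_natCast_pow hN0.le hd.ne'
  have hv4 : 4 ≤ v := by
    have h1 : ((4:ℝ) ^ d) ^ ((d:ℝ)⁻¹) ≤ (N:ℝ) ^ ((d:ℝ)⁻¹) :=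
      Real.rpow_le_rpow (by positivity) (by exact_mod_cast hN) (by positivity)
    rwa [Real.pow_rpow_inv_natCast (by norm_num) hd.ne'] at h1
  set m : ℕ := ⌊v / 2⌋₊ with hmdef
  have hm : 1 ≤ m := Nat.le_floor (by linarith)
  have hm0 : (0:ℝ) < m := by exact_mod_cast hm
  have hmle : (m:ℝ) ≤ v / 2 := Nat.floor_le (by linarith)
  have hmge : v / 4 ≤ (m:ℝ) := by
    have h1 : v / 2 < (m:ℝ) + 1 := Nat.lt_floor_add_one _
    linarith
  have hmd : (m:ℝ) ^ d ≤ (N:ℝ) / 2 := by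
    have h1 : (m:ℝ) ^ d ≤ (v/2) ^ d := pow_le_pow_left₀ hm0.le hmle d
    have h2 : (v/2) ^ d = v ^ d / 2 ^ d := div_pow v 2 d
    have h3 : (2:ℝ) ≤ 2 ^ d := by
      calc (2:ℝ) = 2 ^ 1 := (pow_one 2).symm
        _ ≤ 2 ^ d := pow_le_pow_right₀ (by norm_num) hd
    have h4 : v ^ d / 2 ^ d ≤ v ^ d / 2 := by
      apply div_le_div_of_nonneg_left (by positivity) (by norm_num) h3
    have h5 : (m:ℝ)^d ≤ v ^ d / 2 ^ d := h2 ▸ h1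
    rw [hvd] at h4 h5
    linarith
  have hmdN : m ^ d ≤ N := by
    have : (↑(m ^ d) : ℝ) ≤ N := by push_cast; nlinarith
    exact_mod_cast this
  have hsub : (N:ℝ) / 2 ≤ ((N - m ^ d : ℕ) : ℝ) := by
    rw [Nat.cast_sub hmdN]
    push_cast
    linarith
  have hsqd : (0:ℝ) < Real.sqrt d := Real.sqrt_pos.mpr hd0
  have hrpow : ENNReal.ofReal ((1/2) * (4 * Real.sqrt d)^(-s) * (N:ℝ) ^ (1 + s/d)) ≤
      minTupleEnergy s k (Cube d) N := by
    refine le_iInf fun x => le_iInf fun hx => ?_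
    refine le_trans ?_ (energy_lower hs hk hm x hx)
    have e1 : (ENNReal.ofReal (Real.sqrt d / m)) ^ (-s)
        = ENNReal.ofReal (((m:ℝ) / Real.sqrt d) ^ s) := by
      rw [ENNReal.ofReal_rpow_of_pos (by positivity)]
      congr 1
      rw [Real.rpow_neg (by positivity), ← Real.inv_rpow (by positivity), inv_div]
    rw [e1]
    have e2 : ((N - m^d : ℕ) : ℝ≥0∞) = ENNReal.ofReal ((N - m^d : ℕ) : ℝ) :=
      (ENNReal.ofReal_natCast _).symm
    rw [e2, ← ENNReal.ofReal_mul (by positivity)]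
    refine ENNReal.ofReal_le_ofReal ?_
    have key : (v / (4 * Real.sqrt d)) ^ s ≤ ((m:ℝ) / Real.sqrt d) ^ s := by
      refine Real.rpow_le_rpow (by positivity) ?_ hs.le
      rw [div_le_div_iff₀ (by positivity) (by positivity)]
      nlinarith [hmge, hsqd]
    have id1 : (1/2 : ℝ) * (4 * Real.sqrt d)^(-s) * (N:ℝ) ^ (1 + s/d)
        = ((N:ℝ)/2) * (v / (4 * Real.sqrt d)) ^ s := by
      rw [Real.div_rpow hv0.le (by positivity)]
      rw [Real.rpow_neg (by positivity)]
      have idv : v ^ s = (N:ℝ) ^ (s/d) := by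
        rw [hv, ← Real.rpow_mul hN0.le]
        ring_nf
      have idN : (N:ℝ) ^ (1 + s/d) = (N:ℝ) * (N:ℝ) ^ (s/d) := by
        rw [Real.rpow_add hN0, Real.rpow_one]
      rw [idv, idN]
      field_simp
    rw [id1]
    have h0 : (0:ℝ) ≤ (v / (4 * Real.sqrt d)) ^ s := by positivity
    have h1 : (0:ℝ) ≤ (N:ℝ)/2 := by positivity
    exact mul_le_mul hsub key h0 (by positivity)
  rw [phi]
  rw [ENNReal.le_div_iff_mul_le (Or.inl (Dpos hN1).ne') (Or.inl ENNReal.ofReal_ne_top)]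
  calc ENNReal.ofReal ((1/2) * (4 * Real.sqrt d)^(-s)) *
        ENNReal.ofReal ((N : ℝ) ^ (1 + s / d))
      = ENNReal.ofReal ((1/2) * (4 * Real.sqrt d)^(-s) * (N:ℝ) ^ (1 + s/d)) := by
        rw [← ENNReal.ofReal_mul (by positivity)]
    _ ≤ minTupleEnergy s k (Cube d) N := hrpow

end Phi
section PhiBound

open Filter

lemma core_eventually {c t : ℝ} (ht : 0 < t) :
    ∀ᶠ m : ℕ in atTop, ((m:ℝ)+1) ^ c ≤ (1+t) * (m:ℝ) ^ c := by
  have h1 : Tendsto (fun m : ℕ => (1 + (m:ℝ)⁻¹)) atTop (nhds 1) := by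
    have h0 := tendsto_inv_atTop_nhds_zero_nat (𝕜 := ℝ)
    have := (tendsto_const_nhds (x := (1:ℝ)) (f := atTop (α := ℕ))).add h0
    simpa using this
  have h2 : ContinuousAt (fun x : ℝ => x ^ c) 1 :=
    Real.continuousAt_rpow_const 1 c (Or.inl one_ne_zero)
  have h3 : Tendsto (fun m : ℕ => (1 + (m:ℝ)⁻¹) ^ c) atTop (nhds 1) := by
    have := h2.tendsto.comp h1
    simpa [Real.one_rpow, Function.comp_def] using this
  have h4 : ∀ᶠ m : ℕ in atTop, (1 + (m:ℝ)⁻¹) ^ c < 1 + t :=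
    h3.eventually_lt_const (by linarith)
  filter_upwards [h4, eventually_ge_atTop 1] with m hm hm1
  have hm0 : (0:ℝ) < m := by exact_mod_cast hm1
  have key : ((m:ℝ)+1) = (1 + (m:ℝ)⁻¹) * m := by field_simp
  calc ((m:ℝ)+1) ^ c = ((1 + (m:ℝ)⁻¹) * m) ^ c := by rw [← key]
    _ = (1 + (m:ℝ)⁻¹) ^ c * (m:ℝ) ^ c := Real.mul_rpow (by positivity) hm0.le
    _ ≤ (1+t) * (m:ℝ) ^ c := mul_le_mul_of_nonneg_right hm.le (Real.rpow_nonneg hm0.le c)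

set_option maxHeartbeats 1000000 in
lemma phi_bound {d : ℕ} (hd : 0 < d) {s : ℝ} (hs : 0 < s) {k : ℕ} (hk : 1 ≤ k)
    {t : ℝ} (ht0 : 0 < t) (ht1 : t < 1) {n : ℕ} (hn : 1 ≤ n) :
    ∀ᶠ N : ℕ in atTop, phi d s k N ≤
      ENNReal.ofReal ((1+t) * (1-t) ^ (-s)) * phi d s k n
        + ENNReal.ofReal ((1+t) * k * t ^ (-s) * (n:ℝ) ^ (-(s/(d:ℝ)))) := by
  classical
  have hd0 : (0:ℝ) < d := by exact_mod_cast hd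
  have hn0 : (0:ℝ) < n := by exact_mod_cast hn
  set c : ℝ := (d:ℝ) + s with hc
  set z₁ : ℝ := (1+t) * (1-t) ^ (-s) with hz₁
  set z₂ : ℝ := (1+t) * k * t ^ (-s) * (n:ℝ) ^ (-(s/(d:ℝ))) with hz₂
  obtain ⟨m₀, hm₀⟩ := eventually_atTop.mp (core_eventually (c := c) ht0)
  filter_upwards [eventually_ge_atTop (n * (m₀+1)^d), eventually_ge_atTop n]
    with N hNbig hNn
  have hN1 : 1 ≤ N := le_trans hn hNn
  have hN0 : (0:ℝ) < N := by exact_mod_cast hN1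
  set w : ℝ := ((N:ℝ)/n) ^ ((d:ℝ)⁻¹) with hw
  have hNn0 : (0:ℝ) < (N:ℝ)/n := div_pos hN0 hn0
  have hw0 : 0 < w := Real.rpow_pos_of_pos hNn0 _
  set m : ℕ := ⌊w⌋₊ with hmdef
  have hm₀1w : ((m₀+1 : ℕ):ℝ) ≤ w := by
    have h1 : ((m₀+1 : ℕ):ℝ)^(d:ℕ) ≤ (N:ℝ)/n := by
      rw [le_div_iff₀ hn0]
      calc ((m₀+1 : ℕ):ℝ)^(d:ℕ) * n = ((n * (m₀+1)^d : ℕ) : ℝ) := by push_cast; ring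
        _ ≤ N := by exact_mod_cast hNbig
    calc ((m₀+1 : ℕ):ℝ) = (((m₀+1 : ℕ):ℝ)^(d:ℕ)) ^ ((d:ℝ)⁻¹) :=
          (Real.pow_rpow_inv_natCast (by positivity) hd.ne').symm
      _ ≤ w := Real.rpow_le_rpow (by positivity) h1 (by positivity)
  have hm₀m : m₀ + 1 ≤ m := Nat.le_floor hm₀1w
  have hm1 : 1 ≤ m := by omega
  have hm0 : (0:ℝ) < m := by exact_mod_cast hm1
  have hcore : ((m:ℝ)+1) ^ c ≤ (1+t) * (m:ℝ) ^ c := hm₀ m (by omega)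
  have hwd : w ^ (d:ℕ) = (N:ℝ)/n := Real.rpow_inv_natCast_pow hNn0.le hd.ne'
  have hlowR : ((m:ℝ))^(d:ℕ) * n ≤ N := by
    have h1 : ((m:ℝ))^(d:ℕ) ≤ (N:ℝ)/n := by
      rw [← hwd]
      exact pow_le_pow_left₀ hm0.le (Nat.floor_le hw0.le) d
    rwa [le_div_iff₀ hn0] at h1
  have hlow : m ^ d * n ≤ N := by
    have : ((m ^ d * n : ℕ):ℝ) ≤ N := by push_cast; exact hlowR
    exact_mod_cast this
  have hhigh : N ≤ (m+1) ^ d * n := by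
    have h1 : (N:ℝ)/n ≤ ((m:ℝ)+1)^(d:ℕ) := by
      rw [← hwd]
      exact pow_le_pow_left₀ hw0.le (Nat.lt_floor_add_one w).le d
    have h2 : (N:ℝ) ≤ ((m:ℝ)+1)^(d:ℕ) * n := by
      rwa [div_le_iff₀ hn0] at h1
    have : (N:ℝ) ≤ (((m+1) ^ d * n : ℕ):ℝ) := by push_cast; exact h2
    exact_mod_cast this
  -- ENNReal quantities
  set En := minTupleEnergy s k (Cube d) n with hEn
  have hEfin : En ≠ ⊤ := E_ne_top hd hs k hn
  set a₁ : ℝ≥0∞ := (ENNReal.ofReal ((1 - t)/((m+1 : ℕ):ℝ))) ^ (-s) with ha₁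
  set g₁ : ℝ≥0∞ := (ENNReal.ofReal (t/((m+1 : ℕ):ℝ))) ^ (-s) with hg₁
  have hm10 : (0:ℝ) < (m:ℝ)+1 := by positivity
  -- real identities
  have hdc : (d:ℝ) * (1 + s/d) = c := by
    rw [hc]
    field_simp
  have hQ : ((m ^ d * n : ℕ):ℝ) ^ (1 + s/(d:ℝ)) = (m:ℝ) ^ c * (n:ℝ) ^ (1 + s/(d:ℝ)) := by
    push_cast
    rw [Real.mul_rpow (by positivity) (by positivity)]
    congr 1
    rw [← Real.rpow_natCast (m:ℝ) d, ← Real.rpow_mul hm0.le, hdc]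
  have id_c : ((m:ℝ)+1)^(d:ℕ) * ((m:ℝ)+1)^s = ((m:ℝ)+1)^c := by
    rw [← Real.rpow_natCast ((m:ℝ)+1) d, ← Real.rpow_add hm10]
  have id_a : ((1-t)/((m:ℝ)+1))^(-s) = (1-t)^(-s) * ((m:ℝ)+1)^s := by
    rw [Real.div_rpow (by linarith) hm10.le, Real.rpow_neg hm10.le s, div_eq_mul_inv, inv_inv]
  have id_g : (t/((m:ℝ)+1))^(-s) = t^(-s) * ((m:ℝ)+1)^s := by
    rw [Real.div_rpow ht0.le hm10.le, Real.rpow_neg hm10.le s, div_eq_mul_inv, inv_inv]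
  have id_n : (n:ℝ)^(-(s/(d:ℝ))) * (n:ℝ)^(1+s/(d:ℝ)) = (n:ℝ) := by
    rw [← Real.rpow_add hn0]
    have he : -(s/(d:ℝ)) + (1+s/d) = 1 := by ring
    rw [he, Real.rpow_one]
  -- real inequalities
  have RI1 : (((m+1)^d : ℕ):ℝ) * ((1-t)/((m:ℝ)+1))^(-s) ≤ z₁ * (m:ℝ)^c := by
    have hA0 : (0:ℝ) ≤ (1-t)^(-s) := Real.rpow_nonneg (by linarith) _
    calc (((m+1)^d : ℕ):ℝ) * ((1-t)/((m:ℝ)+1))^(-s)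
        = (1-t)^(-s) * (((m:ℝ)+1)^(d:ℕ) * ((m:ℝ)+1)^s) := by push_cast; rw [id_a]; ring
      _ = (1-t)^(-s) * ((m:ℝ)+1)^c := by rw [id_c]
      _ ≤ (1-t)^(-s) * ((1+t) * (m:ℝ)^c) := mul_le_mul_of_nonneg_left hcore hA0
      _ = z₁ * (m:ℝ)^c := by rw [hz₁]; ring
  have RI2 : (((m+1)^d : ℕ):ℝ) * ((n:ℝ) * ((k:ℝ) * (t/((m:ℝ)+1))^(-s)))
      ≤ z₂ * ((m ^ d * n : ℕ):ℝ) ^ (1 + s/(d:ℝ)) := by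
    have hG0 : (0:ℝ) ≤ (n:ℝ) * k * t^(-s) :=
      mul_nonneg (mul_nonneg hn0.le (by positivity)) (Real.rpow_nonneg ht0.le _)
    calc (((m+1)^d : ℕ):ℝ) * ((n:ℝ) * ((k:ℝ) * (t/((m:ℝ)+1))^(-s)))
        = ((n:ℝ) * k * t^(-s)) * (((m:ℝ)+1)^(d:ℕ) * ((m:ℝ)+1)^s) := by
          push_cast; rw [id_g]; ring
      _ = ((n:ℝ) * k * t^(-s)) * ((m:ℝ)+1)^c := by rw [id_c]
      _ ≤ ((n:ℝ) * k * t^(-s)) * ((1+t) * (m:ℝ)^c) := mul_le_mul_of_nonneg_left hcore hG0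
      _ = z₂ * ((m ^ d * n : ℕ):ℝ) ^ (1 + s/(d:ℝ)) := by
          rw [hQ, hz₂]
          calc ((n:ℝ) * k * t^(-s)) * ((1+t) * (m:ℝ)^c)
              = ((1+t) * k * t^(-s) * (m:ℝ)^c) * (n:ℝ) := by ring
            _ = ((1+t) * k * t^(-s) * (m:ℝ)^c) *
                  ((n:ℝ)^(-(s/(d:ℝ))) * (n:ℝ)^(1+s/(d:ℝ))) := by rw [id_n]
            _ = (1+t) * k * t^(-s) * (n:ℝ)^(-(s/(d:ℝ))) *
                  ((m:ℝ)^c * (n:ℝ)^(1+s/(d:ℝ))) := by ring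
  -- ENNReal conversions
  have hmc : ((m+1 : ℕ):ℝ) = (m:ℝ)+1 := by push_cast; ring
  have ha₁r : a₁ = ENNReal.ofReal (((1-t)/((m:ℝ)+1))^(-s)) := by
    rw [ha₁, hmc, ENNReal.ofReal_rpow_of_pos (div_pos (by linarith) hm10)]
  have hg₁r : g₁ = ENNReal.ofReal ((t/((m:ℝ)+1))^(-s)) := by
    rw [hg₁, hmc, ENNReal.ofReal_rpow_of_pos (div_pos ht0 hm10)]
  have hcast : (((m+1)^d : ℕ) : ℝ≥0∞) = ENNReal.ofReal (((m+1)^d : ℕ):ℝ) :=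
    (ENNReal.ofReal_natCast _).symm
  -- main chain
  have hphiN : phi d s k N = minTupleEnergy s k (Cube d) N /
      ENNReal.ofReal ((N : ℝ) ^ (1 + s / d)) := rfl
  rw [hphiN, ENNReal.div_le_iff_le_mul (Or.inl (Dpos hN1).ne') (Or.inl ENNReal.ofReal_ne_top)]
  have hphin : phi d s k n * ENNReal.ofReal ((n:ℝ) ^ (1 + s/(d:ℝ))) = En := by
    rw [phi]
    exact ENNReal.div_mul_cancel (Dpos hn).ne' ENNReal.ofReal_ne_top
  have hz₁0 : 0 ≤ z₁ := by
    rw [hz₁]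
    exact mul_nonneg (by linarith) (Real.rpow_nonneg (by linarith) _)
  have hz₂0 : 0 ≤ z₂ := by
    rw [hz₂]
    refine mul_nonneg (mul_nonneg (mul_nonneg (by linarith) (by positivity)) ?_) ?_
    · exact Real.rpow_nonneg ht0.le _
    · exact Real.rpow_nonneg hn0.le _
  have hsplitQ : ENNReal.ofReal (((m ^ d * n : ℕ):ℝ) ^ (1 + s/(d:ℝ)))
      = ENNReal.ofReal ((m:ℝ)^c) * ENNReal.ofReal ((n:ℝ)^(1+s/(d:ℝ))) := by
    rw [hQ, ENNReal.ofReal_mul (Real.rpow_nonneg hm0.le _)]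
  have hterm1 : ENNReal.ofReal z₁ * phi d s k n *
        ENNReal.ofReal (((m ^ d * n : ℕ):ℝ) ^ (1 + s/(d:ℝ)))
      = ENNReal.ofReal (z₁ * (m:ℝ)^c) * En := by
    rw [hsplitQ, ENNReal.ofReal_mul hz₁0]
    calc ENNReal.ofReal z₁ * phi d s k n *
          (ENNReal.ofReal ((m:ℝ)^c) * ENNReal.ofReal ((n:ℝ)^(1+s/(d:ℝ))))
        = ENNReal.ofReal z₁ * ENNReal.ofReal ((m:ℝ)^c) *
            (phi d s k n * ENNReal.ofReal ((n:ℝ)^(1+s/(d:ℝ)))) := by ring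
      _ = ENNReal.ofReal z₁ * ENNReal.ofReal ((m:ℝ)^c) * En := by rw [hphin]
  calc minTupleEnergy s k (Cube d) N
      ≤ minTupleEnergy s k (Cube d) ((m+1) ^ d * n) := minTupleEnergy_mono hs k _ hhigh
    _ ≤ (((m+1) ^ d : ℕ) : ℝ≥0∞) * (a₁ * En
          + (n : ℝ≥0∞) * ((k : ℝ≥0∞) * g₁)) := tiling_min hs k (by omega) ht0 ht1
    _ = (((m+1) ^ d : ℕ) : ℝ≥0∞) * a₁ * En
          + (((m+1) ^ d : ℕ) : ℝ≥0∞) * ((n : ℝ≥0∞) * ((k : ℝ≥0∞) * g₁)) := by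
        rw [mul_add, ← mul_assoc]
    _ ≤ ENNReal.ofReal (z₁ * (m:ℝ)^c) * En
          + ENNReal.ofReal (z₂ * ((m ^ d * n : ℕ):ℝ) ^ (1 + s/(d:ℝ))) := by
        refine add_le_add ?_ ?_
        · refine mul_le_mul_left ?_ En
          rw [hcast, ha₁r, ← ENNReal.ofReal_mul (by positivity)]
          refine ENNReal.ofReal_le_ofReal ?_
          exact RI1
        · rw [hcast, hg₁r]
          have e1 : (n : ℝ≥0∞) = ENNReal.ofReal ((n:ℕ):ℝ) := (ENNReal.ofReal_natCast _).symm
          have e2 : ((k:ℕ) : ℝ≥0∞) = ENNReal.ofReal ((k:ℕ):ℝ) := (ENNReal.ofReal_natCast _).symm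
          rw [e1, e2]
          rw [← ENNReal.ofReal_mul (by positivity), ← ENNReal.ofReal_mul (by positivity),
            ← ENNReal.ofReal_mul (by positivity)]
          exact ENNReal.ofReal_le_ofReal RI2
    _ = (ENNReal.ofReal z₁ * phi d s k n + ENNReal.ofReal z₂) *
          ENNReal.ofReal (((m ^ d * n : ℕ):ℝ) ^ (1 + s/(d:ℝ))) := by
        rw [add_mul, hterm1, ← ENNReal.ofReal_mul hz₂0]
    _ ≤ (ENNReal.ofReal z₁ * phi d s k n + ENNReal.ofReal z₂) *
          ENNReal.ofReal ((N : ℝ) ^ (1 + s / d)) := by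
        refine mul_le_mul_right (ENNReal.ofReal_le_ofReal ?_) _
        refine Real.rpow_le_rpow (by positivity) ?_ (by positivity)
        exact_mod_cast hlow

end PhiBound
section Final

open Filter

lemma exists_t {s : ℝ} (hs : 0 < s) {u : ℝ} (hu : 0 < u) :
    ∃ t : ℝ, 0 < t ∧ t < 1 ∧ (1+t)*(1-t)^(-s) ≤ 1 + u := by
  have h3 := Real.continuousAt_rpow_const 1 (-s) (Or.inl one_ne_zero)
  have h4 : ContinuousAt (fun t : ℝ => 1-t) 0 := (continuous_const.sub continuous_id).continuousAt
  have h5 : ContinuousAt ((fun x : ℝ => x ^ (-s)) ∘ (fun t : ℝ => 1-t)) 0 :=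
    ContinuousAt.comp (by simpa using h3) h4
  have h2 : ContinuousAt (fun t : ℝ => (1-t)^(-s)) 0 := by
    simpa [Function.comp_def] using h5
  have h1 : ContinuousAt (fun t : ℝ => (1+t)) 0 :=
    (continuous_const.add continuous_id).continuousAt
  have hcont : ContinuousAt (fun t : ℝ => (1+t)*(1-t)^(-s)) 0 := h1.mul h2
  have hval : (1+(0:ℝ))*(1-(0:ℝ))^(-s) = 1 := by norm_num [Real.one_rpow]
  have htend : Tendsto (fun t : ℝ => (1+t)*(1-t)^(-s)) (nhdsWithin (0:ℝ) (Set.Ioi 0)) (nhds 1) := by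
    have h := hcont.tendsto.mono_left (nhdsWithin_le_nhds (s := Set.Ioi (0:ℝ)))
    simpa [hval] using h
  have h6 : ∀ᶠ t in nhdsWithin (0:ℝ) (Set.Ioi 0), (1+t)*(1-t)^(-s) < 1 + u :=
    htend.eventually_lt_const (by linarith)
  have h7 : Set.Ioo (0:ℝ) 1 ∈ nhdsWithin (0:ℝ) (Set.Ioi 0) :=
    Ioo_mem_nhdsGT_of_mem (by constructor <;> norm_num)
  obtain ⟨t, ht1, ht2⟩ := (h6.and h7).exists
  exact ⟨t, ht2.1, ht2.2, ht1.le⟩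

lemma quarters (x : ℝ≥0∞) : x/4 + x/2 + x/4 = x := by
  have h1 : x/4 + x/4 = x/2 := by
    rw [ENNReal.div_add_div_same, ← two_mul]
    have h2 : (4:ℝ≥0∞) = 2 * 2 := by norm_num
    rw [h2, ENNReal.mul_div_mul_left _ _ (by norm_num) (by norm_num)]
  calc x/4 + x/2 + x/4 = (x/4 + x/4) + x/2 := by ring
    _ = x/2 + x/2 := by rw [h1]
    _ = x := ENNReal.add_halves x

/-- Existence, positivity and finiteness of the asymptotic constant
`C_{s,d}^k = lim_N E_s^{k,*}([0,1]^d, N) / N^{1+s/d}`. -/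
theorem kNN_constant_exists (d : ℕ) (hd : 0 < d) (s : ℝ) (hs : 0 < s) (k : ℕ)
    (hk : 1 ≤ k) :
    ∃ C : ℝ≥0∞, 0 < C ∧ C ≠ ⊤ ∧
      Tendsto (fun N : ℕ =>
          minTupleEnergy s k {x : EuclideanSpace ℝ (Fin d) | ∀ i, x i ∈ Set.Icc (0 : ℝ) 1} N /
            ENNReal.ofReal ((N : ℝ) ^ (1 + s / d)))
        atTop (nhds C) := by
  classical
  have hfun : (fun N : ℕ =>
      minTupleEnergy s k {x : EuclideanSpace ℝ (Fin d) | ∀ i, x i ∈ Set.Icc (0 : ℝ) 1} N /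
        ENNReal.ofReal ((N : ℝ) ^ (1 + s / d))) = phi d s k := rfl
  rw [hfun]
  set L := Filter.liminf (phi d s k) Filter.atTop with hL
  set U := Filter.limsup (phi d s k) Filter.atTop with hU
  set B := ENNReal.ofReal ((k:ℝ) * 2 ^ s) with hB
  have hUB : U ≤ B := by
    refine Filter.limsup_le_of_le ?_
      ((Filter.eventually_ge_atTop 1).mono fun N hN => phi_upper hd hs k hN)
    isBoundedDefault
  have hLU : L ≤ U := by
    refine Filter.liminf_le_limsup ?_ ?_ <;> isBoundedDefault
  set cl := ENNReal.ofReal ((1/2) * (4 * Real.sqrt d)^(-s)) with hcl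
  have hd0 : (0:ℝ) < d := by exact_mod_cast hd
  have hclpos : 0 < cl := by
    rw [hcl]
    refine ENNReal.ofReal_pos.mpr ?_
    have : (0:ℝ) < (4 * Real.sqrt d)^(-s) :=
      Real.rpow_pos_of_pos (by positivity) _
    linarith
  have hcL : cl ≤ L := by
    refine Filter.le_liminf_of_le ?_
      ((Filter.eventually_ge_atTop (4^d)).mono fun N hN => phi_lower hd hs hk hN)
    isBoundedDefault
  have hLtop : L ≠ ⊤ := (lt_of_le_of_lt (hLU.trans hUB) ENNReal.ofReal_lt_top).ne
  have hUL : U ≤ L := by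
    refine ENNReal.le_of_forall_pos_le_add fun ε hε hLfin => ?_
    have hL1 : L + 1 ≠ ⊤ := by
      simp [hLtop]
    set Lr : ℝ := (L + 1).toReal with hLr
    have hLrpos : 0 < Lr := ENNReal.toReal_pos (by simp) hL1
    have hεR : (0:ℝ) < (ε:ℝ) := by exact_mod_cast hε
    set u : ℝ := ((ε:ℝ)/2) / Lr with hu
    have hu0 : 0 < u := by positivity
    obtain ⟨t, ht0, ht1, htu⟩ := exists_t hs hu0
    set ε₂ : ℝ≥0∞ := min ((ε:ℝ≥0∞)/4) 1 with hε₂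
    have hε₂0 : ε₂ ≠ 0 := by
      rw [hε₂]
      refine (lt_min ?_ ?_).ne'
      · exact ENNReal.div_pos (by exact_mod_cast hε.ne') (by norm_num)
      · norm_num
    have hε₂1 : ε₂ ≤ 1 := min_le_right _ _
    have hε₂4 : ε₂ ≤ (ε:ℝ≥0∞)/4 := min_le_left _ _
    have hε₂t : ε₂ ≠ ⊤ := ne_top_of_le_ne_top (by norm_num) hε₂1
    -- pick n
    have hfreq : ∃ᶠ n : ℕ in atTop, phi d s k n < L + ε₂ := by
      refine Filter.frequently_lt_of_liminf_lt ?_ ?_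
      · isBoundedDefault
      · rw [← hL]
        exact ENNReal.lt_add_right hLtop hε₂0
    have hz2tend : Tendsto (fun n : ℕ => (1+t)*k*t^(-s)*(n:ℝ)^(-(s/(d:ℝ)))) atTop (nhds 0) := by
      have h1 : Tendsto (fun x : ℝ => x ^ (-(s/(d:ℝ)))) atTop (nhds 0) :=
        tendsto_rpow_neg_atTop (by positivity)
      have h2 := h1.comp (tendsto_natCast_atTop_atTop (R := ℝ))
      have h3 := h2.const_mul ((1+t)*(k:ℝ)*t^(-s))
      simpa [Function.comp, mul_assoc] using h3
    have hev : ∀ᶠ n : ℕ in atTop, 1 ≤ n ∧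
        ENNReal.ofReal ((1+t)*k*t^(-s)*(n:ℝ)^(-(s/(d:ℝ)))) ≤ ε₂ := by
      have hsmall : ∀ᶠ n : ℕ in atTop,
          (1+t)*k*t^(-s)*(n:ℝ)^(-(s/(d:ℝ))) < ε₂.toReal :=
        hz2tend.eventually_lt_const (ENNReal.toReal_pos hε₂0 hε₂t)
      filter_upwards [Filter.eventually_ge_atTop 1, hsmall] with n h1 h2
      refine ⟨h1, ?_⟩
      calc ENNReal.ofReal ((1+t)*k*t^(-s)*(n:ℝ)^(-(s/(d:ℝ))))
          ≤ ENNReal.ofReal ε₂.toReal := ENNReal.ofReal_le_ofReal h2.le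
        _ = ε₂ := ENNReal.ofReal_toReal hε₂t
    obtain ⟨n, hphin, hn1, hz2n⟩ := (hfreq.and_eventually hev).exists
    have hUbound : U ≤ ENNReal.ofReal ((1+t)*(1-t)^(-s)) * phi d s k n
        + ENNReal.ofReal ((1+t)*k*t^(-s)*(n:ℝ)^(-(s/(d:ℝ)))) := by
      refine Filter.limsup_le_of_le ?_ (phi_bound hd hs hk ht0 ht1 hn1)
      isBoundedDefault
    have h1 : ENNReal.ofReal ((1+t)*(1-t)^(-s)) ≤ 1 + ENNReal.ofReal u := by
      calc ENNReal.ofReal ((1+t)*(1-t)^(-s)) ≤ ENNReal.ofReal (1+u) :=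
            ENNReal.ofReal_le_ofReal htu
        _ = 1 + ENNReal.ofReal u := by
            rw [ENNReal.ofReal_add (by norm_num) hu0.le, ENNReal.ofReal_one]
    have hOfu : ENNReal.ofReal u * (L + 1) ≤ (ε:ℝ≥0∞)/2 := by
      have he1 : L + 1 = ENNReal.ofReal Lr := (ENNReal.ofReal_toReal hL1).symm
      rw [he1, ← ENNReal.ofReal_mul hu0.le]
      have hmul : u * Lr = (ε:ℝ)/2 := by
        rw [hu, div_mul_cancel₀]
        exact hLrpos.ne'
      rw [hmul, ENNReal.ofReal_div_of_pos (by norm_num)]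
      simp [ENNReal.ofReal_coe_nnreal]
    calc U ≤ ENNReal.ofReal ((1+t)*(1-t)^(-s)) * phi d s k n
          + ENNReal.ofReal ((1+t)*k*t^(-s)*(n:ℝ)^(-(s/(d:ℝ)))) := hUbound
      _ ≤ (1 + ENNReal.ofReal u) * (L + ε₂) + ε₂ :=
          add_le_add (mul_le_mul' h1 hphin.le) hz2n
      _ = (L + ε₂) + ENNReal.ofReal u * (L + ε₂) + ε₂ := by
          rw [add_mul, one_mul]
      _ ≤ (L + (ε:ℝ≥0∞)/4) + ENNReal.ofReal u * (L + 1) + (ε:ℝ≥0∞)/4 := by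
          refine add_le_add (add_le_add (add_le_add_right hε₂4 L)
            (mul_le_mul_right (add_le_add_right hε₂1 L) _)) hε₂4
      _ ≤ (L + (ε:ℝ≥0∞)/4) + (ε:ℝ≥0∞)/2 + (ε:ℝ≥0∞)/4 :=
          add_le_add (add_le_add_right hOfu _) le_rfl
      _ = L + ((ε:ℝ≥0∞)/4 + (ε:ℝ≥0∞)/2 + (ε:ℝ≥0∞)/4) := by ring
      _ = L + (ε:ℝ≥0∞) := by rw [quarters]
  have hEq : U = L := le_antisymm hUL hLU
  refine ⟨L, lt_of_lt_of_le hclpos hcL, hLtop, ?_⟩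
  exact tendsto_of_liminf_eq_limsup hL.symm (hU.symm.trans hEq)

end Final
end

section
/- Let d ≥ 1 and s > 0. There is a constant c(s,d) > 0 such that for every compact set A ⊂ ℝ^d, liminf_{N→∞} E_s^{1,*}(A,N)/N^{1+s/d} ≥ c(s,d) · H_d(A)^{−s/d} (with the convention that the right side is +∞ if H_d(A) = 0). -/
open Filter Metric MeasureTheory
open scoped ENNReal NNReal

section aux

variable {E : Type*} [NormedAddCommGroup E]

/-- nearest-neighbor distance -/
noncomputable def nnDist {N : ℕ} (x : Fin N → E) (i : Fin N) : ℝ≥0∞ :=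
  (Finset.univ.erase i).inf fun j => edist (x i) (x j)

lemma nnDist_le {N : ℕ} (x : Fin N → E) {i j : Fin N} (h : j ≠ i) :
    nnDist x i ≤ edist (x i) (x j) :=
  Finset.inf_le (by simp [Finset.mem_erase, h])

lemma tupleEnergy_one_eq {N : ℕ} (hN : 2 ≤ N) (s : ℝ) (x : Fin N → E) :
    tupleEnergy s 1 x = ∑ i : Fin N, nnDist x i ^ (-s) := by
  unfold tupleEnergy
  refine Finset.sum_congr rfl fun i _ => ?_
  set f : Fin N → ℝ≥0∞ := fun j => edist (x i) (x j) with hf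
  set m : Multiset ℝ≥0∞ := (Finset.univ.erase i).val.map f with hm
  set l : List ℝ≥0∞ := Multiset.sort m (· ≤ ·) with hl
  have hcoe : (l : Multiset ℝ≥0∞) = m := Multiset.sort_eq m _
  have hnt : (Finset.univ : Finset (Fin N)).Nontrivial :=
    Finset.one_lt_card.1 (by simp; omega)
  have hne : (Finset.univ.erase i).Nonempty := (Finset.erase_nonempty (Finset.mem_univ i)).2 hnt
  have hm0 : m ≠ 0 := by
    simp only [hm, Ne, Multiset.map_eq_zero]
    exact fun h => (Finset.nonempty_iff_ne_empty.1 hne) (Finset.val_eq_zero.1 h)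
  obtain ⟨a, t, hat⟩ : ∃ a t, l = a :: t := by
    cases h : l with
    | nil => exact absurd (by rw [← hcoe, h]; rfl) hm0
    | cons a t => exact ⟨a, t, rfl⟩
  have hsorted := Multiset.pairwise_sort m (· ≤ ·)
  rw [← hl, hat, List.pairwise_cons] at hsorted
  have ha_mem : a ∈ m := by rw [← hcoe, hat]; exact List.mem_cons_self (a := a) (l := t)
  have ha_eq : a = nnDist x i := by
    refine le_antisymm ?_ ?_
    · refine Finset.le_inf fun j hj => ?_
      have hfj : f j ∈ m := Multiset.mem_map_of_mem f hj
      rw [← hcoe, hat] at hfj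
      rcases List.mem_cons.1 hfj with h | h
      · exact h.ge
      · exact hsorted.1 _ h
    · obtain ⟨j, hj, hja⟩ := Multiset.mem_map.1 ha_mem
      exact hja ▸ Finset.inf_le hj
  rw [hat]
  simp [ha_eq]

lemma card_rpow_le {ι : Type*} (S : Finset ι) (f : ι → ℝ≥0∞)
    (hf0 : ∀ i ∈ S, f i ≠ 0) (hft : ∀ i ∈ S, f i ≠ ⊤) {s dr : ℝ} (hs : 0 < s) (hd : 0 < dr) :
    (S.card : ℝ≥0∞) ^ (1 + s / dr) ≤
      (∑ i ∈ S, f i ^ (-s)) * (∑ i ∈ S, f i ^ dr) ^ (s / dr) := by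
  set p : ℝ := (s + dr) / dr with hp
  set q : ℝ := (s + dr) / s with hq
  have hsd : 0 < s + dr := by linarith
  have hpq : p.HolderConjugate q := by
    rw [Real.holderConjugate_iff]
    constructor
    · rw [hp]; rw [lt_div_iff₀ hd]; linarith
    · rw [hp, hq]
      field_simp
      ring
  have hp1 : 1 + s / dr = p := by rw [hp, add_div, div_self hd.ne']; ring
  have key : ∑ i ∈ S, (f i ^ (-s / p)) * (f i ^ (dr / q)) ≤
      (∑ i ∈ S, (f i ^ (-s / p)) ^ p) ^ (1 / p) * (∑ i ∈ S, (f i ^ (dr / q)) ^ q) ^ (1 / q) :=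
    ENNReal.inner_le_Lp_mul_Lq S _ _ hpq
  have hprod : ∀ i ∈ S, (f i ^ (-s / p)) * (f i ^ (dr / q)) = 1 := by
    intro i hi
    rw [← ENNReal.rpow_add _ _ (hf0 i hi) (hft i hi)]
    have : -s / p + dr / q = 0 := by
      rw [hp, hq]; field_simp; ring
    rw [this, ENNReal.rpow_zero]
  have hFp : ∀ i, (f i ^ (-s / p)) ^ p = f i ^ (-s) := by
    intro i
    rw [← ENNReal.rpow_mul]
    congr 1
    field_simp [hpq.pos.ne']
  have hGq : ∀ i, (f i ^ (dr / q)) ^ q = f i ^ dr := by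
    intro i
    rw [← ENNReal.rpow_mul]
    congr 1
    field_simp [hpq.symm.pos.ne']
  rw [Finset.sum_congr rfl hprod, Finset.sum_const, nsmul_eq_mul, mul_one] at key
  simp only [hFp, hGq] at key
  have key2 := ENNReal.rpow_le_rpow key (le_of_lt hpq.pos)
  rw [ENNReal.mul_rpow_of_nonneg _ _ hpq.nonneg, ← ENNReal.rpow_mul, ← ENNReal.rpow_mul,
    one_div, inv_mul_cancel₀ hpq.pos.ne', ENNReal.rpow_one] at key2
  calc (S.card : ℝ≥0∞) ^ (1 + s / dr) = (S.card : ℝ≥0∞) ^ p := by rw [hp1]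
    _ ≤ _ := key2.trans_eq (by congr 1; rw [hq, hp]; field_simp)

end aux

section euclid

variable {d : ℕ}
local notation "Eu" => EuclideanSpace ℝ (Fin d)

lemma vol_le_hausdorff (hd : 0 < d) :
    ∃ cH : ℝ≥0, 0 < cH ∧ ∀ A : Set Eu, volume A = (cH : ℝ≥0∞) * μH[(d : ℝ)] A := by
  have hfr : (Module.finrank ℝ Eu : ℝ) = (d : ℝ) := by
    rw [finrank_euclideanSpace_fin]
  have hinst : Measure.IsAddHaarMeasure (μH[(d : ℝ)] : Measure Eu) := by
    rw [← hfr]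
    exact MeasureTheory.isAddHaarMeasure_hausdorffMeasure
  have heq : (volume : Measure Eu) = volume.addHaarScalarFactor μH[(d : ℝ)] • μH[(d : ℝ)] :=
    Measure.isAddLeftInvariant_eq_smul _ _
  refine ⟨volume.addHaarScalarFactor (μH[(d : ℝ)] : Measure Eu),
    Measure.addHaarScalarFactor_pos_of_isAddHaarMeasure _ _, fun A => ?_⟩
  conv_lhs => rw [heq]
  rw [Measure.smul_apply, ENNReal.smul_def, smul_eq_mul]

lemma config_bound (hd : 0 < d) {s : ℝ} (hs : 0 < s) (A : Set Eu) (hA : IsCompact A)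
    {ε : ℝ} (hε : 0 < ε) :
    ∃ m : ℕ, ∀ N (x : Fin N → Eu), (∀ i, x i ∈ A) → 2 ≤ N →
      ((N - m : ℕ) : ℝ≥0∞) ^ (1 + s / (d : ℝ)) /
          ((2 ^ d * volume (cthickening ε A) / volume (ball (0 : Eu) 1)) ^ (s / (d : ℝ)))
        ≤ tupleEnergy s 1 x := by
  haveI : Nonempty (Fin d) := ⟨⟨0, hd⟩⟩
  haveI : Nontrivial Eu := by
    refine ⟨0, EuclideanSpace.single ⟨0, hd⟩ 1, fun h => ?_⟩
    have := congrArg (fun z : Eu => z ⟨0, hd⟩) h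
    simpa [EuclideanSpace.single_apply] using this
  set v : ℝ≥0∞ := volume (ball (0 : Eu) 1) with hv
  set V : ℝ≥0∞ := volume (cthickening ε A) with hV
  have v0 : v ≠ 0 := (measure_ball_pos volume 0 one_pos).ne'
  have vt : v ≠ ⊤ := measure_ball_lt_top.ne
  have Vt : V ≠ ⊤ := (hA.cthickening.measure_lt_top).ne
  have hεd : (0 : ℝ) < (ε / 2) ^ d := pow_pos (half_pos hε) d
  set B : ℝ≥0∞ := V / (ENNReal.ofReal ((ε / 2) ^ d) * v) with hB
  refine ⟨⌈B.toReal⌉₊, fun N x hx hN => ?_⟩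
  set m := ⌈B.toReal⌉₊
  rw [tupleEnergy_one_eq hN]
  set δ : Fin N → ℝ≥0∞ := nnDist x with hδ
  by_cases hzero : ∃ i, δ i = 0
  · obtain ⟨i, hi⟩ := hzero
    have : ∑ i : Fin N, δ i ^ (-s) = ⊤ := by
      refine ENNReal.sum_eq_top.2 ⟨i, Finset.mem_univ i, ?_⟩
      rw [hi, ENNReal.zero_rpow_of_neg (neg_lt_zero.2 hs)]
    rw [this]; exact le_top
  push_neg at hzero
  have hpos : ∀ i, 0 < δ i := fun i => pos_iff_ne_zero.2 (hzero i)
  have hnt : (Finset.univ : Finset (Fin N)).Nontrivial :=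
    Finset.one_lt_card.1 (by simp; omega)
  have hlt : ∀ i, δ i < ⊤ := by
    intro i
    obtain ⟨j, hj⟩ := (Finset.erase_nonempty (Finset.mem_univ i)).2 hnt
    exact lt_of_le_of_lt (nnDist_le x (Finset.ne_of_mem_erase hj)) (edist_lt_top _ _)
  set D : Fin N → ℝ := fun i => (δ i).toReal with hD
  have hDpos : ∀ i, 0 < D i := fun i => ENNReal.toReal_pos (hzero i) (hlt i).ne
  have hDdist : ∀ i j, j ≠ i → D i ≤ dist (x i) (x j) := by
    intro i j h
    have h1 : δ i ≤ ENNReal.ofReal (dist (x i) (x j)) := by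
      rw [← edist_dist]; exact nnDist_le x h
    exact ENNReal.toReal_le_of_le_ofReal dist_nonneg h1
  -- the finsets of near and far points
  classical
  set S : Finset (Fin N) := Finset.univ.filter (fun i => D i ≤ ε) with hS
  set T : Finset (Fin N) := Finset.univ.filter (fun i => ¬ D i ≤ ε) with hT
  -- counting far points
  have hTdisj : (↑T : Set (Fin N)).PairwiseDisjoint (fun i => ball (x i) (ε / 2)) := by
    intro i hi j hj hij
    refine ball_disjoint_ball ?_
    have : ε < D i := lt_of_not_ge (by simpa [hT] using hi)
    calc ε / 2 + ε / 2 = ε := add_halves ε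
      _ ≤ dist (x i) (x j) := le_trans this.le (hDdist i j (Ne.symm hij))
  have hTsub : ∀ i : Fin N, ball (x i) (ε / 2) ⊆ cthickening ε A := fun i =>
    (ball_subset_ball (by linarith)).trans
      ((ball_subset_thickening (hx i) ε).trans (thickening_subset_cthickening ε A))
  have hTvol : ∑ _i ∈ T, (ENNReal.ofReal ((ε / 2) ^ d) * v) ≤ V := by
    have hball : ∀ i : Fin N, volume (ball (x i) (ε / 2)) = ENNReal.ofReal ((ε / 2) ^ d) * v := by
      intro i
      rw [hv, Measure.addHaar_ball volume (x i) (half_pos hε).le, finrank_euclideanSpace_fin]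
    calc ∑ _i ∈ T, (ENNReal.ofReal ((ε / 2) ^ d) * v)
        = ∑ i ∈ T, volume (ball (x i) (ε / 2)) := by
          exact Finset.sum_congr rfl fun i _ => (hball i).symm
      _ = volume (⋃ i ∈ T, ball (x i) (ε / 2)) :=
          (measure_biUnion_finset hTdisj fun i _ => measurableSet_ball).symm
      _ ≤ V := measure_mono (by simpa using fun i _ => hTsub i)
  have hTcard : T.card ≤ m := by
    have h1 : (T.card : ℝ≥0∞) * (ENNReal.ofReal ((ε / 2) ^ d) * v) ≤ V := by
      simpa using hTvol
    have hden0 : (ENNReal.ofReal ((ε / 2) ^ d) * v) ≠ 0 := by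
      simp [ENNReal.ofReal_eq_zero, not_le, hεd, v0]
    have hdent : (ENNReal.ofReal ((ε / 2) ^ d) * v) ≠ ⊤ :=
      ENNReal.mul_ne_top ENNReal.ofReal_ne_top vt
    have h2 : (T.card : ℝ≥0∞) ≤ B := by
      rw [hB, ENNReal.le_div_iff_mul_le (Or.inl hden0) (Or.inl hdent)]
      exact h1
    have hBt : B ≠ ⊤ := by
      rw [hB]
      exact (ENNReal.div_lt_top Vt hden0).ne
    have h3 : (T.card : ℝ) ≤ B.toReal := by
      have := ENNReal.toReal_mono hBt h2
      simpa using this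
    exact_mod_cast h3.trans (Nat.le_ceil _)
  -- near points: sum of δ^d bounded
  have hSsub : ∀ i ∈ S, ball (x i) (D i / 2) ⊆ cthickening ε A := by
    intro i hi
    have hDi : D i ≤ ε := by simpa [hS] using hi
    exact (ball_subset_ball (by linarith [hDpos i])).trans
      ((ball_subset_thickening (hx i) ε).trans (thickening_subset_cthickening ε A))
  have hSdisj : (↑S : Set (Fin N)).PairwiseDisjoint (fun i => ball (x i) (D i / 2)) := by
    intro i _ j _ hij
    refine ball_disjoint_ball ?_
    calc D i / 2 + D j / 2 ≤ dist (x i) (x j) / 2 + dist (x i) (x j) / 2 := by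
          have h1 := hDdist i j (Ne.symm hij)
          have h2 := hDdist j i hij
          rw [dist_comm (x j) (x i)] at h2
          linarith
      _ = dist (x i) (x j) := add_halves _
  have hSvol : ∑ i ∈ S, volume (ball (x i) (D i / 2)) ≤ V := by
    rw [← measure_biUnion_finset hSdisj fun i _ => measurableSet_ball]
    exact measure_mono (by simpa using hSsub)
  have hδd : ∀ i, δ i ^ (d : ℝ) * v = 2 ^ d * volume (ball (x i) (D i / 2)) := by
    intro i
    rw [Measure.addHaar_ball volume (x i) (half_pos (hDpos i)).le, finrank_euclideanSpace_fin]
    have h1 : δ i ^ (d : ℝ) = ENNReal.ofReal (D i ^ d) := by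
      conv_lhs => rw [← ENNReal.ofReal_toReal (hlt i).ne]
      rw [ENNReal.ofReal_rpow_of_pos (hDpos i), Real.rpow_natCast]
    have h2 : ENNReal.ofReal ((D i / 2) ^ d) = ENNReal.ofReal (D i ^ d) / 2 ^ d := by
      rw [div_pow, ENNReal.ofReal_div_of_pos (by positivity)]
      congr 1
      rw [ENNReal.ofReal_pow (by norm_num)]
      norm_num
    rw [h1, h2, ← mul_assoc, ENNReal.mul_div_cancel (by positivity) (ENNReal.pow_ne_top ENNReal.ofNat_ne_top)]
  have hSsum : ∑ i ∈ S, δ i ^ (d : ℝ) ≤ 2 ^ d * V / v := by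
    rw [ENNReal.le_div_iff_mul_le (Or.inl v0) (Or.inl vt), Finset.sum_mul]
    calc ∑ i ∈ S, δ i ^ (d : ℝ) * v = ∑ i ∈ S, 2 ^ d * volume (ball (x i) (D i / 2)) :=
          Finset.sum_congr rfl fun i _ => hδd i
      _ = 2 ^ d * ∑ i ∈ S, volume (ball (x i) (D i / 2)) := by rw [Finset.mul_sum]
      _ ≤ 2 ^ d * V := by exact mul_le_mul_right hSvol _
  -- assemble
  have hd' : (0 : ℝ) < (d : ℝ) := Nat.cast_pos.2 hd
  set W : ℝ≥0∞ := 2 ^ d * V / v with hW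
  have V0 : V ≠ 0 := by
    have i0 : Fin N := ⟨0, by omega⟩
    exact (lt_of_lt_of_le (measure_ball_pos volume (x i0) hε)
      (measure_mono ((ball_subset_thickening (hx i0) ε).trans
        (thickening_subset_cthickening ε A)))).ne'
  have hW0 : W ≠ 0 :=
    (ENNReal.div_pos (mul_ne_zero (by positivity) V0) vt).ne'
  have hWt : W ≠ ⊤ :=
    (ENNReal.div_lt_top (ENNReal.mul_ne_top (ENNReal.pow_ne_top ENNReal.ofNat_ne_top) Vt) v0).ne
  have hWs0 : W ^ (s / (d : ℝ)) ≠ 0 := (ENNReal.rpow_pos (pos_iff_ne_zero.2 hW0) hWt).ne'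
  have hWst : W ^ (s / (d : ℝ)) ≠ ⊤ :=
    ENNReal.rpow_ne_top_of_nonneg (by positivity) hWt
  rw [ENNReal.div_le_iff hWs0 hWst]
  have hcard : (N - m : ℕ) ≤ S.card := by
    have hsum : S.card + T.card = N := by
      rw [hS, hT]
      simpa using Finset.card_filter_add_card_filter_not (s := Finset.univ)
        (p := fun i => D i ≤ ε)
    omega
  calc ((N - m : ℕ) : ℝ≥0∞) ^ (1 + s / (d : ℝ))
      ≤ (S.card : ℝ≥0∞) ^ (1 + s / (d : ℝ)) :=
        ENNReal.rpow_le_rpow (by exact_mod_cast hcard) (by positivity)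
    _ ≤ (∑ i ∈ S, δ i ^ (-s)) * (∑ i ∈ S, δ i ^ (d : ℝ)) ^ (s / (d : ℝ)) :=
        card_rpow_le S δ (fun i _ => hzero i) (fun i _ => (hlt i).ne) hs hd'
    _ ≤ (∑ i : Fin N, δ i ^ (-s)) * W ^ (s / (d : ℝ)) := by
        refine mul_le_mul' (Finset.sum_le_sum_of_subset (Finset.subset_univ S)) ?_
        exact ENNReal.rpow_le_rpow hSsum (by positivity)

lemma liminf_eps_bound (hd : 0 < d) {s : ℝ} (hs : 0 < s) (A : Set Eu) (hA : IsCompact A)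
    {ε : ℝ} (hε : 0 < ε) :
    ((2 : ℝ≥0∞) ^ ((1 : ℝ) + s / (d : ℝ)) *
        (2 ^ d * volume (cthickening ε A) / volume (ball (0 : Eu) 1)) ^ (s / (d : ℝ)))⁻¹ ≤
      Filter.liminf (fun N : ℕ =>
        minTupleEnergy s 1 A N / ENNReal.ofReal ((N : ℝ) ^ (1 + s / (d : ℝ)))) Filter.atTop := by
  set q : ℝ := 1 + s / (d : ℝ) with hq
  have hq0 : 0 < q := by
    have h1 : 0 < s / (d : ℝ) := div_pos hs (Nat.cast_pos.2 hd)
    rw [hq]; linarith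
  set v : ℝ≥0∞ := volume (ball (0 : Eu) 1) with hv
  set V : ℝ≥0∞ := volume (cthickening ε A) with hV
  set W : ℝ≥0∞ := 2 ^ d * V / v with hW
  set Y : ℝ≥0∞ := (2 : ℝ≥0∞) ^ q * W ^ (s / (d : ℝ)) with hY
  have key : ∀ᶠ N : ℕ in atTop,
      Y⁻¹ ≤ minTupleEnergy s 1 A N / ENNReal.ofReal ((N : ℝ) ^ q) := by
    rcases Set.eq_empty_or_nonempty A with hAe | hAne
    · filter_upwards [eventually_ge_atTop 1] with N hN1
      have hmin : minTupleEnergy s 1 A N = ⊤ := by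
        rw [minTupleEnergy]
        refine iInf_eq_top.2 fun x => iInf_eq_top.2 fun hx => absurd (hx ⟨0, by omega⟩) ?_
        simp [hAe]
      rw [hmin, ENNReal.top_div_of_ne_top (by exact ENNReal.ofReal_ne_top)]
      exact le_top
    · obtain ⟨m, hm⟩ := config_bound hd hs A hA hε
      have v0 : v ≠ 0 := by
        haveI : Nonempty (Fin d) := ⟨⟨0, hd⟩⟩
        haveI : Nontrivial Eu := by
          refine ⟨0, EuclideanSpace.single ⟨0, hd⟩ 1, fun h => ?_⟩
          have := congrArg (fun z : Eu => z ⟨0, hd⟩) h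
          simpa [EuclideanSpace.single_apply] using this
        exact (measure_ball_pos volume 0 one_pos).ne'
      have vt : v ≠ ⊤ := measure_ball_lt_top.ne
      have Vt : V ≠ ⊤ := (hA.cthickening.measure_lt_top).ne
      have V0 : V ≠ 0 := by
        obtain ⟨a, ha⟩ := hAne
        exact (lt_of_lt_of_le (measure_ball_pos volume a hε)
          (measure_mono ((ball_subset_thickening ha ε).trans
            (thickening_subset_cthickening ε A)))).ne'
      have hW0 : W ≠ 0 := (ENNReal.div_pos (mul_ne_zero (by positivity) V0) vt).ne'
      have hWt : W ≠ ⊤ :=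
        (ENNReal.div_lt_top (ENNReal.mul_ne_top (ENNReal.pow_ne_top ENNReal.ofNat_ne_top) Vt) v0).ne
      have hWs0 : W ^ (s / (d : ℝ)) ≠ 0 := (ENNReal.rpow_pos (pos_iff_ne_zero.2 hW0) hWt).ne'
      have hWst : W ^ (s / (d : ℝ)) ≠ ⊤ :=
        ENNReal.rpow_ne_top_of_nonneg (by positivity) hWt
      have h2q0 : (2 : ℝ≥0∞) ^ q ≠ 0 := (ENNReal.rpow_pos (by norm_num) ENNReal.ofNat_ne_top).ne'
      have h2qt : (2 : ℝ≥0∞) ^ q ≠ ⊤ :=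
        ENNReal.rpow_ne_top_of_nonneg hq0.le ENNReal.ofNat_ne_top
      filter_upwards [eventually_ge_atTop (2 * m + 2)] with N hN
      have hN2 : 2 ≤ N := by omega
      have hmin : ((N - m : ℕ) : ℝ≥0∞) ^ q / W ^ (s / (d : ℝ)) ≤ minTupleEnergy s 1 A N :=
        le_iInf fun x => le_iInf fun hx => hm N x hx hN2
      set X : ℝ≥0∞ := ((N : ℝ≥0∞)) ^ q with hX
      have hX0 : X ≠ 0 := by
        refine (ENNReal.rpow_pos ?_ (by exact ENNReal.natCast_ne_top N)).ne'
        exact_mod_cast Nat.pos_of_ne_zero (by omega)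
      have hXt : X ≠ ⊤ :=
        ENNReal.rpow_ne_top_of_nonneg hq0.le (ENNReal.natCast_ne_top N)
      have hhalf : (N : ℝ≥0∞) / 2 ≤ ((N - m : ℕ) : ℝ≥0∞) := by
        rw [ENNReal.div_le_iff_le_mul (Or.inl two_ne_zero) (Or.inl ENNReal.ofNat_ne_top)]
        exact_mod_cast (by omega : N ≤ (N - m) * 2)
      have hden : ENNReal.ofReal ((N : ℝ) ^ q) = X := by
        rw [← ENNReal.ofReal_rpow_of_pos (by exact_mod_cast Nat.pos_of_ne_zero (by omega)),
          ENNReal.ofReal_natCast]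
      rw [hden]
      have hstep : X / Y ≤ minTupleEnergy s 1 A N := by
        refine le_trans ?_ hmin
        have hdd : ∀ a b c : ℝ≥0∞, b ≠ 0 → c ≠ 0 → a / (b * c) = a / b / c := by
          intro a b c hb hc
          rw [div_eq_mul_inv a, ENNReal.mul_inv (Or.inl hb) (Or.inr hc),
            div_eq_mul_inv, div_eq_mul_inv, mul_assoc]
        calc X / ((2:ℝ≥0∞) ^ q * W ^ (s / (d:ℝ)))
              = X / (2:ℝ≥0∞) ^ q / W ^ (s / (d:ℝ)) := hdd _ _ _ h2q0 hWs0
            _ = ((N : ℝ≥0∞) / 2) ^ q / W ^ (s / (d:ℝ)) := by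
                rw [ENNReal.div_rpow_of_nonneg _ _ hq0.le]
            _ ≤ ((N - m : ℕ) : ℝ≥0∞) ^ q / W ^ (s / (d:ℝ)) := by
                gcongr
      calc Y⁻¹ = (X / Y) / X := by
            rw [div_eq_mul_inv, div_eq_mul_inv, mul_comm X, mul_assoc,
              ENNReal.mul_inv_cancel hX0 hXt, mul_one]
        _ ≤ minTupleEnergy s 1 A N / X := by gcongr
  calc Y⁻¹ = liminf (fun _ : ℕ => Y⁻¹) atTop := (liminf_const _).symm
    _ ≤ _ := liminf_le_liminf key

end euclid

/-- There is a constant `c(s,d) > 0` such that for every compact `A ⊂ ℝ^d`,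
`liminf_N E_s^{1,*}(A,N)/N^{1+s/d} ≥ c(s,d) H_d(A)^{-s/d}`
(the right side being `+∞` when `H_d(A) = 0`). -/
theorem liminf_nn_energy_lower_bound (d : ℕ) (hd : 0 < d) (s : ℝ) (hs : 0 < s) :
    ∃ c : ℝ≥0∞, 0 < c ∧ c ≠ ⊤ ∧
      ∀ A : Set (EuclideanSpace ℝ (Fin d)), IsCompact A →
        c / (μH[(d : ℝ)] A) ^ (s / (d : ℝ)) ≤
          Filter.liminf (fun N : ℕ =>
            minTupleEnergy s 1 A N / ENNReal.ofReal ((N : ℝ) ^ (1 + s / (d : ℝ))))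
          Filter.atTop := by
  haveI : Nonempty (Fin d) := ⟨⟨0, hd⟩⟩
  haveI : Nontrivial (EuclideanSpace ℝ (Fin d)) := by
    refine ⟨0, EuclideanSpace.single ⟨0, hd⟩ 1, fun h => ?_⟩
    have := congrArg (fun z : EuclideanSpace ℝ (Fin d) => z ⟨0, hd⟩) h
    simpa [EuclideanSpace.single_apply] using this
  obtain ⟨cH, hcH, hvol⟩ := vol_le_hausdorff hd
  set q : ℝ := 1 + s / (d : ℝ) with hq
  have hsd : 0 < s / (d : ℝ) := div_pos hs (Nat.cast_pos.2 hd)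
  have hq0 : 0 < q := by rw [hq]; linarith
  set v : ℝ≥0∞ := volume (ball (0 : EuclideanSpace ℝ (Fin d)) 1) with hv
  have v0 : v ≠ 0 := (measure_ball_pos volume 0 one_pos).ne'
  have vt : v ≠ ⊤ := measure_ball_lt_top.ne
  set k₀ : ℝ≥0∞ := 2 ^ d * (cH : ℝ≥0∞) / v with hk₀
  have hk0 : k₀ ≠ 0 :=
    (ENNReal.div_pos (mul_ne_zero (by positivity) (by exact_mod_cast hcH.ne')) vt).ne'
  have hkt : k₀ ≠ ⊤ :=
    (ENNReal.div_lt_top (ENNReal.mul_ne_top (ENNReal.pow_ne_top ENNReal.ofNat_ne_top)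
      ENNReal.coe_ne_top) v0).ne
  have h2q0 : (2 : ℝ≥0∞) ^ q ≠ 0 := (ENNReal.rpow_pos (by norm_num) ENNReal.ofNat_ne_top).ne'
  have h2qt : (2 : ℝ≥0∞) ^ q ≠ ⊤ :=
    ENNReal.rpow_ne_top_of_nonneg hq0.le ENNReal.ofNat_ne_top
  set C : ℝ≥0∞ := (2 : ℝ≥0∞) ^ q * k₀ ^ (s / (d : ℝ)) with hC
  have hC0 : C ≠ 0 :=
    mul_ne_zero h2q0 (ENNReal.rpow_pos (pos_iff_ne_zero.2 hk0) hkt).ne'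
  have hCt : C ≠ ⊤ :=
    ENNReal.mul_ne_top h2qt (ENNReal.rpow_ne_top_of_nonneg hsd.le hkt)
  refine ⟨C⁻¹, ENNReal.inv_pos.2 hCt, ENNReal.inv_ne_top.2 hC0, fun A hA => ?_⟩
  set L := Filter.liminf (fun N : ℕ =>
      minTupleEnergy s 1 A N / ENNReal.ofReal ((N : ℝ) ^ q)) Filter.atTop with hL
  set g : ℝ≥0∞ → ℝ≥0∞ := fun t => ((2 : ℝ≥0∞) ^ q * (2 ^ d * t / v) ^ (s / (d : ℝ)))⁻¹ with hg
  -- the measures of cthickenings tend to the measure of A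
  have hmeas : Tendsto (fun ε : ℝ => volume (cthickening ε A)) (nhdsWithin 0 (Set.Ioi 0))
      (nhds (volume A)) :=
    (tendsto_measure_cthickening_of_isClosed
      ⟨1, one_pos, (hA.cthickening.measure_lt_top).ne⟩ hA.isClosed).mono_left
      nhdsWithin_le_nhds
  have hgten : Tendsto (fun ε : ℝ => g (volume (cthickening ε A)))
      (nhdsWithin 0 (Set.Ioi 0)) (nhds (g (volume A))) := by
    have t1 : Tendsto (fun ε : ℝ => 2 ^ d * volume (cthickening ε A) / v)
        (nhdsWithin 0 (Set.Ioi 0)) (nhds (2 ^ d * volume A / v)) :=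
      ENNReal.Tendsto.div_const (ENNReal.Tendsto.const_mul hmeas
        (Or.inr (ENNReal.pow_ne_top ENNReal.ofNat_ne_top))) (Or.inr v0)
    have t2 := (ENNReal.continuous_rpow_const (y := s / (d : ℝ))).tendsto
      (2 ^ d * volume A / v) |>.comp t1
    have t3 := ENNReal.Tendsto.const_mul t2 (Or.inr h2qt)
    exact ENNReal.tendsto_inv_iff.2 t3
  have hLbound : g (volume A) ≤ L :=
    le_of_tendsto hgten (eventually_nhdsWithin_of_forall fun ε hε =>
      liminf_eps_bound hd hs A hA hε)
  refine le_trans (le_of_eq ?_) hLbound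
  -- identify g (volume A) with C⁻¹ / (μH A) ^ (s/d)
  rw [hg]
  simp only []
  rw [hvol A]
  have harg : 2 ^ d * ((cH : ℝ≥0∞) * μH[(d : ℝ)] A) / v = k₀ * μH[(d : ℝ)] A := by
    rw [hk₀, div_eq_mul_inv, div_eq_mul_inv]; ring
  rw [harg, ENNReal.mul_rpow_of_nonneg _ _ hsd.le, ← mul_assoc, ← hC,
    ENNReal.mul_inv (Or.inl hC0) (Or.inl hCt), ← div_eq_mul_inv]
end
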